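/- arXiv:0705.0179 — 12 statements merged into one kernel-verified Lean document; each statement's English description precedes it below -/
import Mathlib

section
/- For real parameters μ > 0, ν > 0 and ρ < 1 with ρ ≠ 0, the integral ∫₀^∞ (e^{-νx} − e^{-μx}) / x^{ρ+1} dx converges and equals ((μ^ρ − ν^ρ)/ρ) · Γ(1 − ρ). -/
open Real MeasureTheory Set Filter

lemma frullani_Iint {c ρ : ℝ} (hc : 0 < c) (hρ : ρ < 1) :
    IntegrableOn (fun x : ℝ => x ^ (-ρ) * Real.exp (-(c * x))) (Ioi 0) := by
  have h := integrableOn_rpow_mul_exp_neg_mul_rpow (p := 1) (s := -ρ) (b := c)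
    (by linarith) one_pos hc
  refine h.congr_fun (fun x hx => ?_) measurableSet_Ioi
  simp only [Real.rpow_one, neg_mul]

lemma frullani_Ival {c ρ : ℝ} (hc : 0 < c) (hρ : ρ < 1) :
    ∫ x in Ioi (0:ℝ), x ^ (-ρ) * Real.exp (-(c * x))
      = (1 / c) ^ (1 - ρ) * Real.Gamma (1 - ρ) := by
  rw [← Real.integral_rpow_mul_exp_neg_mul_Ioi (by linarith : (0:ℝ) < 1 - ρ) hc]
  refine setIntegral_congr_fun measurableSet_Ioi fun x hx => ?_
  rw [show (1 - ρ) - 1 = -ρ by ring]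

lemma frullani_pow {c ρ : ℝ} (hc : 0 < c) : c * (1 / c) ^ (1 - ρ) = c ^ ρ := by
  rw [one_div, Real.inv_rpow hc.le, ← Real.rpow_neg hc.le]
  have h1 : c ^ (1 + -(1 - ρ)) = c * c ^ (-(1 - ρ)) := by
    rw [Real.rpow_add hc, Real.rpow_one]
  rw [← h1]
  congr 1
  ring

lemma frullani_aux (μ ν ρ : ℝ) (hμ : 0 < μ) (hν : 0 < ν) (hρ : ρ < 1) (hρ0 : ρ ≠ 0)
    (hle : ν ≤ μ) :
    IntegrableOn (fun x : ℝ => (Real.exp (-ν * x) - Real.exp (-μ * x)) / x ^ (ρ + 1))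
      (Ioi 0) ∧
    ∫ x in Ioi (0 : ℝ), (Real.exp (-ν * x) - Real.exp (-μ * x)) / x ^ (ρ + 1) =
      ((μ ^ ρ - ν ^ ρ) / ρ) * Real.Gamma (1 - ρ) := by
  set f : ℝ → ℝ := fun x => (Real.exp (-ν * x) - Real.exp (-μ * x)) / x ^ (ρ + 1) with hf
  set g : ℝ → ℝ := fun x => (1 / ρ) *
    ((μ * Real.exp (-(μ * x)) - ν * Real.exp (-(ν * x))) * x ^ (-ρ)) with hg
  set h : ℝ → ℝ := fun x =>
    (-(1 / ρ)) * ((Real.exp (-(ν * x)) - Real.exp (-(μ * x))) * x ^ (-ρ)) with hh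
  have h0 : h 0 = 0 := by simp [hh]
  -- key pointwise estimate
  have key : ∀ x : ℝ, 0 ≤ x →
      0 ≤ Real.exp (-(ν * x)) - Real.exp (-(μ * x)) ∧
      Real.exp (-(ν * x)) - Real.exp (-(μ * x)) ≤ (μ - ν) * x * Real.exp (-(ν * x)) := by
    intro x hx
    have h1 : Real.exp (-(μ * x)) = Real.exp (-(ν * x)) * Real.exp (-((μ - ν) * x)) := by
      rw [← Real.exp_add]; ring_nf
    have h2 : Real.exp (-(μ * x)) ≤ Real.exp (-(ν * x)) := Real.exp_le_exp.2 (by nlinarith)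
    have h3 : -((μ - ν) * x) + 1 ≤ Real.exp (-((μ - ν) * x)) := Real.add_one_le_exp _
    have h4 := Real.exp_pos (-(ν * x))
    constructor
    · linarith
    · nlinarith
  -- integrability of g
  have hgi : IntegrableOn g (Ioi 0) := by
    have h1 := (frullani_Iint hμ hρ).const_mul (μ / ρ)
    have h2 := (frullani_Iint hν hρ).const_mul (ν / ρ)
    refine IntegrableOn.congr_fun (h1.sub h2) (fun x hx => ?_) measurableSet_Ioi
    simp only [hg, Pi.sub_apply]; ring
  -- integrability of f : bound by (μ - ν) * (x ^ (-ρ) * exp (-(ν*x)))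
  have hfi : IntegrableOn f (Ioi 0) := by
    have hb := (frullani_Iint hν hρ).const_mul (μ - ν)
    refine hb.mono' ?_ ?_
    · refine (ContinuousOn.aestronglyMeasurable ?_ measurableSet_Ioi)
      refine ContinuousOn.div (by fun_prop) ?_ ?_
      · exact fun x hx => (Real.continuousAt_rpow_const x _ (Or.inl (ne_of_gt hx))).continuousWithinAt
      · intro x hx
        exact ne_of_gt (Real.rpow_pos_of_pos hx _)
    · rw [ae_restrict_iff' measurableSet_Ioi]
      refine ae_of_all _ fun x hx => ?_
      have hx0 : (0:ℝ) < x := hx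
      obtain ⟨k1, k2⟩ := key x hx0.le
      have hxp : 0 < x ^ (ρ + 1) := Real.rpow_pos_of_pos hx0 _
      have hfx : f x = (Real.exp (-(ν * x)) - Real.exp (-(μ * x))) / x ^ (ρ + 1) := by
        simp only [hf, neg_mul]
      have hfnn : 0 ≤ f x := by rw [hfx]; positivity
      rw [Real.norm_of_nonneg hfnn, hfx]
      have hxx : x ^ (-ρ) * x ^ (ρ + 1) = x := by
        rw [← Real.rpow_add hx0]; norm_num
      rw [div_le_iff₀ hxp]
      calc Real.exp (-(ν * x)) - Real.exp (-(μ * x))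
          ≤ (μ - ν) * x * Real.exp (-(ν * x)) := k2
        _ = (μ - ν) * (x ^ (-ρ) * Real.exp (-(ν * x))) * x ^ (ρ + 1) := by
            linear_combination ((μ - ν) * Real.exp (-(ν * x))) * hxx.symm
  refine ⟨hfi, ?_⟩
  -- derivative
  have hderiv : ∀ x ∈ Ioi (0:ℝ), HasDerivAt h (f x - g x) x := by
    intro x hx
    have hx0 : (0:ℝ) < x := hx
    have hxρ : 0 < x ^ (-ρ) := Real.rpow_pos_of_pos hx0 _
    have d1 : HasDerivAt (fun y : ℝ => Real.exp (-(ν * y))) (-(Real.exp (-(ν * x)) * ν)) x := by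
      have := ((hasDerivAt_id x).const_mul ν).neg.exp
      simpa using this
    have d2 : HasDerivAt (fun y : ℝ => Real.exp (-(μ * y))) (-(Real.exp (-(μ * x)) * μ)) x := by
      have := ((hasDerivAt_id x).const_mul μ).neg.exp
      simpa using this
    have d3 : HasDerivAt (fun y : ℝ => y ^ (-ρ)) (-ρ * x ^ (-ρ - 1)) x :=
      Real.hasDerivAt_rpow_const (Or.inl (ne_of_gt hx0))
    have d4 := (((d1.sub d2).mul d3).const_mul (-(1 / ρ)))
    refine HasDerivAt.congr_deriv d4 ?_
    have e1 : x ^ (-ρ - 1) = x ^ (-ρ) / x := by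
      rw [Real.rpow_sub hx0, Real.rpow_one]
    have e4 : x ^ (ρ + 1) = x / x ^ (-ρ) := by
      rw [eq_div_iff (ne_of_gt hxρ), ← Real.rpow_add hx0]; norm_num
    simp only [hf, hg, neg_mul, e1, e4, Pi.sub_apply]
    field_simp
    ring
  -- limit at infinity
  have htop : Tendsto h atTop (nhds 0) := by
    have t1 := tendsto_rpow_mul_exp_neg_mul_atTop_nhds_zero (-ρ) ν hν
    have t2 := tendsto_rpow_mul_exp_neg_mul_atTop_nhds_zero (-ρ) μ hμ
    have := ((t1.sub t2).const_mul (-(1 / ρ)))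
    simp only [sub_zero, mul_zero] at this
    refine Tendsto.congr' ?_ this
    filter_upwards [eventually_gt_atTop (0:ℝ)] with x hx
    simp only [hh, neg_mul]
    ring
  -- continuity at 0 from the right
  have hcont : ContinuousWithinAt h (Ici 0) 0 := by
    rw [ContinuousWithinAt, h0]
    have tb : Tendsto (fun x : ℝ => ((μ - ν) / |ρ|) * x ^ (1 - ρ)) (nhdsWithin 0 (Ici 0)) (nhds 0) := by
      have : Tendsto (fun x : ℝ => x ^ (1 - ρ)) (nhdsWithin 0 (Ici 0)) (nhds ((0:ℝ) ^ (1 - ρ))) :=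
        ((Real.continuousAt_rpow_const 0 (1 - ρ)
          (Or.inr (by linarith))).continuousWithinAt)
      rw [Real.zero_rpow (ne_of_gt (by linarith : (0:ℝ) < 1 - ρ))] at this
      simpa using this.const_mul ((μ - ν) / |ρ|)
    refine squeeze_zero_norm' ?_ tb
    filter_upwards [self_mem_nhdsWithin] with x (hx : 0 ≤ x)
    obtain ⟨k1, k2⟩ := key x hx
    have habs : (0:ℝ) < |ρ| := abs_pos.2 hρ0
    rcases eq_or_lt_of_le hx with rfl | hx0
    · simp [h0, Real.zero_rpow (ne_of_gt (by linarith : (0:ℝ) < 1 - ρ))]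
    · have e3 : x * x ^ (-ρ) = x ^ (1 - ρ) := by
        rw [Real.rpow_sub hx0, Real.rpow_one, Real.rpow_neg hx0.le]; ring
      have hxρ : 0 < x ^ (-ρ) := Real.rpow_pos_of_pos hx0 _
      have hex : Real.exp (-(ν * x)) ≤ 1 := Real.exp_le_one_iff.2 (by nlinarith)
      have h5 : Real.exp (-(ν * x)) - Real.exp (-(μ * x)) ≤ (μ - ν) * x := by nlinarith [mul_nonneg (mul_nonneg (sub_nonneg.2 hle) hx) (sub_nonneg.2 hex)]
      simp only [hh, norm_mul, norm_neg, Real.norm_eq_abs, abs_div, abs_one]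
      rw [abs_of_nonneg k1, abs_of_nonneg (le_of_lt hxρ), ← e3]
      calc 1 / |ρ| * ((Real.exp (-(ν * x)) - Real.exp (-(μ * x))) * x ^ (-ρ))
          ≤ 1 / |ρ| * (((μ - ν) * x) * x ^ (-ρ)) := by
            refine mul_le_mul_of_nonneg_left ?_ (by positivity)
            exact mul_le_mul_of_nonneg_right h5 hxρ.le
        _ = (μ - ν) / |ρ| * (x * x ^ (-ρ)) := by ring
  -- apply FTC
  have hint : ∫ x in Ioi (0:ℝ), (f x - g x) = 0 - h 0 :=
    integral_Ioi_of_hasDerivAt_of_tendsto hcont hderiv (hfi.sub hgi) htop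
  rw [h0, sub_zero] at hint
  have hsplit : ∫ x in Ioi (0:ℝ), f x = ∫ x in Ioi (0:ℝ), g x := by
    have := integral_sub hfi hgi
    rw [hint] at this
    linarith [this]
  show ∫ x in Ioi (0:ℝ), f x = _
  rw [hsplit]
  have hgval : ∫ x in Ioi (0:ℝ), g x
      = (1 / ρ) * (μ * ((1/μ) ^ (1-ρ) * Real.Gamma (1-ρ)) - ν * ((1/ν) ^ (1-ρ) * Real.Gamma (1-ρ))) := by
    rw [← frullani_Ival hμ hρ, ← frullani_Ival hν hρ]
    rw [← integral_const_mul, ← integral_const_mul, ← integral_sub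
      ((frullani_Iint hμ hρ).const_mul μ) ((frullani_Iint hν hρ).const_mul ν),
      ← integral_const_mul]
    refine setIntegral_congr_fun measurableSet_Ioi fun x hx => ?_
    simp only [hg]; ring
  rw [hgval]
  have p1 : μ * (1/μ) ^ (1-ρ) = μ ^ ρ := frullani_pow hμ
  have p2 : ν * (1/ν) ^ (1-ρ) = ν ^ ρ := frullani_pow hν
  linear_combination (Real.Gamma (1 - ρ) / ρ) * p1 - (Real.Gamma (1 - ρ) / ρ) * p2

theorem stmt_0 (μ ν ρ : ℝ) (hμ : 0 < μ) (hν : 0 < ν) (hρ : ρ < 1) (hρ0 : ρ ≠ 0) :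
    IntegrableOn (fun x : ℝ => (Real.exp (-ν * x) - Real.exp (-μ * x)) / x ^ (ρ + 1))
      (Ioi 0) ∧
    ∫ x in Ioi (0 : ℝ), (Real.exp (-ν * x) - Real.exp (-μ * x)) / x ^ (ρ + 1) =
      ((μ ^ ρ - ν ^ ρ) / ρ) * Real.Gamma (1 - ρ) := by
  rcases le_total ν μ with hle | hle
  · exact frullani_aux μ ν ρ hμ hν hρ hρ0 hle
  · obtain ⟨h1, h2⟩ := frullani_aux ν μ ρ hν hμ hρ hρ0 hle
    constructor
    · refine IntegrableOn.congr_fun h1.neg (fun x hx => ?_) measurableSet_Ioi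
      simp only [Pi.neg_apply]
      rw [← neg_div, neg_sub]
    · have heq : (fun x : ℝ => (Real.exp (-ν * x) - Real.exp (-μ * x)) / x ^ (ρ + 1))
        = fun x : ℝ => -((Real.exp (-μ * x) - Real.exp (-ν * x)) / x ^ (ρ + 1)) := by
        funext x; rw [← neg_div, neg_sub]
      rw [heq, integral_neg, h2]
      ring
end

section
/- For real parameters μ > 0, p < 0 and 0 < ν < −p, the integral ∫₀^∞ x^{ν−1} (1 − exp(−μ x^p)) dx converges and equals −(1/|p|) · μ^{−ν/p} · Γ(ν/p). -/
open Real MeasureTheory Set Filter Topology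

lemma key_integrable {s : ℝ} (hs0 : s < 0) (hs1 : -1 < s) :
    IntegrableOn (fun x : ℝ => x ^ (s - 1) * (1 - Real.exp (-x))) (Ioi 0) := by
  have hsub : ∀ x : ℝ, 0 ≤ x → 1 - Real.exp (-x) ≤ x := by
    intro x hx
    have := Real.add_one_le_exp (-x)
    linarith
  have hnn : ∀ x : ℝ, 0 ≤ x → 0 ≤ 1 - Real.exp (-x) := by
    intro x hx
    have : Real.exp (-x) ≤ Real.exp 0 := Real.exp_le_exp.mpr (by linarith)
    simp only [Real.exp_zero] at this
    linarith
  have hmeas : AEStronglyMeasurable (fun x : ℝ => x ^ (s - 1) * (1 - Real.exp (-x)))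
      (volume.restrict (Ioi (0:ℝ))) := by
    apply ContinuousOn.aestronglyMeasurable _ measurableSet_Ioi
    intro x hx
    exact ((Real.continuousAt_rpow_const x (s-1) (Or.inl (ne_of_gt hx))).continuousWithinAt.mul
      (continuous_const.sub (Real.continuous_exp.comp continuous_neg)).continuousWithinAt)
  rw [← Ioc_union_Ioi_eq_Ioi (zero_le_one (α := ℝ))]
  apply IntegrableOn.union
  · -- on Ioc 0 1, dominate by x ^ s
    have hg : IntegrableOn (fun x : ℝ => x ^ s) (Ioc (0:ℝ) 1) := by
      have := intervalIntegral.intervalIntegrable_rpow' (a := 0) (b := 1) hs1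
      rwa [intervalIntegrable_iff_integrableOn_Ioc_of_le zero_le_one] at this
    apply Integrable.mono' hg (hmeas.mono_set Ioc_subset_Ioi_self)
    refine (ae_restrict_iff' measurableSet_Ioc).mpr (ae_of_all _ fun x hx => ?_)
    have hx0 : 0 < x := hx.1
    have h1 : 0 ≤ x ^ (s - 1) := Real.rpow_nonneg hx0.le _
    rw [Real.norm_eq_abs, abs_mul, abs_of_nonneg h1, abs_of_nonneg (hnn x hx0.le)]
    calc x ^ (s - 1) * (1 - Real.exp (-x)) ≤ x ^ (s - 1) * x :=
          mul_le_mul_of_nonneg_left (hsub x hx0.le) h1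
      _ = x ^ s := by
          rw [Real.rpow_sub hx0, Real.rpow_one, div_mul_cancel₀ _ hx0.ne']
  · -- on Ioi 1, dominate by x ^ (s - 1)
    have hg : IntegrableOn (fun x : ℝ => x ^ (s-1)) (Ioi (1:ℝ)) :=
      integrableOn_Ioi_rpow_of_lt (by linarith) one_pos
    apply Integrable.mono' hg (hmeas.mono_set (Ioi_subset_Ioi zero_le_one))
    refine (ae_restrict_iff' measurableSet_Ioi).mpr (ae_of_all _ fun x hx => ?_)
    have hx0 : (0:ℝ) < x := lt_trans one_pos hx
    have h1 : 0 ≤ x ^ (s - 1) := Real.rpow_nonneg hx0.le _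
    rw [Real.norm_eq_abs, abs_mul, abs_of_nonneg h1, abs_of_nonneg (hnn x hx0.le)]
    nlinarith [Real.exp_pos (-x)]

lemma key_integral {s : ℝ} (hs0 : s < 0) (hs1 : -1 < s) :
    ∫ x in Ioi (0:ℝ), x ^ (s - 1) * (1 - Real.exp (-x)) = -Real.Gamma s := by
  have hs : s ≠ 0 := ne_of_lt hs0
  set F : ℝ → ℝ := fun x => s⁻¹ * (x ^ s * (1 - Real.exp (-x))) with hF
  set f' : ℝ → ℝ := fun x => x ^ (s - 1) * (1 - Real.exp (-x)) + s⁻¹ * (x ^ s * Real.exp (-x))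
    with hf'
  have hI2 : IntegrableOn (fun x : ℝ => s⁻¹ * (x ^ s * Real.exp (-x))) (Ioi 0) := by
    have := Real.GammaIntegral_convergent (s := s + 1) (by linarith)
    simp only [add_sub_cancel_right] at this
    exact (this.congr_fun (fun x hx => by ring) measurableSet_Ioi).const_mul _
  have hint : IntegrableOn f' (Ioi 0) := (key_integrable hs0 hs1).add hI2
  have hderiv : ∀ x ∈ Ioi (0:ℝ), HasDerivAt F (f' x) x := by
    intro x hx
    have hx0 : (0:ℝ) < x := hx
    have h1 : HasDerivAt (fun x : ℝ => x ^ s) (s * x ^ (s - 1)) x :=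
      Real.hasDerivAt_rpow_const (Or.inl hx0.ne')
    have h2 : HasDerivAt (fun x : ℝ => 1 - Real.exp (-x)) (Real.exp (-x)) x := by
      have := ((Real.hasDerivAt_exp (-x)).comp x (hasDerivAt_neg x)).const_sub 1
      simpa using this
    have := ((h1.mul h2).const_mul s⁻¹)
    refine this.congr_deriv ?_
    simp only [hf']
    field_simp
  have hcont : ContinuousWithinAt F (Ici 0) 0 := by
    have hF0 : F 0 = 0 := by simp [hF]
    rw [ContinuousWithinAt, hF0]
    apply squeeze_zero_norm' (a := fun x => |s⁻¹| * x ^ (s + 1))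
    · filter_upwards [self_mem_nhdsWithin] with x (hx : x ∈ Ici (0:ℝ))
      rcases eq_or_lt_of_le (mem_Ici.mp hx) with h | h
      · simp [hF, ← h, Real.zero_rpow (by linarith : s + 1 ≠ 0)]
      · have hnn : 0 ≤ 1 - Real.exp (-x) := by
          have : Real.exp (-x) ≤ Real.exp 0 := Real.exp_le_exp.mpr (by linarith)
          simp only [Real.exp_zero] at this; linarith
        have hsub : 1 - Real.exp (-x) ≤ x := by
          have := Real.add_one_le_exp (-x); linarith
        have h1 : 0 ≤ x ^ s := Real.rpow_nonneg h.le _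
        rw [hF]
        rw [Real.norm_eq_abs, abs_mul, abs_mul, abs_of_nonneg h1, abs_of_nonneg hnn]
        apply mul_le_mul_of_nonneg_left _ (abs_nonneg _)
        calc x ^ s * (1 - Real.exp (-x)) ≤ x ^ s * x :=
              mul_le_mul_of_nonneg_left hsub h1
          _ = x ^ (s + 1) := by rw [Real.rpow_add h, Real.rpow_one]
    · have : Tendsto (fun x : ℝ => x ^ (s + 1)) (𝓝 0) (𝓝 ((0:ℝ) ^ (s + 1))) :=
        (Real.continuousAt_rpow_const 0 (s + 1) (Or.inr (by linarith))).tendsto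
      rw [Real.zero_rpow (by linarith : s + 1 ≠ 0)] at this
      simpa using (this.mono_left nhdsWithin_le_nhds).const_mul |s⁻¹|
  have htop : Tendsto F atTop (𝓝 0) := by
    have h1 : Tendsto (fun x : ℝ => x ^ s) atTop (𝓝 0) := by
      have := tendsto_rpow_neg_atTop (neg_pos.mpr hs0)
      simpa using this
    have h2 : Tendsto (fun x : ℝ => 1 - Real.exp (-x)) atTop (𝓝 1) := by
      have : Tendsto (fun x : ℝ => Real.exp (-x)) atTop (𝓝 0) :=
        Real.tendsto_exp_neg_atTop_nhds_zero.comp tendsto_id |>.congr (fun x => rfl)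
      simpa using (tendsto_const_nhds (x := (1:ℝ))).sub this
    have := (h1.mul h2).const_mul s⁻¹
    simpa using this
  have hFTC := integral_Ioi_of_hasDerivAt_of_tendsto hcont hderiv hint htop
  have hF0 : F 0 = 0 := by simp [hF]
  rw [hF0, sub_zero] at hFTC
  rw [MeasureTheory.integral_add (key_integrable hs0 hs1) hI2] at hFTC
  have hGamma : ∫ x in Ioi (0:ℝ), s⁻¹ * (x ^ s * Real.exp (-x)) = Real.Gamma s := by
    rw [MeasureTheory.integral_const_mul]
    have := Real.Gamma_eq_integral (s := s + 1) (by linarith)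
    simp only [add_sub_cancel_right] at this
    rw [show ∫ x in Ioi (0:ℝ), x ^ s * Real.exp (-x) = ∫ x in Ioi (0:ℝ), Real.exp (-x) * x ^ s
        from by congr 1; ext x; ring, ← this, Real.Gamma_add_one hs]
    field_simp
  rw [hGamma] at hFTC
  linarith

theorem stmt_3 (μ p ν : ℝ) (hμ : 0 < μ) (hp : p < 0) (hν : 0 < ν) (hνp : ν < -p) :
    IntegrableOn (fun x : ℝ => x ^ (ν - 1) * (1 - Real.exp (-μ * x ^ p))) (Ioi 0) ∧
    ∫ x in Ioi (0 : ℝ), x ^ (ν - 1) * (1 - Real.exp (-μ * x ^ p)) =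
      -(1 / |p|) * μ ^ (-ν / p) * Real.Gamma (ν / p) := by
  have hp0 : p ≠ 0 := ne_of_lt hp
  set s : ℝ := ν / p with hsdef
  have hs0 : s < 0 := div_neg_of_pos_of_neg hν hp
  have hs1 : -1 < s := (lt_div_iff_of_neg hp).mpr (by linarith)
  have hps : p * s = ν := by rw [hsdef]; field_simp
  set f : ℝ → ℝ := fun t => |p|⁻¹ * (t ^ (s - 1) * (1 - Real.exp (-t))) with hfdef
  have hf_int : IntegrableOn f (Ioi 0) := (key_integrable hs0 hs1).const_mul _
  have hf_val : ∫ t in Ioi (0:ℝ), f t = |p|⁻¹ * (-Real.Gamma s) := by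
    rw [hfdef]
    rw [MeasureTheory.integral_const_mul, key_integral hs0 hs1]
  set g : ℝ → ℝ := fun y => y ^ (ν - 1) * (1 - Real.exp (-y ^ p)) with hgdef
  have habs : |p| ≠ 0 := abs_ne_zero.mpr hp0
  have heq : ∀ x ∈ Ioi (0:ℝ), (|p| * x ^ (p - 1)) • f (x ^ p) = g x := by
    intro x hx
    have hx0 : (0:ℝ) < x := hx
    have h1 : (x ^ p) ^ (s - 1) = x ^ (ν - p) := by
      rw [← Real.rpow_mul hx0.le]
      congr 1
      rw [mul_sub, hps, mul_one]
    simp only [hfdef, hgdef, smul_eq_mul, h1]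
    rw [show |p| * x ^ (p-1) * (|p|⁻¹ * (x ^ (ν - p) * (1 - Real.exp (-x ^ p))))
        = (|p| * |p|⁻¹) * ((x ^ (p-1) * x ^ (ν - p)) * (1 - Real.exp (-x ^ p))) by ring,
      mul_inv_cancel₀ habs, ← Real.rpow_add hx0, one_mul]
    ring_nf
  have hg_int : IntegrableOn g (Ioi 0) :=
    (((integrableOn_Ioi_comp_rpow_iff f hp0).mpr hf_int).congr_fun heq measurableSet_Ioi)
  have hg_val : ∫ y in Ioi (0:ℝ), g y = |p|⁻¹ * (-Real.Gamma s) := by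
    rw [← hf_val, ← integral_comp_rpow_Ioi f hp0]
    exact setIntegral_congr_fun measurableSet_Ioi (fun x hx => (heq x hx).symm) |>.symm ▸ rfl
  -- scaling
  set b : ℝ := μ ^ p⁻¹ with hbdef
  have hb : 0 < b := Real.rpow_pos_of_pos hμ _
  have hbp : b ^ p = μ := by
    rw [hbdef, ← Real.rpow_mul hμ.le, inv_mul_cancel₀ hp0, Real.rpow_one]
  have heq2 : ∀ x ∈ Ioi (0:ℝ), b ^ (1 - ν) * g (b * x)
      = x ^ (ν - 1) * (1 - Real.exp (-μ * x ^ p)) := by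
    intro x hx
    have hx0 : (0:ℝ) < x := hx
    have h1 : (b * x) ^ p = μ * x ^ p := by
      rw [Real.mul_rpow hb.le hx0.le, hbp]
    have h2 : (b * x) ^ (ν - 1) = b ^ (ν - 1) * x ^ (ν - 1) :=
      Real.mul_rpow hb.le hx0.le
    simp only [hgdef, h1, h2, neg_mul]
    rw [show b ^ (1-ν) * (b ^ (ν-1) * x ^ (ν-1) * (1 - Real.exp (-(μ * x ^ p))))
        = (b ^ (1-ν) * b ^ (ν-1)) * (x ^ (ν-1) * (1 - Real.exp (-(μ * x ^ p)))) by ring,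
      ← Real.rpow_add hb]
    norm_num
  have h1 : IntegrableOn (fun x => g (b * x)) (Ioi 0) := by
    have := (integrableOn_Ioi_comp_mul_left_iff g 0 hb).mpr
    rw [mul_zero] at this
    exact this hg_int
  constructor
  · exact IntegrableOn.congr_fun (h1.const_mul (b ^ (1 - ν))) heq2 measurableSet_Ioi
  · have hbv : b ^ (1 - ν) * b⁻¹ = μ ^ (-ν / p) := by
      rw [← Real.rpow_neg_one b, ← Real.rpow_add hb, hbdef, ← Real.rpow_mul hμ.le]
      congr 1
      field_simp
      ring
    calc ∫ x in Ioi (0:ℝ), x ^ (ν - 1) * (1 - Real.exp (-μ * x ^ p))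
        = ∫ x in Ioi (0:ℝ), b ^ (1 - ν) * g (b * x) :=
          (setIntegral_congr_fun measurableSet_Ioi (fun x hx => (heq2 x hx).symm))
      _ = b ^ (1 - ν) * ∫ x in Ioi (0:ℝ), g (b * x) := MeasureTheory.integral_const_mul _ _
      _ = b ^ (1 - ν) * (b⁻¹ * ∫ y in Ioi (0:ℝ), g y) := by
          rw [integral_comp_mul_left_Ioi g 0 hb, mul_zero, smul_eq_mul]
      _ = (b ^ (1 - ν) * b⁻¹) * (|p|⁻¹ * (-Real.Gamma s)) := by rw [hg_val]; ring
      _ = -(1 / |p|) * μ ^ (-ν / p) * Real.Gamma (ν / p) := by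
          rw [hbv, hsdef]; ring
end

section
/- For every natural number n, the integral ∫₀^∞ (ln x)^n e^{−x} dx converges and equals the n-th derivative of the Gamma function evaluated at 1, i.e. ∫₀^∞ (ln x)^n e^{−x} dx = Γ^{(n)}(1). -/
open Real MeasureTheory Set Filter Asymptotics

noncomputable def G4f (k : ℕ) : ℝ → ℂ := fun t => ((Real.log t) ^ k * Real.exp (-t) : ℝ)

lemma G4f_loc (k : ℕ) : LocallyIntegrableOn (G4f k) (Ioi 0) := by
  apply ContinuousOn.locallyIntegrableOn _ measurableSet_Ioi
  apply Complex.continuous_ofReal.comp_continuousOn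
  exact ((Real.continuousOn_log.mono (fun x hx => ne_of_gt hx)).pow k).mul
    (Real.continuous_exp.comp continuous_neg).continuousOn

lemma G4f_top (k : ℕ) : G4f k =O[atTop] fun t : ℝ => t ^ (-(2:ℝ)) := by
  have h0 : G4f k =O[atTop] fun t : ℝ => (Real.log t) ^ k * Real.exp (-t) := by
    apply isBigO_of_le
    intro x
    rw [show G4f k x = ((Real.log x) ^ k * Real.exp (-x) : ℝ) from rfl, Complex.norm_real]
  have h1 : (fun t : ℝ => (Real.log t) ^ k) =o[atTop] fun t : ℝ => t ^ (1:ℝ) :=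
    (isLittleO_log_rpow_rpow_atTop (k : ℝ) one_pos).congr_left fun x => by
      rw [Real.rpow_natCast]
  have h2 : (fun t : ℝ => Real.exp (-t)) =o[atTop] fun t : ℝ => t ^ (-(3:ℝ)) := by
    simpa [neg_one_mul] using isLittleO_exp_neg_mul_rpow_atTop one_pos (-(3:ℝ))
  refine h0.trans (((h1.mul h2).isBigO).congr' EventuallyEq.rfl ?_)
  filter_upwards [eventually_gt_atTop (0:ℝ)] with t ht
  rw [← Real.rpow_add ht]
  norm_num

lemma G4f_bot (k : ℕ) : G4f k =O[nhdsWithin 0 (Ioi 0)] fun t : ℝ => t ^ (-(1/2:ℝ)) := by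
  have h0 : G4f k =O[nhdsWithin 0 (Ioi 0)] fun t : ℝ => |Real.log t| ^ ((k : ℝ)) := by
    apply IsBigO.of_bound 1
    filter_upwards [self_mem_nhdsWithin] with t (ht : t ∈ Ioi 0)
    have h1 : Real.exp (-t) ≤ 1 := Real.exp_le_one_iff.mpr (by linarith [mem_Ioi.mp ht])
    have h2 : ‖G4f k t‖ = |Real.log t| ^ k * Real.exp (-t) := by
      rw [show G4f k t = ((Real.log t) ^ k * Real.exp (-t) : ℝ) from rfl, Complex.norm_real,
        Real.norm_eq_abs, abs_mul, abs_pow, Real.abs_exp]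
    rw [h2, Real.rpow_natCast]
    have h3 : ‖|Real.log t| ^ k‖ = |Real.log t| ^ k := by
      rw [Real.norm_eq_abs, abs_of_nonneg (pow_nonneg (abs_nonneg _) k)]
    rw [h3, one_mul]
    exact mul_le_of_le_one_right (pow_nonneg (abs_nonneg _) k) h1
  exact h0.trans (isLittleO_abs_log_rpow_rpow_nhdsGT_zero (k : ℝ) (by norm_num)).isBigO

lemma G4key (k : ℕ) {s : ℂ} (h1 : 1/2 < s.re) (h2 : s.re < 2) :
    HasDerivAt (mellin (G4f k)) (mellin (G4f (k+1)) s) s := by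
  have H := (mellin_hasDerivAt_of_isBigO_rpow (G4f_loc k) (G4f_top k) h2 (G4f_bot k) h1).2
  have he : (fun t : ℝ => Real.log t • G4f k t) = G4f (k+1) := by
    funext t
    simp only [G4f, Complex.real_smul, pow_succ]
    push_cast
    ring
  rwa [he] at H

lemma G4conv (k : ℕ) : MellinConvergent (G4f k) 1 :=
  mellinConvergent_of_isBigO_rpow (G4f_loc k) (G4f_top k) (by norm_num)
    (G4f_bot k) (by norm_num)

lemma G4base {s : ℂ} (hs : 0 < s.re) : mellin (G4f 0) s = Complex.Gamma s := by
  rw [Complex.Gamma_eq_integral hs, Complex.GammaIntegral_eq_mellin]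
  congr 1
  funext t
  simp [G4f]

lemma G4iter (n : ℕ) : ∀ x ∈ Ioo (1/2:ℝ) (3/2),
    iteratedDeriv n Real.Gamma x = (mellin (G4f n) ↑x).re := by
  induction n with
  | zero =>
    intro x hx
    rw [iteratedDeriv_zero, G4base (by simpa using by linarith [hx.1] : (0:ℝ) < ((x:ℂ)).re),
      Complex.Gamma_ofReal, Complex.ofReal_re]
  | succ n ih =>
    intro x hx
    have hx1 : (1/2:ℝ) < ((x:ℂ)).re := by simpa using hx.1
    have hx2 : ((x:ℂ)).re < 2 := by simp only [Complex.ofReal_re]; linarith [hx.2]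
    have hd : HasDerivAt (fun y : ℝ => (mellin (G4f n) ↑y).re)
        ((mellin (G4f (n+1)) ↑x).re) x :=
      (G4key n hx1 hx2).real_of_complex
    have heq : iteratedDeriv n Real.Gamma =ᶠ[nhds x] fun y => (mellin (G4f n) ↑y).re :=
      Filter.eventuallyEq_of_mem (isOpen_Ioo.mem_nhds hx) ih
    rw [iteratedDeriv_succ, heq.deriv_eq, hd.deriv]

theorem stmt_4 (n : ℕ) :
    IntegrableOn (fun x : ℝ => (Real.log x) ^ n * Real.exp (-x)) (Ioi 0) ∧
    ∫ x in Ioi (0 : ℝ), (Real.log x) ^ n * Real.exp (-x) =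
      iteratedDeriv n Real.Gamma 1 := by
  have hconv := G4conv n
  unfold MellinConvergent at hconv
  have he : (fun t : ℝ => (t : ℂ) ^ ((1:ℂ) - 1) • G4f n t) = G4f n := by
    funext t
    simp
  rw [he] at hconv
  constructor
  · have := hconv.re
    refine this.congr (Eventually.of_forall fun t => ?_)
    simp only [G4f, RCLike.re_to_complex, Complex.ofReal_re]
  · have hm : mellin (G4f n) 1 = ((∫ x in Ioi (0:ℝ), (Real.log x) ^ n * Real.exp (-x) : ℝ) : ℂ) := by
      rw [mellin]
      rw [show (fun t : ℝ => (t : ℂ) ^ ((1:ℂ) - 1) • G4f n t) = G4f n from he]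
      exact integral_ofReal
    rw [G4iter n 1 ⟨by norm_num, by norm_num⟩, Complex.ofReal_one, hm, Complex.ofReal_re]
end

section
/- For real parameters a > 0, μ > 0 and every natural number n, the integral ∫₀^∞ x^{a−1} e^{−μx} (ln x)^n dx converges and equals the n-th derivative with respect to a of the function a ↦ μ^{−a} Γ(a), i.e. ∫₀^∞ x^{a−1} e^{−μx} (ln x)^n dx = (d/da)^n [ μ^{−a} Γ(a) ]. -/
open Real MeasureTheory Set Filter Asymptotics

noncomputable def ggAux (μ : ℝ) (m : ℕ) : ℝ → ℂ :=
  fun t => (Real.log t) ^ m • (Real.exp (-μ * t) : ℂ)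

lemma ggAux_succ (μ : ℝ) (m : ℕ) : ggAux μ (m+1) = fun t => Real.log t • ggAux μ m t := by
  funext t; simp only [ggAux, smul_smul, pow_succ']

lemma ggAux_top (μ : ℝ) (hμ : 0 < μ) (m : ℕ) :
    ∀ c : ℝ, (ggAux μ m) =O[atTop] (fun t : ℝ => t ^ (-c)) := by
  induction m with
  | zero =>
    intro c
    have h := tendsto_rpow_mul_exp_neg_mul_atTop_nhds_zero c μ hμ
    rw [Asymptotics.isBigO_iff]
    refine ⟨1, ?_⟩
    filter_upwards [h.eventually (gt_mem_nhds zero_lt_one), eventually_ge_atTop (1:ℝ)]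
      with x hx hx1
    have hx0 : (0:ℝ) < x := lt_of_lt_of_le zero_lt_one hx1
    have hc : (0:ℝ) < x ^ c := Real.rpow_pos_of_pos hx0 c
    have key : Real.exp (-μ * x) ≤ x ^ (-c) := by
      rw [Real.rpow_neg hx0.le, ← one_div]
      rw [le_div_iff₀ hc]
      nlinarith [hx.le]
    simp only [ggAux, pow_zero, one_smul]
    rw [Complex.norm_real, Real.norm_eq_abs, Real.norm_eq_abs,
      abs_of_pos (Real.exp_pos _), abs_of_nonneg (Real.rpow_nonneg hx0.le _), one_mul]
    exact key
  | succ m ih =>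
    intro c
    have h := isBigO_rpow_top_log_smul (show c < c + 1 by linarith) (ih (c+1))
    rw [ggAux_succ]
    exact h

lemma ggAux_zero (μ : ℝ) (hμ : 0 < μ) (m : ℕ) :
    ∀ c : ℝ, 0 < c → (ggAux μ m) =O[nhdsWithin 0 (Ioi 0)] (fun t : ℝ => t ^ (-c)) := by
  induction m with
  | zero =>
    intro c hc
    rw [Asymptotics.isBigO_iff]
    refine ⟨1, ?_⟩
    filter_upwards [Ioo_mem_nhdsGT_of_mem (show (0:ℝ) ∈ Ico (0:ℝ) 1 by
      exact ⟨le_refl 0, zero_lt_one⟩)] with t ht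
    have ht0 : (0:ℝ) < t := ht.1
    have h1 : Real.exp (-μ * t) ≤ 1 := by
      rw [Real.exp_le_one_iff]
      nlinarith
    have h2 : (1:ℝ) ≤ t ^ (-c) :=
      Real.one_le_rpow_of_pos_of_le_one_of_nonpos ht0 ht.2.le (by linarith)
    simp only [ggAux, pow_zero, one_smul]
    rw [Complex.norm_real, Real.norm_eq_abs, Real.norm_eq_abs,
      abs_of_pos (Real.exp_pos _), abs_of_nonneg (Real.rpow_nonneg ht0.le _), one_mul]
    linarith
  | succ m ih =>
    intro c hc
    have h := isBigO_rpow_zero_log_smul (show c/2 < c by linarith) (ih (c/2) (by linarith))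
    rw [ggAux_succ]
    exact h

lemma ggAux_locint (μ : ℝ) (m : ℕ) : LocallyIntegrableOn (ggAux μ m) (Ioi 0) := by
  apply ContinuousOn.locallyIntegrableOn _ measurableSet_Ioi
  refine ContinuousOn.smul (f := fun t : ℝ => Real.log t ^ m)
    (g := fun t : ℝ => (Real.exp (-μ * t) : ℂ)) ?_ ?_
  · exact (Real.continuousOn_log.mono (by intro x hx; simpa using ne_of_gt hx)).pow m
  · exact (Complex.continuous_ofReal.comp
      (Real.continuous_exp.comp (continuous_const.mul continuous_id))).continuousOn

lemma ggAux_integrand_eq (μ b : ℝ) (m : ℕ) {t : ℝ} (ht : 0 < t) :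
    (t : ℂ) ^ ((b : ℂ) - 1) • ggAux μ m t =
      ((t ^ (b - 1) * Real.exp (-μ * t) * Real.log t ^ m : ℝ) : ℂ) := by
  have h1 : ((t : ℂ)) ^ ((b : ℂ) - 1) = ((t ^ (b - 1) : ℝ) : ℂ) := by
    rw [Complex.ofReal_cpow ht.le, Complex.ofReal_sub, Complex.ofReal_one]
  rw [ggAux, smul_eq_mul, h1, Complex.real_smul]
  push_cast
  ring

lemma mellin_ggAux (μ : ℝ) (m : ℕ) (b : ℝ) :
    mellin (ggAux μ m) (b : ℂ) =
      ((∫ x in Ioi (0:ℝ), x ^ (b - 1) * Real.exp (-μ * x) * Real.log x ^ m : ℝ) : ℂ) := by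
  rw [mellin, setIntegral_congr_fun measurableSet_Ioi
    (fun t ht => ggAux_integrand_eq μ b m ht)]
  exact integral_ofReal

lemma intOnAux (μ : ℝ) (hμ : 0 < μ) (m : ℕ) {b : ℝ} (hb : 0 < b) :
    IntegrableOn (fun x : ℝ => x ^ (b - 1) * Real.exp (-μ * x) * Real.log x ^ m) (Ioi 0) := by
  have h : MellinConvergent (ggAux μ m) (b : ℂ) :=
    mellinConvergent_of_isBigO_rpow (ggAux_locint μ m) (ggAux_top μ hμ m (b+1))
      (by simp only [Complex.ofReal_re]; linarith) (ggAux_zero μ hμ m (b/2) (by linarith)) (by simp only [Complex.ofReal_re]; linarith)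
  have h2 := h.re
  apply h2.congr
  filter_upwards [ae_restrict_mem measurableSet_Ioi] with t ht
  simp only [RCLike.re_to_complex]
  rw [ggAux_integrand_eq μ b m ht, Complex.ofReal_re]

lemma hasDerivAux (μ : ℝ) (hμ : 0 < μ) (m : ℕ) {b : ℝ} (hb : 0 < b) :
    HasDerivAt (fun y : ℝ => ∫ x in Ioi (0:ℝ), x ^ (y - 1) * Real.exp (-μ * x) * Real.log x ^ m)
      (∫ x in Ioi (0:ℝ), x ^ (b - 1) * Real.exp (-μ * x) * Real.log x ^ (m+1)) b := by
  obtain ⟨hconv, hd⟩ := mellin_hasDerivAt_of_isBigO_rpow (E := ℂ) (s := (b : ℂ))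
    (ggAux_locint μ m) (ggAux_top μ hμ m (b+1)) (by simp only [Complex.ofReal_re]; linarith)
    (ggAux_zero μ hμ m (b/2) (half_pos hb)) (by simp only [Complex.ofReal_re]; linarith)
  rw [← ggAux_succ] at hd
  have hd2 := hd.real_of_complex
  rw [mellin_ggAux μ (m+1) b, Complex.ofReal_re] at hd2
  apply hd2.congr_of_eventuallyEq
  filter_upwards [isOpen_Ioi.mem_nhds hb] with y hy
  rw [mellin_ggAux μ m y, Complex.ofReal_re]

lemma baseAux (μ : ℝ) (hμ : 0 < μ) {b : ℝ} (hb : 0 < b) :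
    ∫ x in Ioi (0:ℝ), x ^ (b - 1) * Real.exp (-μ * x) = μ ^ (-b) * Real.Gamma b := by
  simp_rw [neg_mul]
  rw [Real.integral_rpow_mul_exp_neg_mul_Ioi hb hμ, one_div, ← Real.rpow_neg_one μ,
    ← Real.rpow_mul hμ.le]
  norm_num

theorem stmt_5 (a μ : ℝ) (ha : 0 < a) (hμ : 0 < μ) (n : ℕ) :
    IntegrableOn (fun x : ℝ => x ^ (a - 1) * Real.exp (-μ * x) * (Real.log x) ^ n)
      (Ioi 0) ∧
    ∫ x in Ioi (0 : ℝ), x ^ (a - 1) * Real.exp (-μ * x) * (Real.log x) ^ n =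
      iteratedDeriv n (fun b : ℝ => μ ^ (-b) * Real.Gamma b) a := by
  constructor
  · exact intOnAux μ hμ n ha
  · have key : ∀ n : ℕ, ∀ b : ℝ, 0 < b →
        iteratedDeriv n (fun b : ℝ => μ ^ (-b) * Real.Gamma b) b =
          ∫ x in Ioi (0:ℝ), x ^ (b - 1) * Real.exp (-μ * x) * Real.log x ^ n := by
      intro n
      induction n with
      | zero =>
        intro b hb
        simp only [iteratedDeriv_zero, pow_zero, mul_one]
        exact (baseAux μ hμ hb).symm
      | succ n ih =>
        intro b hb
        rw [iteratedDeriv_succ]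
        have h1 : deriv (iteratedDeriv n (fun b : ℝ => μ ^ (-b) * Real.Gamma b)) b =
            deriv (fun y : ℝ =>
              ∫ x in Ioi (0:ℝ), x ^ (y - 1) * Real.exp (-μ * x) * Real.log x ^ n) b := by
          apply Filter.EventuallyEq.deriv_eq
          filter_upwards [isOpen_Ioi.mem_nhds hb] with y hy
          exact ih y hy
        rw [h1, (hasDerivAux μ hμ n hb).deriv]
    exact (key n a ha).symm
end

section
/- For real parameters a > 0 and μ > 0, setting δ = ψ(a) − ln μ, the integral ∫₀^∞ x^{a−1} e^{−μx} (ln x)² dx converges and equals (Γ(a)/μ^a) · ( δ² + ζ(2, a) ). -/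
open Real MeasureTheory Set Filter
open scoped Topology

noncomputable def trigSum (s : ℝ) : ℝ := ∑' j : ℕ, 1 / (s + j) ^ 2
noncomputable def digAux (s : ℝ) : ℝ :=
  -Real.eulerMascheroniConstant + ∑' j : ℕ, (1 / ((j : ℝ) + 1) - 1 / (s + j))
noncomputable def digSeq (n : ℕ) (s : ℝ) : ℝ :=
  Real.log n - ∑ j ∈ Finset.range (n + 1), 1 / (s + j)
noncomputable def trigSeq (n : ℕ) (s : ℝ) : ℝ :=
  ∑ j ∈ Finset.range (n + 1), 1 / (s + j) ^ 2

lemma summable_inv_sq_succ : Summable (fun j : ℕ => 1 / ((j : ℝ) + 1) ^ 2) := by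
  have h : Summable (fun j : ℕ => 1 / (j : ℝ) ^ 2) := by
    simpa using Real.summable_one_div_nat_pow.mpr (le_refl 2)
  have := (summable_nat_add_iff 1).mpr h
  simpa using this

-- lower bound : for 0 < c, s ∈ Ioi c, j : ℕ : min c 1 * (j+1) ≤ s + j
lemma key_lb {c s : ℝ} (hc : 0 < c) (hs : c < s) (j : ℕ) :
    min c 1 * ((j : ℝ) + 1) ≤ s + j := by
  have hm1 : min c 1 ≤ 1 := min_le_right _ _
  have hmc : min c 1 ≤ c := min_le_left _ _
  have hj : (0:ℝ) ≤ j := Nat.cast_nonneg j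
  nlinarith

lemma unif_trig {c R : ℝ} (hc : 0 < c) :
    TendstoUniformlyOn trigSeq trigSum atTop (Ioo c R) := by
  have hm : 0 < min c 1 := lt_min hc one_pos
  have hsum : Summable (fun j : ℕ => (min c 1)⁻¹ ^ 2 * (1 / ((j : ℝ) + 1) ^ 2)) :=
    summable_inv_sq_succ.mul_left _
  have h := tendstoUniformlyOn_tsum_nat hsum (f := fun j s => 1 / (s + (j:ℝ)) ^ 2)
    (s := Ioo c R) ?bound
  case bound =>
    intro j s hs
    have hlb := key_lb hc hs.1 j
    have hpos : (0:ℝ) < s + j := lt_of_lt_of_le (by positivity) hlb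
    rw [Real.norm_eq_abs, abs_of_nonneg (by positivity)]
    rw [div_le_iff₀ (by positivity)]
    have h2 : (min c 1 * ((j:ℝ)+1)) ^ 2 ≤ (s + j) ^ 2 := by
      apply pow_le_pow_left₀ (by positivity) hlb
    have hm' : min c 1 ≠ 0 := ne_of_gt hm
    have hj' : ((j:ℝ)+1) ≠ 0 := by positivity
    calc (1:ℝ) = (min c 1)⁻¹^2 * (1/((j:ℝ)+1)^2) * (min c 1 * ((j:ℝ)+1))^2 := by
          rw [mul_pow]; field_simp
      _ ≤ (min c 1)⁻¹^2 * (1/((j:ℝ)+1)^2) * (s+j)^2 := by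
          apply mul_le_mul_of_nonneg_left h2 (by positivity)
  -- h : partial sums over range n tend uniformly; shift index
  rw [Metric.tendstoUniformlyOn_iff] at h ⊢
  intro ε hε
  obtain ⟨N, hN⟩ := (Filter.eventually_atTop).mp (h ε hε)
  refine Filter.eventually_atTop.mpr ⟨N, fun n hn => ?_⟩
  intro s hs
  exact hN (n + 1) (le_trans hn (Nat.le_succ n)) s hs


lemma log_sub_log_succ :
    Tendsto (fun n : ℕ => Real.log n - Real.log (n + 1)) atTop (𝓝 0) := by
  have h1 : Tendsto (fun n : ℕ => 1 + 1 / (n : ℝ)) atTop (𝓝 1) := by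
    simpa using tendsto_const_nhds (x := (1:ℝ)) |>.add tendsto_one_div_atTop_nhds_zero_nat
  have h2 : Tendsto (fun n : ℕ => -Real.log (1 + 1 / (n : ℝ))) atTop (𝓝 0) := by
    have := ((Real.continuousAt_log one_ne_zero).tendsto.comp h1).neg
    simpa using this
  apply h2.congr'
  filter_upwards [eventually_ge_atTop 1] with n hn
  have hn0 : (0:ℝ) < n := by exact_mod_cast hn
  rw [show (1:ℝ) + 1/(n:ℝ) = ((n:ℝ)+1)/n by field_simp,
    Real.log_div (by positivity) (by positivity)]
  ring

lemma cseq_tendsto :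
    Tendsto (fun n : ℕ => Real.log n - ∑ j ∈ Finset.range (n + 1), 1 / ((j : ℝ) + 1))
      atTop (𝓝 (-Real.eulerMascheroniConstant)) := by
  have key : ∀ n : ℕ, Real.log n - ∑ j ∈ Finset.range (n + 1), 1 / ((j : ℝ) + 1)
      = -Real.eulerMascheroniSeq' (n+1) + (Real.log n - Real.log (n+1)) := by
    intro n
    rw [Real.eulerMascheroniSeq']
    simp only [Nat.succ_ne_zero, if_false]
    have : ((harmonic (n+1) : ℚ) : ℝ) = ∑ j ∈ Finset.range (n + 1), 1 / ((j : ℝ) + 1) := by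
      rw [harmonic]
      push_cast
      exact Finset.sum_congr rfl fun x _ => by rw [one_div, add_comm]
    rw [this]
    push_cast
    ring
  simp only [key]
  have h1 := (Real.tendsto_eulerMascheroniSeq'.comp (tendsto_add_atTop_nat 1)).neg
  simpa using h1.add log_sub_log_succ

lemma unif_dig {c R : ℝ} (hc : 0 < c) :
    TendstoUniformlyOn digSeq digAux atTop (Ioo c R) := by
  have hm : 0 < min c 1 := lt_min hc one_pos
  have hm' : min c 1 ≠ 0 := ne_of_gt hm
  -- uniform convergence of the series part
  have hsum : Summable (fun j : ℕ => (|R| + 1) * (min c 1)⁻¹ * (1 / ((j : ℝ) + 1) ^ 2)) :=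
    summable_inv_sq_succ.mul_left _
  have hE := tendstoUniformlyOn_tsum_nat hsum
    (f := fun j s => 1 / ((j:ℝ)+1) - 1 / (s + (j:ℝ))) (s := Ioo c R) ?bound
  case bound =>
    intro j s hs
    have hlb := key_lb hc hs.1 j
    have hj' : ((j:ℝ)+1) ≠ 0 := by positivity
    have hpos : (0:ℝ) < s + j := lt_of_lt_of_le (by positivity) hlb
    have hs0 : 0 < s := lt_trans hc hs.1
    show ‖1 / ((j:ℝ)+1) - 1 / (s + (j:ℝ))‖ ≤ (|R| + 1) * (min c 1)⁻¹ * (1 / ((j : ℝ) + 1) ^ 2)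
    have heq : 1 / ((j:ℝ)+1) - 1 / (s + (j:ℝ)) = (s - 1) / (((j:ℝ)+1) * (s + j)) := by
      rw [div_sub_div _ _ hj' hpos.ne']
      congr 1
      ring
    rw [heq, Real.norm_eq_abs, abs_div, abs_of_pos (by positivity : (0:ℝ) < ((j:ℝ)+1) * (s+j))]
    have habs : (0:ℝ) ≤ |R| := abs_nonneg R
    have hnum : |s - 1| ≤ |R| + 1 := by
      rw [abs_sub_le_iff]
      constructor
      · have : s ≤ |R| := le_trans hs.2.le (le_abs_self R)
        linarith
      · linarith
    have hden : (min c 1)⁻¹⁻¹ * (((j:ℝ)+1) * ((j:ℝ)+1)) ≤ ((j:ℝ)+1) * (s + j) := by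
      rw [inv_inv]
      calc min c 1 * (((j:ℝ)+1) * ((j:ℝ)+1)) = ((j:ℝ)+1) * (min c 1 * ((j:ℝ)+1)) := by ring
        _ ≤ ((j:ℝ)+1) * (s + j) := by
            apply mul_le_mul_of_nonneg_left hlb (by positivity)
    calc |s - 1| / (((j:ℝ)+1) * (s + j)) ≤ (|R| + 1) / ((min c 1)⁻¹⁻¹ * (((j:ℝ)+1) * ((j:ℝ)+1))) := by
          apply div_le_div₀ (by positivity) hnum (by rw [inv_inv]; positivity) hden
      _ = (|R| + 1) * (min c 1)⁻¹ * (1 / ((j : ℝ) + 1) ^ 2) := by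
          rw [inv_inv, one_div, pow_two, div_eq_mul_inv, mul_inv, mul_inv]
          ring
  -- constant part
  have hcseq : TendstoUniformlyOn
      (fun (n : ℕ) (_ : ℝ) => Real.log n - ∑ j ∈ Finset.range (n + 1), 1 / ((j : ℝ) + 1))
      (fun _ => -Real.eulerMascheroniConstant) atTop (Ioo c R) := by
    rw [Metric.tendstoUniformlyOn_iff]
    intro ε hε
    filter_upwards [Metric.tendsto_nhds.mp cseq_tendsto ε hε] with n hn s _
    simpa [dist_comm] using hn
  -- shift the series part
  have hE' : TendstoUniformlyOn
      (fun (n : ℕ) (s : ℝ) => ∑ j ∈ Finset.range (n + 1), (1 / ((j:ℝ)+1) - 1 / (s + (j:ℝ))))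
      (fun s => ∑' j : ℕ, (1 / ((j:ℝ)+1) - 1 / (s + (j:ℝ)))) atTop (Ioo c R) := by
    rw [Metric.tendstoUniformlyOn_iff] at hE ⊢
    intro ε hε
    obtain ⟨N, hN⟩ := Filter.eventually_atTop.mp (hE ε hε)
    exact Filter.eventually_atTop.mpr ⟨N, fun n hn s hs => hN (n+1) (le_trans hn (Nat.le_succ n)) s hs⟩
  have h2 := hcseq.add hE'
  have h3 : TendstoUniformlyOn digSeq
      (fun s => -Real.eulerMascheroniConstant + ∑' j : ℕ, (1 / ((j:ℝ)+1) - 1 / (s + (j:ℝ))))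
      atTop (Ioo c R) := by
    apply h2.congr
    filter_upwards with n s _
    simp only [Pi.add_apply]
    rw [digSeq, Finset.sum_sub_distrib]
    push_cast
    ring
  exact h3.congr_right fun s _ => rfl

lemma tlu_of_pieces {F : ℕ → ℝ → ℝ} {f : ℝ → ℝ}
    (h : ∀ c R : ℝ, 0 < c → TendstoUniformlyOn F f atTop (Ioo c R)) :
    TendstoLocallyUniformlyOn F f atTop (Ioi 0) := by
  intro u hu x hx
  have hx0 : (0:ℝ) < x := hx
  refine ⟨Ioo (x/2) (x+1), ?_, ?_⟩
  · exact mem_nhdsWithin_of_mem_nhds (Ioo_mem_nhds (by linarith) (by linarith))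
  · exact h (x/2) (x+1) (by linarith) u hu

lemma hasDerivAt_digSeq (n : ℕ) {s : ℝ} (hs : 0 < s) :
    HasDerivAt (digSeq n) (trigSeq n s) s := by
  have h : ∀ j ∈ Finset.range (n+1), HasDerivAt (fun t : ℝ => 1 / (t + (j:ℝ)))
      (-(1 / (s + (j:ℝ)) ^ 2)) s := by
    intro j _
    have hpos : (0:ℝ) < s + j := by positivity
    have h1 := (hasDerivAt_inv hpos.ne').comp s ((hasDerivAt_id s).add_const (j:ℝ))
    simpa [one_div, sq, Function.comp_def] using h1
  have hsum := HasDerivAt.fun_sum h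
  have h2 := (hasDerivAt_const s (Real.log n)).sub hsum
  simp only [zero_sub, ← Finset.sum_neg_distrib, neg_neg] at h2
  exact h2

noncomputable def logSeq (n : ℕ) (s : ℝ) : ℝ :=
  s * Real.log n + Real.log (n.factorial : ℝ) - ∑ j ∈ Finset.range (n + 1), Real.log (s + j)

lemma hasDerivAt_logSeq (n : ℕ) {s : ℝ} (hs : 0 < s) :
    HasDerivAt (logSeq n) (digSeq n s) s := by
  have h : ∀ j ∈ Finset.range (n+1), HasDerivAt (fun t : ℝ => Real.log (t + (j:ℝ)))
      (1 / (s + (j:ℝ))) s := by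
    intro j _
    have hpos : (0:ℝ) < s + j := by positivity
    have h1 := (Real.hasDerivAt_log hpos.ne').comp s ((hasDerivAt_id s).add_const (j:ℝ))
    simpa [one_div, Function.comp_def] using h1
  have hsum := HasDerivAt.fun_sum h
  have h2 := (((hasDerivAt_id s).mul_const (Real.log n)).add_const (Real.log (n.factorial : ℝ))).fun_sub hsum
  unfold logSeq
  simpa [digSeq] using h2

lemma logSeq_tendsto {s : ℝ} (hs : 0 < s) :
    Tendsto (fun n => logSeq n s) atTop (𝓝 (Real.log (Real.Gamma s))) := by
  have h1 : Tendsto (fun n => Real.log (Real.GammaSeq s n)) atTop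
      (𝓝 (Real.log (Real.Gamma s))) :=
    (Real.GammaSeq_tendsto_Gamma s).log (Real.Gamma_pos_of_pos hs).ne'
  apply h1.congr'
  filter_upwards [eventually_ge_atTop 1] with n hn
  have hn0 : (0:ℝ) < n := by exact_mod_cast hn
  have hprod : ∀ j ∈ Finset.range (n+1), s + (j:ℝ) ≠ 0 := by
    intro j _; positivity
  have hppos : (0:ℝ) < ∏ j ∈ Finset.range (n+1), (s + (j:ℝ)) :=
    Finset.prod_pos fun j _ => by positivity
  rw [Real.GammaSeq, Real.log_div (by positivity) hppos.ne',
    Real.log_mul (by positivity) (by positivity), Real.log_rpow hn0,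
    Real.log_prod hprod, logSeq]

lemma hasDerivAt_log_Gamma {s : ℝ} (hs : 0 < s) :
    HasDerivAt (fun t => Real.log (Real.Gamma t)) (digAux s) s := by
  apply hasDerivAt_of_tendstoLocallyUniformlyOn isOpen_Ioi
    (tlu_of_pieces fun c R hc => unif_dig hc)
    (Filter.Eventually.of_forall fun n => fun x hx => hasDerivAt_logSeq n hx)
    (fun x hx => logSeq_tendsto hx) hs

lemma hasDerivAt_digAux {s : ℝ} (hs : 0 < s) :
    HasDerivAt digAux (trigSum s) s := by
  apply hasDerivAt_of_tendstoLocallyUniformlyOn isOpen_Ioi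
    (tlu_of_pieces fun c R hc => unif_trig hc)
    (Filter.Eventually.of_forall fun n => fun x hx => hasDerivAt_digSeq n hx)
    (fun x hx => ((unif_dig (R := x+1) (half_pos hx)).tendsto_at
      (show x ∈ Ioo (x/2) (x+1) by
        have hx0 : (0:ℝ) < x := hx
        constructor <;> linarith))) hs

lemma hasDerivAt_Gamma_real {s : ℝ} (hs : 0 < s) :
    HasDerivAt Real.Gamma (Real.Gamma s * digAux s) s := by
  have h := (Real.hasDerivAt_exp (Real.log (Real.Gamma s))).comp s (hasDerivAt_log_Gamma hs)
  rw [Real.exp_log (Real.Gamma_pos_of_pos hs)] at h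
  apply h.congr_of_eventuallyEq
  filter_upwards [Ioi_mem_nhds hs] with t ht
  simp only [Function.comp_apply]
  rw [Real.exp_log (Real.Gamma_pos_of_pos ht)]

section Mellin

variable {μ : ℝ}

/-- exp(-μ x) as a complex-valued function -/
noncomputable def fC (μ : ℝ) : ℝ → ℂ := fun x => (Real.exp (-μ * x) : ℝ)

lemma fC_isBigO_top (hμ : 0 < μ) (r : ℝ) : fC μ =O[atTop] (· ^ (-r) : ℝ → ℝ) := by
  have h1 : Tendsto (fun x : ℝ => x ^ r * Real.exp (-μ * x)) atTop (𝓝 0) := by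
    simpa using tendsto_rpow_mul_exp_neg_mul_atTop_nhds_zero r μ hμ
  have h2 : (fun x : ℝ => x ^ r * Real.exp (-μ * x)) =O[atTop] (fun _ => (1:ℝ)) :=
    h1.isBigO_one ℝ
  have h3 : fC μ =O[atTop] (fun x : ℝ => x ^ (-r) * (x ^ r * Real.exp (-μ * x))) := by
    apply Asymptotics.IsBigO.of_bound 1
    filter_upwards [eventually_gt_atTop (0:ℝ)] with x hx
    have hxr : (0:ℝ) < x ^ r := Real.rpow_pos_of_pos hx r
    rw [Real.rpow_neg hx.le]
    simp only [fC, Complex.norm_real, Real.norm_eq_abs]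
    rw [abs_of_nonneg (by positivity), abs_of_nonneg (by positivity)]
    rw [one_mul, ← mul_assoc, inv_mul_cancel₀ hxr.ne', one_mul]
  calc fC μ =O[atTop] (fun x : ℝ => x ^ (-r) * (x ^ r * Real.exp (-μ * x))) := h3
    _ =O[atTop] (fun x : ℝ => x ^ (-r) * 1) := (Asymptotics.isBigO_refl _ _).mul h2
    _ =O[atTop] (· ^ (-r) : ℝ → ℝ) := by simp [Asymptotics.isBigO_refl]

lemma fC_isBigO_bot (hμ : 0 < μ) : fC μ =O[𝓝[>] (0:ℝ)] (· ^ (-(0:ℝ)) : ℝ → ℝ) := by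
  apply Asymptotics.IsBigO.of_bound 1
  filter_upwards [self_mem_nhdsWithin] with x (hx : (0:ℝ) < x)
  simp only [fC, Complex.norm_real, Real.norm_eq_abs, neg_zero, Real.rpow_zero]
  rw [abs_of_nonneg (Real.exp_pos _).le, abs_one, one_mul]
  exact Real.exp_le_one_iff.mpr (by nlinarith)

lemma fC_continuous : Continuous (fC μ) :=
  Complex.continuous_ofReal.comp (Real.continuous_exp.comp (continuous_const.mul continuous_id))

end Mellin

section Mellin2

variable {μ a : ℝ}

noncomputable def I0 (μ s : ℝ) : ℝ := ∫ x in Ioi (0:ℝ), x ^ (s-1) * Real.exp (-μ * x)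
noncomputable def I1 (μ s : ℝ) : ℝ := ∫ x in Ioi (0:ℝ), x ^ (s-1) * Real.exp (-μ * x) * Real.log x
noncomputable def I2 (μ s : ℝ) : ℝ :=
  ∫ x in Ioi (0:ℝ), x ^ (s-1) * Real.exp (-μ * x) * Real.log x ^ 2

lemma mellin_real (g : ℝ → ℝ) (s : ℝ) :
    mellin (fun t => (g t : ℂ)) ↑s = ↑(∫ x in Ioi (0:ℝ), x ^ (s-1) * g x) := by
  rw [mellin]
  calc ∫ t in Ioi (0:ℝ), (t:ℂ) ^ ((s:ℂ)-1) • (g t : ℂ)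
      = ∫ t in Ioi (0:ℝ), ((t ^ (s-1) * g t : ℝ) : ℂ) := by
        apply setIntegral_congr_fun measurableSet_Ioi
        intro x hx
        dsimp only
        have hx0 : (0:ℝ) < x := hx
        rw [show ((s:ℂ)-1) = ((s-1:ℝ):ℂ) by push_cast; ring, ← Complex.ofReal_cpow hx0.le]
        rw [smul_eq_mul, ← Complex.ofReal_mul]
    _ = ↑(∫ x in Ioi (0:ℝ), x ^ (s-1) * g x) := integral_ofReal

lemma mellin_fC_eq (μ s : ℝ) : mellin (fC μ) ↑s = ↑(I0 μ s) := mellin_real _ s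

lemma mellin_f1_eq (μ s : ℝ) :
    mellin (fun t => Real.log t • fC μ t) ↑s = ↑(I1 μ s) := by
  have h1 : (fun t => Real.log t • fC μ t)
      = fun t => ((Real.exp (-μ * t) * Real.log t : ℝ) : ℂ) := by
    funext t
    simp [fC, Complex.real_smul, mul_comm]
  rw [h1, mellin_real, I1]
  norm_cast
  apply setIntegral_congr_fun measurableSet_Ioi
  intro x _
  ring

lemma mellin_f2_eq (μ s : ℝ) :
    mellin (fun t => Real.log t • (Real.log t • fC μ t)) ↑s = ↑(I2 μ s) := by
  have h1 : (fun t => Real.log t • (Real.log t • fC μ t))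
      = fun t => ((Real.exp (-μ * t) * Real.log t ^ 2 : ℝ) : ℂ) := by
    funext t
    simp [fC, Complex.real_smul]
    push_cast
    ring
  rw [h1, mellin_real, I2]
  norm_cast
  apply setIntegral_congr_fun measurableSet_Ioi
  intro x _
  ring

lemma mell_step1 (hμ : 0 < μ) (ha : 0 < a) :
    MellinConvergent (fun t => Real.log t • fC μ t) (a:ℂ) ∧
      HasDerivAt (mellin (fC μ)) (mellin (fun t => Real.log t • fC μ t) ↑a) (a:ℂ) :=
  mellin_hasDerivAt_of_isBigO_rpow
    (fC_continuous.locallyIntegrable.locallyIntegrableOn _)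
    (fC_isBigO_top hμ (a+1)) (by simp)
    (fC_isBigO_bot hμ) (by simpa using ha)

lemma f1_locInt : LocallyIntegrableOn (fun t => Real.log t • fC μ t) (Ioi (0:ℝ)) := by
  apply ContinuousOn.locallyIntegrableOn _ measurableSet_Ioi
  exact (Real.continuousOn_log.mono fun x (hx : (0:ℝ) < x) => ne_of_gt hx).smul
    fC_continuous.continuousOn

lemma mell_step2 (hμ : 0 < μ) (ha : 0 < a) :
    MellinConvergent (fun t => Real.log t • (Real.log t • fC μ t)) (a:ℂ) ∧
      HasDerivAt (mellin (fun t => Real.log t • fC μ t))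
        (mellin (fun t => Real.log t • (Real.log t • fC μ t)) ↑a) (a:ℂ) :=
  mellin_hasDerivAt_of_isBigO_rpow f1_locInt
    (isBigO_rpow_top_log_smul (show a+1 < a+2 by linarith) (fC_isBigO_top hμ (a+2)))
    (by simp)
    (isBigO_rpow_zero_log_smul (show (0:ℝ) < a/2 by linarith) (fC_isBigO_bot hμ))
    (by simp; linarith)

lemma hasDerivAt_I0 (hμ : 0 < μ) (ha : 0 < a) : HasDerivAt (I0 μ) (I1 μ a) a := by
  have h := (mell_step1 hμ ha).2.real_of_complex
  rw [mellin_f1_eq, Complex.ofReal_re] at h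
  apply h.congr_of_eventuallyEq
  filter_upwards [Ioi_mem_nhds ha] with t _
  rw [mellin_fC_eq, Complex.ofReal_re]

lemma hasDerivAt_I1 (hμ : 0 < μ) (ha : 0 < a) : HasDerivAt (I1 μ) (I2 μ a) a := by
  have h := (mell_step2 hμ ha).2.real_of_complex
  rw [mellin_f2_eq, Complex.ofReal_re] at h
  apply h.congr_of_eventuallyEq
  filter_upwards [Ioi_mem_nhds ha] with t _
  rw [mellin_f1_eq, Complex.ofReal_re]

lemma integrableOn_I2 (hμ : 0 < μ) (ha : 0 < a) :
    IntegrableOn (fun x : ℝ => x ^ (a-1) * Real.exp (-μ * x) * Real.log x ^ 2) (Ioi 0) := by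
  have h := (mell_step2 hμ ha).1
  rw [MellinConvergent] at h
  have h2 : IntegrableOn (fun x : ℝ => ((x:ℂ) ^ ((a:ℂ) - 1) • (Real.log x • (Real.log x • fC μ x))).re) (Ioi 0) := h.re
  apply h2.congr_fun _ measurableSet_Ioi
  intro x hx
  dsimp only
  have hx0 : (0:ℝ) < x := hx
  rw [show ((a:ℂ)-1) = ((a-1:ℝ):ℂ) by push_cast; ring, ← Complex.ofReal_cpow hx0.le]
  simp only [fC, Complex.real_smul, smul_eq_mul, ← Complex.ofReal_mul, Complex.ofReal_re]
  ring

lemma I0_eq (hμ : 0 < μ) {s : ℝ} (hs : 0 < s) :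
    I0 μ s = Real.Gamma s * Real.exp (-Real.log μ * s) := by
  have key : (I0 μ s : ℂ) = ↑(μ ^ (-s) * Real.Gamma s) := by
    rw [← mellin_fC_eq]
    have h1 : fC μ = fun t => ((Real.exp (-(μ * t)) : ℝ) : ℂ) := by
      funext t; rw [fC, neg_mul]
    rw [h1]
    have h2 := mellin_comp_mul_left (fun x : ℝ => ((Real.exp (-x) : ℝ) : ℂ)) (s:ℂ) hμ
    rw [h2, ← Complex.GammaIntegral_eq_mellin,
      (Complex.Gamma_eq_integral (by simpa using hs)).symm, Complex.Gamma_ofReal]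
    rw [Complex.ofReal_mul, ← Complex.ofReal_neg, Complex.ofReal_cpow hμ.le]
    rw [smul_eq_mul]
  have h2 := Complex.ofReal_injective key
  rw [h2, Real.rpow_def_of_pos hμ, show Real.log μ * -s = -Real.log μ * s by ring]
  exact mul_comm _ _

end Mellin2

theorem stmt_6 (a μ : ℝ) (ha : 0 < a) (hμ : 0 < μ)
    (δ : ℝ) (hδ : δ = deriv Real.Gamma a / Real.Gamma a - Real.log μ) :
    IntegrableOn (fun x : ℝ => x ^ (a - 1) * Real.exp (-μ * x) * (Real.log x) ^ 2)
      (Ioi 0) ∧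
    ∫ x in Ioi (0 : ℝ), x ^ (a - 1) * Real.exp (-μ * x) * (Real.log x) ^ 2 =
      (Real.Gamma a / μ ^ a) * (δ ^ 2 + ∑' k : ℕ, 1 / ((k : ℝ) + a) ^ 2) := by
  have hΓpos := Real.Gamma_pos_of_pos ha
  have hδ2 : δ = digAux a - Real.log μ := by
    rw [hδ, (hasDerivAt_Gamma_real ha).deriv, mul_div_cancel_left₀ _ hΓpos.ne']
  set Ψ : ℝ → ℝ := fun s => Real.Gamma s * Real.exp (-Real.log μ * s) with hΨdef
  have hΨd : ∀ s : ℝ, 0 < s → HasDerivAt Ψ (Ψ s * (digAux s - Real.log μ)) s := by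
    intro s hs
    have he : HasDerivAt (fun t : ℝ => Real.exp (-Real.log μ * t))
        (Real.exp (-Real.log μ * s) * (-Real.log μ * 1)) s :=
      (Real.hasDerivAt_exp (-Real.log μ * s)).comp s
        ((hasDerivAt_id s).const_mul (-Real.log μ))
    have h := (hasDerivAt_Gamma_real hs).fun_mul he
    refine h.congr_deriv ?_
    show _ = Real.Gamma s * Real.exp (-Real.log μ * s) * (digAux s - Real.log μ)
    ring
  have hI1eq : ∀ s : ℝ, 0 < s → I1 μ s = Ψ s * (digAux s - Real.log μ) := by
    intro s hs
    refine (hasDerivAt_I0 hμ hs).unique ((hΨd s hs).congr_of_eventuallyEq ?_)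
    filter_upwards [Ioi_mem_nhds hs] with t ht
    exact I0_eq hμ ht
  have h2 : HasDerivAt (fun s => Ψ s * (digAux s - Real.log μ))
      (Ψ a * (digAux a - Real.log μ) * (digAux a - Real.log μ) + Ψ a * trigSum a) a :=
    (hΨd a ha).mul ((hasDerivAt_digAux ha).sub_const (Real.log μ))
  have h3 : HasDerivAt (I1 μ)
      (Ψ a * (digAux a - Real.log μ) * (digAux a - Real.log μ) + Ψ a * trigSum a) a := by
    refine h2.congr_of_eventuallyEq ?_
    filter_upwards [Ioi_mem_nhds ha] with t ht
    exact hI1eq t ht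
  have h4 := (hasDerivAt_I1 hμ ha).unique h3
  constructor
  · exact integrableOn_I2 hμ ha
  · show I2 μ a = _
    have hts : (∑' k : ℕ, 1 / ((k : ℝ) + a) ^ 2) = trigSum a :=
      tsum_congr fun k => by rw [add_comm]
    have hpow : Real.Gamma a / μ ^ a = Ψ a := by
      rw [hΨdef]
      rw [Real.rpow_def_of_pos hμ, div_eq_mul_inv, ← Real.exp_neg]
      ring_nf
    rw [h4, hts, hδ2, hpow]
    ring
end

section
/- For real parameters a > 0 and μ > 0, setting δ = ψ(a) − ln μ, the integral ∫₀^∞ x^{a−1} e^{−μx} (ln x)³ dx converges and equals (Γ(a)/μ^a) · ( δ³ + 3 ζ(2, a) δ − 2 ζ(3, a) ). -/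
open Real MeasureTheory Set

lemma int_base {c μ : ℝ} (hc : 0 < c) (hμ : 0 < μ) :
    IntegrableOn (fun x : ℝ => x ^ (c - 1) * Real.exp (-μ * x)) (Ioi 0) := by
  have h1 : IntegrableOn (fun x : ℝ => Real.exp (-x) * x ^ (c - 1)) (Ioi 0) :=
    Real.GammaIntegral_convergent hc
  have h2 : IntegrableOn (fun x : ℝ => Real.exp (-(μ * x)) * (μ * x) ^ (c - 1)) (Ioi 0) := by
    have := (integrableOn_Ioi_comp_mul_left_iff
      (fun x : ℝ => Real.exp (-x) * x ^ (c - 1)) 0 hμ).mpr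
    simpa using this (by simpa using h1)
  have h3 : IntegrableOn
      (fun x : ℝ => μ ^ (1 - c) * (Real.exp (-(μ * x)) * (μ * x) ^ (c - 1))) (Ioi 0) := by
    exact h2.const_mul (μ ^ (1 - c))
  apply h3.congr_fun ?_ measurableSet_Ioi
  intro x hx
  show μ ^ (1 - c) * (Real.exp (-(μ * x)) * (μ * x) ^ (c - 1)) = _
  rw [Real.mul_rpow hμ.le (le_of_lt hx)]
  rw [show μ ^ (1-c) * (Real.exp (-(μ * x)) * (μ ^ (c-1) * x ^ (c-1)))
      = (μ ^ (1-c) * μ ^ (c-1)) * (x ^ (c-1) * Real.exp (-(μ * x))) by ring]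
  rw [← Real.rpow_add hμ]
  norm_num

lemma abs_log_le {δ x : ℝ} (hδ : 0 < δ) (hx : 0 < x) :
    |Real.log x| ≤ (x ^ δ + x ^ (-δ)) / δ := by
  have key : ∀ y : ℝ, 0 < y → Real.log y ≤ y ^ δ / δ := by
    intro y hy
    have h1 : Real.log (y ^ δ) ≤ y ^ δ - 1 := Real.log_le_sub_one_of_pos (rpow_pos_of_pos hy δ)
    rw [Real.log_rpow hy] at h1
    rw [le_div_iff₀ hδ]
    nlinarith [rpow_pos_of_pos hy δ]
  have h2 : (0:ℝ) < x ^ (-δ) := rpow_pos_of_pos hx _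
  have h3 : (0:ℝ) < x ^ δ := rpow_pos_of_pos hx _
  rcases le_or_gt 1 x with h | h
  · rw [abs_of_nonneg (Real.log_nonneg h)]
    have := key x hx
    have h4 : x ^ δ / δ ≤ (x ^ δ + x ^ (-δ))/δ := by gcongr; linarith
    linarith [key x hx]
  · rw [abs_of_nonpos (Real.log_nonpos hx.le h.le)]
    have := key x⁻¹ (inv_pos.mpr hx)
    rw [Real.log_inv, Real.inv_rpow hx.le, ← Real.rpow_neg hx.le] at this
    have h4 : x ^ (-δ) / δ ≤ (x ^ δ + x ^ (-δ))/δ := by gcongr; linarith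
    linarith

lemma abs_log_pow_le {d x : ℝ} (n : ℕ) (hd : 0 < d) (hx : 0 < x) :
    |Real.log x| ^ n ≤ (2 / d) ^ n * (x ^ ((n:ℝ) * d) + x ^ (-((n:ℝ) * d))) := by
  have h2 : (0:ℝ) < x ^ (-d) := rpow_pos_of_pos hx _
  have h3 : (0:ℝ) < x ^ d := rpow_pos_of_pos hx _
  have h1 : |Real.log x| ^ n ≤ ((x ^ d + x ^ (-d)) / d) ^ n :=
    pow_le_pow_left₀ (abs_nonneg _) (abs_log_le hd hx) n
  refine h1.trans ?_
  have hmax : (x ^ d + x ^ (-d)) / d ≤ (2 / d) * max (x ^ d) (x ^ (-d)) := by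
    rw [div_mul_eq_mul_div]
    gcongr
    rcases max_cases (x ^ d) (x ^ (-d)) with h | h <;> [rw [h.1]; rw [h.1]] <;> linarith [h.2]
  have hstep : ((x ^ d + x ^ (-d)) / d) ^ n ≤ (2 / d) ^ n * (max (x ^ d) (x ^ (-d))) ^ n := by
    rw [← mul_pow]
    apply pow_le_pow_left₀ (by positivity) hmax
  refine hstep.trans ?_
  apply mul_le_mul_of_nonneg_left ?_ (by positivity)
  have hmp : (max (x ^ d) (x ^ (-d))) ^ n = max ((x ^ d) ^ n) ((x ^ (-d)) ^ n) := by
    rcases le_total (x ^ d) (x ^ (-d)) with h | h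
    · rw [max_eq_right h, max_eq_right (pow_le_pow_left₀ h3.le h n)]
    · rw [max_eq_left h, max_eq_left (pow_le_pow_left₀ h2.le h n)]
  rw [hmp, ← Real.rpow_natCast (x ^ d) n, ← Real.rpow_natCast (x ^ (-d)) n,
    ← Real.rpow_mul hx.le, ← Real.rpow_mul hx.le]
  rw [show d * (n:ℝ) = (n:ℝ) * d by ring, show -d * (n:ℝ) = -((n:ℝ) * d) by ring]
  rcases le_total (x ^ ((n:ℝ)*d)) (x ^ (-((n:ℝ)*d))) with h | h
  · rw [max_eq_right h]
    have := rpow_pos_of_pos hx ((n:ℝ)*d); linarith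
  · rw [max_eq_left h]
    have := rpow_pos_of_pos hx (-((n:ℝ)*d)); linarith

lemma meas_aux (c μ : ℝ) (n : ℕ) :
    AEStronglyMeasurable (fun x : ℝ => x ^ (c-1) * Real.exp (-μ*x) * Real.log x ^ n)
      (volume.restrict (Ioi 0)) := by
  apply ContinuousOn.aestronglyMeasurable ?_ measurableSet_Ioi
  apply ContinuousOn.mul  ?_ ((Real.continuousOn_log.mono ?_).pow n)
  · apply ContinuousOn.mul ?_ (Continuous.continuousOn (by continuity))
    intro x hx
    exact (Real.continuousAt_rpow_const x _ (Or.inl (ne_of_gt hx))).continuousWithinAt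
  · intro x hx; exact ne_of_gt hx

lemma meas_aux' (c μ : ℝ) (n : ℕ) :
    AEStronglyMeasurable (fun x : ℝ => x ^ (c-1) * Real.exp (-μ*x) * |Real.log x| ^ n)
      (volume.restrict (Ioi 0)) := by
  apply ContinuousOn.aestronglyMeasurable ?_ measurableSet_Ioi
  apply ContinuousOn.mul  ?_ (((Real.continuousOn_log.mono ?_).abs).pow n)
  · apply ContinuousOn.mul ?_ (Continuous.continuousOn (by continuity))
    intro x hx
    exact (Real.continuousAt_rpow_const x _ (Or.inl (ne_of_gt hx))).continuousWithinAt
  · intro x hx; exact ne_of_gt hx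

lemma int_abs_log {c μ : ℝ} (hc : 0 < c) (hμ : 0 < μ) (n : ℕ) :
    IntegrableOn (fun x : ℝ => x ^ (c-1) * Real.exp (-μ*x) * |Real.log x| ^ n) (Ioi 0) := by
  set d : ℝ := c / (2*(n+1)) with hd_def
  have hd : 0 < d := by positivity
  have hnd : (n:ℝ) * d < c := by
    rw [hd_def]
    rw [div_eq_mul_inv, ← mul_assoc]
    have h1 : (n:ℝ) < 2*(n+1) := by push_cast; linarith [Nat.cast_nonneg (α := ℝ) n]
    have h2 : (0:ℝ) < 2*(n+1) := by positivity
    calc (n:ℝ) * c * (2*((n:ℝ)+1))⁻¹ < (2*((n:ℝ)+1)) * c * (2*((n:ℝ)+1))⁻¹ := by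
          apply mul_lt_mul_of_pos_right (mul_lt_mul_of_pos_right h1 hc) (by positivity)
      _ = c := by field_simp
  have hnd0 : (0:ℝ) ≤ (n:ℝ) * d := by positivity
  have hint : Integrable (fun x : ℝ => (2/d)^n *
      ((x ^ (c + n*d - 1) + x ^ (c - n*d - 1)) * Real.exp (-μ*x))) (volume.restrict (Ioi 0)) := by
    apply Integrable.const_mul
    have h5 : IntegrableOn (fun x : ℝ => x ^ (c + n*d - 1) * Real.exp (-μ*x)
        + x ^ (c - n*d - 1) * Real.exp (-μ*x)) (Ioi 0) :=
      (int_base (c := c + n*d) (by linarith) hμ).add (int_base (c := c - n*d) (by linarith) hμ)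
    apply h5.congr_fun ?_ measurableSet_Ioi
    intro x hx
    ring
  apply hint.mono' (meas_aux' c μ n)
  filter_upwards [ae_restrict_mem measurableSet_Ioi] with x hx
  have hx0 : (0:ℝ) < x := hx
  have h1 : (0:ℝ) ≤ x ^ (c-1) := (rpow_pos_of_pos hx0 _).le
  have he : (0:ℝ) < Real.exp (-μ*x) := Real.exp_pos _
  rw [Real.norm_eq_abs, abs_of_nonneg (by positivity)]
  have h2 := abs_log_pow_le n hd hx0
  calc x ^ (c-1) * Real.exp (-μ*x) * |Real.log x| ^ n
      ≤ x ^ (c-1) * Real.exp (-μ*x) * ((2/d)^n * (x ^ ((n:ℝ)*d) + x ^ (-((n:ℝ)*d)))) := by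
        apply mul_le_mul_of_nonneg_left h2 (by positivity)
    _ = (2/d)^n * ((x ^ (c-1) * x ^ ((n:ℝ)*d) + x ^ (c-1) * x ^ (-((n:ℝ)*d))) * Real.exp (-μ*x)) := by
        ring
    _ = (2/d)^n * ((x ^ (c + (n:ℝ)*d - 1) + x ^ (c - (n:ℝ)*d - 1)) * Real.exp (-μ*x)) := by
        rw [← Real.rpow_add hx0, ← Real.rpow_add hx0]
        ring_nf

lemma int_log {c μ : ℝ} (hc : 0 < c) (hμ : 0 < μ) (n : ℕ) :
    IntegrableOn (fun x : ℝ => x ^ (c-1) * Real.exp (-μ*x) * Real.log x ^ n) (Ioi 0) := by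
  apply (int_abs_log hc hμ n).mono' (meas_aux c μ n)
  filter_upwards [ae_restrict_mem measurableSet_Ioi] with x hx
  have hx0 : (0:ℝ) < x := hx
  have h1 : (0:ℝ) ≤ x ^ (c-1) := (rpow_pos_of_pos hx0 _).le
  rw [Real.norm_eq_abs, abs_mul, abs_mul, abs_pow]
  rw [abs_of_nonneg h1, abs_of_nonneg (Real.exp_pos _).le]

noncomputable def J (μ : ℝ) (n : ℕ) (s : ℝ) : ℝ :=
  ∫ x in Ioi (0:ℝ), x ^ (s-1) * Real.exp (-μ*x) * Real.log x ^ n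

lemma hasDerivAt_J {μ s : ℝ} (hμ : 0 < μ) (hs : 0 < s) (n : ℕ) :
    HasDerivAt (J μ n) (J μ (n+1) s) s := by
  have hs2 : 0 < s/2 := by linarith
  have key := hasDerivAt_integral_of_dominated_loc_of_deriv_le
    (F := fun σ (x : ℝ) => x ^ (σ-1) * Real.exp (-μ*x) * Real.log x ^ n)
    (F' := fun σ (x : ℝ) => x ^ (σ-1) * Real.exp (-μ*x) * Real.log x ^ (n+1))
    (x₀ := s) (s := Metric.ball s (s/2))
    (bound := fun x => x ^ (s/2-1) * Real.exp (-μ*x) * |Real.log x| ^ (n+1)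
      + x ^ (3*s/2-1) * Real.exp (-μ*x) * |Real.log x| ^ (n+1))
    (μ := volume.restrict (Ioi 0)) (Metric.ball_mem_nhds s hs2)
    (Filter.Eventually.of_forall fun σ => meas_aux σ μ n)
    (int_log hs hμ n) (meas_aux s μ (n+1)) ?_
    ((int_abs_log hs2 hμ (n+1)).add (int_abs_log (by linarith : (0:ℝ) < 3*s/2) hμ (n+1))) ?_
  · exact key.2
  · -- bound
    filter_upwards [ae_restrict_mem measurableSet_Ioi] with x hx σ hσ
    have hx0 : (0:ℝ) < x := hx
    rw [Real.norm_eq_abs, abs_mul, abs_mul, abs_pow, abs_of_nonneg (rpow_pos_of_pos hx0 _).le,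
      abs_of_nonneg (Real.exp_pos _).le]
    have hσ1 : σ - 1 ≤ 3*s/2 - 1 := by
      have := abs_lt.mp (by simpa [Real.dist_eq] using hσ)
      linarith [this.2]
    have hσ2 : s/2 - 1 ≤ σ - 1 := by
      have := abs_lt.mp (by simpa [Real.dist_eq] using hσ)
      linarith [this.1]
    have hxb : x ^ (σ-1) ≤ x ^ (s/2-1) + x ^ (3*s/2-1) := by
      rcases le_total 1 x with h | h
      · have := Real.rpow_le_rpow_of_exponent_le h hσ1
        linarith [(rpow_pos_of_pos hx0 (s/2-1)).le, rpow_pos_of_pos hx0 (s/2-1)]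
      · have := Real.rpow_le_rpow_of_exponent_ge hx0 h hσ2
        linarith [rpow_pos_of_pos hx0 (3*s/2-1)]
    have hrest : (0:ℝ) ≤ Real.exp (-μ*x) * |Real.log x| ^ (n+1) := by positivity
    calc x ^ (σ-1) * Real.exp (-μ*x) * |Real.log x| ^ (n+1)
        = x ^ (σ-1) * (Real.exp (-μ*x) * |Real.log x| ^ (n+1)) := by ring
      _ ≤ (x ^ (s/2-1) + x ^ (3*s/2-1)) * (Real.exp (-μ*x) * |Real.log x| ^ (n+1)) :=
          mul_le_mul_of_nonneg_right hxb hrest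
      _ = _ := by ring
  · -- differentiability
    filter_upwards [ae_restrict_mem measurableSet_Ioi] with x hx σ hσ
    have hx0 : (0:ℝ) < x := hx
    have h1 : HasDerivAt (fun σ : ℝ => Real.exp (Real.log x * (σ-1)))
        (Real.exp (Real.log x * (σ-1)) * Real.log x) σ := by
      have h0 : HasDerivAt (fun σ : ℝ => Real.log x * (σ-1)) (Real.log x) σ := by
        simpa using ((hasDerivAt_id σ).sub_const 1).const_mul (Real.log x)
      simpa [mul_comm] using h0.exp
    have h2 := h1.mul_const (Real.exp (-μ*x) * Real.log x ^ n)
    have hrw : ∀ σ : ℝ, Real.exp (Real.log x * (σ-1)) = x ^ (σ-1) := fun σ =>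
      (Real.rpow_def_of_pos hx0 _).symm
    have hfun : (fun y : ℝ => Real.exp (Real.log x * (y-1)) * (Real.exp (-μ*x) * Real.log x ^ n))
        = (fun y : ℝ => x ^ (y-1) * Real.exp (-μ*x) * Real.log x ^ n) := by
      funext y; rw [hrw]; ring
    have hval : Real.exp (Real.log x * (σ-1)) * Real.log x * (Real.exp (-μ*x) * Real.log x ^ n)
        = x ^ (σ-1) * Real.exp (-μ*x) * Real.log x ^ (n+1) := by rw [hrw]; ring
    rw [← hfun, ← hval]; exact h2

lemma J_zero {μ s : ℝ} (hμ : 0 < μ) (hs : 0 < s) :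
    J μ 0 s = Real.Gamma s * μ ^ (-s) := by
  have h := integral_rpow_mul_exp_neg_mul_Ioi hs hμ
  rw [J]
  rw [show (∫ x in Ioi (0:ℝ), x ^ (s-1) * Real.exp (-μ*x) * Real.log x ^ 0)
      = ∫ t in Ioi (0:ℝ), t ^ (s-1) * Real.exp (-(μ*t)) by
    apply setIntegral_congr_fun measurableSet_Ioi; intro x hx; simp [neg_mul]]
  rw [h, one_div, Real.inv_rpow hμ.le, ← Real.rpow_neg hμ.le]
  ring

lemma Gamma_eq_J {s : ℝ} (hs : 0 < s) : Real.Gamma s = J 1 0 s := by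
  rw [Real.Gamma_eq_integral hs, J]
  apply setIntegral_congr_fun measurableSet_Ioi
  intro x hx
  simp [neg_mul]
  ring

lemma hasDerivAt_Gamma {s : ℝ} (hs : 0 < s) :
    HasDerivAt Real.Gamma (J 1 1 s) s := by
  apply (hasDerivAt_J one_pos hs 0).congr_of_eventuallyEq
  filter_upwards [Ioi_mem_nhds hs] with y hy
  exact Gamma_eq_J hy

lemma J0_pos {s : ℝ} (hs : 0 < s) : 0 < J 1 0 s := by
  rw [← Gamma_eq_J hs]; exact Real.Gamma_pos_of_pos hs

noncomputable def Pf (s : ℝ) : ℝ := J 1 1 s / J 1 0 s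
noncomputable def Qf (s : ℝ) : ℝ :=
  (J 1 2 s * J 1 0 s - J 1 1 s ^ 2) / J 1 0 s ^ 2
noncomputable def Rf (s : ℝ) : ℝ :=
  (J 1 3 s * J 1 0 s ^ 2 - 3 * J 1 2 s * J 1 1 s * J 1 0 s + 2 * J 1 1 s ^ 3) / J 1 0 s ^ 3

lemma hasDerivAt_P {s : ℝ} (hs : 0 < s) : HasDerivAt Pf (Qf s) s := by
  have h := (hasDerivAt_J one_pos hs 1).div (hasDerivAt_J one_pos hs 0) (J0_pos hs).ne'
  refine h.congr_deriv ?_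
  rw [Qf]
  ring

lemma hasDerivAt_Q {s : ℝ} (hs : 0 < s) : HasDerivAt Qf (Rf s) s := by
  have h0 := hasDerivAt_J one_pos hs 0
  have h1 := hasDerivAt_J one_pos hs 1
  have h2 := hasDerivAt_J one_pos hs 2
  have h3 := hasDerivAt_J one_pos hs 3
  have hnum : HasDerivAt (fun y => J 1 2 y * J 1 0 y - J 1 1 y ^ 2)
      (J 1 3 s * J 1 0 s + J 1 2 s * J 1 1 s - 2 * J 1 1 s * J 1 2 s) s := by
    have ha := h2.mul h0
    have hb := h1.pow 2
    refine (ha.sub hb).congr_deriv ?_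
    push_cast
    ring
  have hden : HasDerivAt (fun y => J 1 0 y ^ 2) (2 * J 1 0 s * J 1 1 s) s := by
    have := h0.pow 2
    refine this.congr_deriv ?_
    push_cast
    ring
  have h := hnum.div hden (pow_ne_zero 2 (J0_pos hs).ne')
  refine h.congr_deriv ?_
  rw [Rf]
  have hJ0 : J 1 0 s ≠ 0 := (J0_pos hs).ne'
  field_simp
  ring

lemma J1_rec {x : ℝ} (hx : 0 < x) :
    J 1 1 (x+1) = Real.Gamma x + x * J 1 1 x := by
  have hf : HasDerivAt (fun y : ℝ => Real.Gamma (y+1)) (J 1 1 (x+1)) x := by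
    have := (hasDerivAt_Gamma (by linarith : (0:ℝ) < x+1)).comp x ((hasDerivAt_id x).add_const 1)
    simp at this; exact this
  have hg : HasDerivAt (fun y : ℝ => y * Real.Gamma y)
      (Real.Gamma x + x * J 1 1 x) x := by
    have := (hasDerivAt_id x).mul (hasDerivAt_Gamma hx)
    exact this.congr_deriv (by simp)
  have heq : (fun y : ℝ => Real.Gamma (y+1)) =ᶠ[nhds x] (fun y : ℝ => y * Real.Gamma y) := by
    filter_upwards [Ioi_mem_nhds hx] with y hy
    exact Real.Gamma_add_one (ne_of_gt hy)
  exact (hf.congr_of_eventuallyEq heq.symm).unique hg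

lemma P_rec {x : ℝ} (hx : 0 < x) : Pf (x+1) = Pf x + 1/x := by
  have hΓ : J 1 0 (x+1) = x * J 1 0 x := by
    rw [← Gamma_eq_J (by linarith : (0:ℝ) < x+1), ← Gamma_eq_J hx,
      Real.Gamma_add_one (ne_of_gt hx)]
  rw [Pf, Pf, J1_rec hx, hΓ, Gamma_eq_J hx]
  have h1 : J 1 0 x ≠ 0 := (J0_pos hx).ne'
  field_simp
  ring

lemma Q_rec {x : ℝ} (hx : 0 < x) : Qf (x+1) = Qf x - 1/x^2 := by
  have hf : HasDerivAt (fun y : ℝ => Pf (y+1)) (Qf (x+1)) x := by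
    have := (hasDerivAt_P (by linarith : (0:ℝ) < x+1)).comp x ((hasDerivAt_id x).add_const 1)
    simp at this; exact this
  have hg : HasDerivAt (fun y : ℝ => Pf y + 1/y) (Qf x - 1/x^2) x := by
    have h2 : HasDerivAt (fun y : ℝ => 1/y) (-(1/x^2)) x := by
      simpa [one_div] using (hasDerivAt_inv (ne_of_gt hx))
    have := (hasDerivAt_P hx).add h2
    exact this.congr_deriv (by ring)
  have heq : (fun y : ℝ => Pf (y+1)) =ᶠ[nhds x] (fun y : ℝ => Pf y + 1/y) := by
    filter_upwards [Ioi_mem_nhds hx] with y hy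
    exact P_rec hy
  exact (hf.congr_of_eventuallyEq heq.symm).unique hg

lemma Q_nonneg {s : ℝ} (hs : 0 < s) : 0 ≤ Qf s := by
  set m := Pf s with hm
  have hint0 := int_log (μ := 1) hs one_pos 0
  have hint1 := int_log (μ := 1) hs one_pos 1
  have hint2 := int_log (μ := 1) hs one_pos 2
  have hI : (0:ℝ) ≤ ∫ x in Ioi (0:ℝ), x ^ (s-1) * Real.exp (-1*x) * (Real.log x - m)^2 := by
    apply setIntegral_nonneg measurableSet_Ioi
    intro x hx
    have : (0:ℝ) ≤ x ^ (s-1) := (rpow_pos_of_pos hx _).le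
    positivity
  have hexp : ∀ x : ℝ, x ^ (s-1) * Real.exp (-1*x) * (Real.log x - m)^2
      = x ^ (s-1) * Real.exp (-1*x) * Real.log x ^ 2
        - (2*m) * (x ^ (s-1) * Real.exp (-1*x) * Real.log x ^ 1)
        + m^2 * (x ^ (s-1) * Real.exp (-1*x) * Real.log x ^ 0) := by
    intro x; ring
  have hval : (∫ x in Ioi (0:ℝ), x ^ (s-1) * Real.exp (-1*x) * (Real.log x - m)^2)
      = J 1 2 s - (2*m) * J 1 1 s + m^2 * J 1 0 s := by
    simp_rw [hexp]
    have hsub : Integrable (fun x : ℝ => x ^ (s-1) * Real.exp (-1*x) * Real.log x ^ 2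
        - 2*m*(x ^ (s-1) * Real.exp (-1*x) * Real.log x ^ 1)) (volume.restrict (Ioi 0)) :=
      hint2.sub (hint1.const_mul (2*m))
    rw [integral_add hsub (hint0.const_mul (m^2)),
      integral_sub hint2 (hint1.const_mul (2*m)), MeasureTheory.integral_const_mul, MeasureTheory.integral_const_mul]
    rfl
  rw [hval] at hI
  have hQ : Qf s = (J 1 2 s - (2*m) * J 1 1 s + m^2 * J 1 0 s) / J 1 0 s := by
    rw [Qf, hm, Pf]
    have h1 : J 1 0 s ≠ 0 := (J0_pos hs).ne'
    field_simp
    ring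
  rw [hQ]
  exact div_nonneg hI (J0_pos hs).le

lemma sum_Z {t : ℝ} (ht : 0 < t) {m : ℕ} (hm : 2 ≤ m) :
    Summable (fun k : ℕ => 1/((k:ℝ)+t)^m) := by
  have base : Summable (fun k : ℕ => 1/((k:ℝ)+1)^2) := by
    have h := Real.summable_one_div_nat_pow.mpr (le_refl 2)
    exact_mod_cast (summable_nat_add_iff 1).mpr h
  have hshift : Summable (fun k : ℕ => 1/(((k+1:ℕ):ℝ)+t)^m) := by
    apply Summable.of_nonneg_of_le (fun k => by positivity) ?_ base
    intro k
    have hk1 : (1:ℝ) ≤ (k:ℝ)+1 := by linarith [Nat.cast_nonneg (α := ℝ) k]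
    have h1 : (1:ℝ) ≤ ((k+1:ℕ):ℝ)+t := by push_cast; linarith
    have h2 : ((k:ℝ)+1)^2 ≤ (((k+1:ℕ):ℝ)+t)^2 := by
      apply pow_le_pow_left₀ (by linarith) (by push_cast; linarith)
    have h3 : (((k+1:ℕ):ℝ)+t)^2 ≤ (((k+1:ℕ):ℝ)+t)^m :=
      pow_le_pow_right₀ h1 hm
    have h4 : (0:ℝ) < ((k:ℝ)+1)^2 := by positivity
    apply one_div_le_one_div_of_le h4 (le_trans h2 h3)
  exact (summable_nat_add_iff 1).mp hshift

noncomputable def Z2 (t : ℝ) : ℝ := ∑' k : ℕ, 1/((k:ℝ)+t)^2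
noncomputable def Z3 (t : ℝ) : ℝ := ∑' k : ℕ, 1/((k:ℝ)+t)^3

lemma hasDerivAt_term {k : ℕ} {y : ℝ} (hy : 0 < y) :
    HasDerivAt (fun t : ℝ => 1/((k:ℝ)+t)^2) (-2 * (1/((k:ℝ)+y)^3)) y := by
  have hky : (0:ℝ) < (k:ℝ)+y := by positivity
  have h1 : HasDerivAt (fun t : ℝ => ((k:ℝ)+t)^2) (2*((k:ℝ)+y)) y := by
    have h := ((hasDerivAt_id y).const_add (k:ℝ)).pow 2
    simp at h; exact h
  have h2 := h1.inv (by positivity)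
  have heq : -(2*((k:ℝ)+y)) / (((k:ℝ)+y)^2)^2 = -2 * (1/((k:ℝ)+y)^3) := by
    field_simp
  rw [← heq]; simp only [one_div]; exact h2

lemma hasDerivAt_Z2 {y : ℝ} (hy : 0 < y) :
    HasDerivAt Z2 (-2 * Z3 y) y := by
  have key := hasDerivAt_tsum_of_isPreconnected
    (u := fun k : ℕ => 2 * (1/((k:ℝ)+y/2)^3))
    (((sum_Z (by linarith : (0:ℝ) < y/2) (by norm_num : 2 ≤ 3)).mul_left 2))
    (isOpen_Ioi (a := y/2)) (isPreconnected_Ioi)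
    (g := fun (k : ℕ) (t : ℝ) => 1/((k:ℝ)+t)^2)
    (g' := fun (k : ℕ) (t : ℝ) => -2 * (1/((k:ℝ)+t)^3))
    (fun k t ht => hasDerivAt_term (lt_trans (by linarith : (0:ℝ) < y/2) (by simpa using ht)))
    ?_ (mem_Ioi.mpr (half_lt_self hy)) ?_ (mem_Ioi.mpr (half_lt_self hy))
  · unfold Z2 Z3
    have h2 : (∑' (k : ℕ), -2 * (1/((k:ℝ)+y)^3)) = -2 * ∑' (k : ℕ), 1/((k:ℝ)+y)^3 :=
      tsum_mul_left
    rw [← h2]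
    exact key
  · intro k t ht
    simp only [mem_Ioi] at ht
    have h1 : (0:ℝ) < (k:ℝ)+y/2 := by positivity
    have h2 : (0:ℝ) < (k:ℝ)+t := by linarith
    rw [Real.norm_eq_abs, abs_mul, abs_neg, abs_two, abs_of_nonneg (by positivity : (0:ℝ) ≤ 1/((k:ℝ)+t)^3)]
    have h3 : ((k:ℝ)+y/2)^3 ≤ ((k:ℝ)+t)^3 := pow_le_pow_left₀ h1.le (by linarith) 3
    have := one_div_le_one_div_of_le (by positivity) h3
    linarith
  · exact sum_Z hy (by norm_num)

lemma Q_telescope {s : ℝ} (hs : 0 < s) (n : ℕ) :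
    Qf s = (∑ k ∈ Finset.range n, 1/((k:ℝ)+s)^2) + Qf (s + n) := by
  induction n with
  | zero => simp
  | succ n ih =>
    have hsn : (0:ℝ) < s + n := by positivity
    have := Q_rec hsn
    rw [Finset.sum_range_succ, show s + (n+1:ℕ) = (s + n) + 1 by push_cast; ring, this, ih]
    have : ((n:ℝ)+s)^2 = (s+(n:ℕ))^2 := by push_cast; ring
    rw [this]
    ring

lemma Q_ge_Z2 {s : ℝ} (hs : 0 < s) : Z2 s ≤ Qf s := by
  rw [Z2]
  apply Real.tsum_le_of_sum_range_le (fun k => by positivity)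
  intro n
  have h := Q_telescope hs n
  have h2 : 0 ≤ Qf (s + n) := Q_nonneg (by positivity)
  linarith

lemma Q_ftc {x : ℝ} (hx : 0 < x) : ∫ t in x..(x+1), Qf t = 1/x := by
  have hle : x ≤ x + 1 := by linarith
  have hcont : ∀ t ∈ Icc x (x+1), HasDerivAt Pf (Qf t) t := fun t ht =>
    hasDerivAt_P (lt_of_lt_of_le hx ht.1)
  have hQcont : ContinuousOn Qf (Icc x (x+1)) := fun t ht =>
    ((hasDerivAt_Q (lt_of_lt_of_le hx ht.1)).differentiableAt.continuousAt).continuousWithinAt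
  rw [intervalIntegral.integral_eq_sub_of_hasDerivAt
    (fun t ht => hcont t (by rwa [uIcc_of_le hle] at ht))
    (hQcont.intervalIntegrable_of_Icc hle)]
  rw [P_rec hx]
  ring

lemma telescope_sum {x : ℝ} (hx : 0 < x) :
    ∑' k : ℕ, (1/((k:ℝ)+x) - 1/((k:ℝ)+x+1)) = 1/x := by
  have hsum : Summable (fun k : ℕ => 1/((k:ℝ)+x) - 1/((k:ℝ)+x+1)) := by
    apply Summable.of_nonneg_of_le ?_ ?_ (sum_Z hx (le_refl 2))
    · intro k
      have h1 : (0:ℝ) < (k:ℝ)+x := by positivity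
      have h2 : (1:ℝ)/((k:ℝ)+x+1) ≤ 1/((k:ℝ)+x) := by
        apply one_div_le_one_div_of_le h1; linarith
      linarith
    · intro k
      have h1 : (0:ℝ) < (k:ℝ)+x := by positivity
      have key : 1/((k:ℝ)+x) - 1/((k:ℝ)+x+1) = 1/(((k:ℝ)+x)*((k:ℝ)+x+1)) := by
        field_simp
        ring
      rw [key]
      apply one_div_le_one_div_of_le (by positivity)
      have : ((k:ℝ)+x)^2 = ((k:ℝ)+x)*((k:ℝ)+x) := sq ((k:ℝ)+x)
      nlinarith
  have hpart : ∀ n : ℕ, (∑ i ∈ Finset.range n, (1/((i:ℝ)+x) - 1/((i:ℝ)+x+1)))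
      = 1/x - 1/((n:ℝ)+x) := by
    intro n
    have h := Finset.sum_range_sub' (f := fun k : ℕ => 1/((k:ℝ)+x)) n
    have h2 : (∑ i ∈ Finset.range n, (1/((i:ℝ)+x) - 1/((i:ℝ)+x+1)))
        = ∑ i ∈ Finset.range n, (1/((i:ℝ)+x) - 1/(((i+1:ℕ):ℝ)+x)) := by
      apply Finset.sum_congr rfl
      intro i _
      push_cast
      ring_nf
    rw [h2, h]
    norm_num
  have htend : Filter.Tendsto (fun n : ℕ => ∑ i ∈ Finset.range n, (1/((i:ℝ)+x) - 1/((i:ℝ)+x+1)))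
      Filter.atTop (nhds (1/x)) := by
    simp_rw [hpart]
    have h0 : Filter.Tendsto (fun n : ℕ => 1/((n:ℝ)+x)) Filter.atTop (nhds 0) := by
      simp_rw [one_div]
      apply Filter.Tendsto.inv_tendsto_atTop
      apply Filter.tendsto_atTop_add_const_right
      exact tendsto_natCast_atTop_atTop
    have := Filter.Tendsto.const_sub (1/x) h0
    simpa using this
  exact (hsum.hasSum_iff_tendsto_nat.mpr htend).tsum_eq

lemma term_integral {x : ℝ} (hx : 0 < x) (k : ℕ) :
    ∫ t in Ioc x (x+1), 1/((k:ℝ)+t)^2 = 1/((k:ℝ)+x) - 1/((k:ℝ)+x+1) := by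
  have hle : x ≤ x + 1 := by linarith
  have hderiv : ∀ t ∈ Icc x (x+1), HasDerivAt (fun t : ℝ => -(((k:ℝ)+t)⁻¹))
      (1/((k:ℝ)+t)^2) t := by
    intro t ht
    have hkt : (0:ℝ) < (k:ℝ)+t := by
      have h0 : (0:ℝ) ≤ (k:ℝ) := Nat.cast_nonneg k
      linarith [ht.1]
    have h1 : HasDerivAt (fun t : ℝ => (k:ℝ)+t) 1 t := (hasDerivAt_id t).const_add _
    have h2 := (h1.inv hkt.ne').neg
    refine h2.congr_deriv ?_
    ring
  have hcont : ContinuousOn (fun t : ℝ => 1/((k:ℝ)+t)^2) (Icc x (x+1)) := by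
    apply ContinuousOn.div continuousOn_const
    · exact ((continuous_const.add continuous_id).pow 2).continuousOn
    · intro t ht
      have h0 : (0:ℝ) ≤ (k:ℝ) := Nat.cast_nonneg k
      have : (0:ℝ) < (k:ℝ)+t := by linarith [ht.1]
      positivity
  rw [← intervalIntegral.integral_of_le hle,
    intervalIntegral.integral_eq_sub_of_hasDerivAt
      (fun t ht => hderiv t (by rwa [uIcc_of_le hle] at ht))
      (hcont.intervalIntegrable_of_Icc hle)]
  have h3 : (0:ℝ) < (k:ℝ)+x := by positivity
  field_simp
  ring

lemma Z2_integral {x : ℝ} (hx : 0 < x) :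
    ∫ t in x..(x+1), Z2 t = 1/x := by
  have hle : x ≤ x + 1 := by linarith
  rw [intervalIntegral.integral_of_le hle]
  simp only [Z2]
  have hmeas : ∀ k : ℕ, AEStronglyMeasurable (fun t : ℝ => 1/((k:ℝ)+t)^2)
      (volume.restrict (Ioc x (x+1))) := by
    intro k
    apply ContinuousOn.aestronglyMeasurable ?_ measurableSet_Ioc
    apply ContinuousOn.div continuousOn_const
    · exact ((continuous_const.add continuous_id).pow 2).continuousOn
    · intro t ht
      have : (0:ℝ) < (k:ℝ)+t := lt_of_lt_of_le (by positivity : (0:ℝ) < (k:ℝ)+x) (by linarith [ht.1])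
      positivity
  have hlint : (∑' k : ℕ, ∫⁻ t, ‖1/((k:ℝ)+t)^2‖₊ ∂(volume.restrict (Ioc x (x+1)))) ≠ ⊤ := by
    have hb : ∀ k : ℕ, (∫⁻ t, ‖1/((k:ℝ)+t)^2‖₊ ∂(volume.restrict (Ioc x (x+1))))
        ≤ ENNReal.ofReal (1/((k:ℝ)+x)^2) := by
      intro k
      have h1 : (∫⁻ t, ‖1/((k:ℝ)+t)^2‖₊ ∂(volume.restrict (Ioc x (x+1))))
          ≤ ∫⁻ _t, ENNReal.ofReal (1/((k:ℝ)+x)^2) ∂(volume.restrict (Ioc x (x+1))) := by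
        apply lintegral_mono_ae
        filter_upwards [ae_restrict_mem measurableSet_Ioc] with t ht
        have hkx : (0:ℝ) < (k:ℝ)+x := by positivity
        have hkt : (0:ℝ) < (k:ℝ)+t := by linarith [ht.1]
        have hnn : (0:ℝ) ≤ 1/((k:ℝ)+t)^2 := by positivity
        rw [← enorm_eq_nnnorm, ← ofReal_norm, Real.norm_eq_abs, abs_of_nonneg hnn]
        apply ENNReal.ofReal_le_ofReal
        apply one_div_le_one_div_of_le (by positivity)
        apply pow_le_pow_left₀ hkx.le (by linarith [ht.1]) 2
      rw [lintegral_const, Measure.restrict_apply_univ, Real.volume_Ioc,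
        show x + 1 - x = 1 by ring, ENNReal.ofReal_one, mul_one] at h1
      exact h1
    apply ne_top_of_le_ne_top ?_ (ENNReal.tsum_le_tsum hb)
    rw [← ENNReal.ofReal_tsum_of_nonneg (fun k => by positivity) (sum_Z hx (le_refl 2))]
    exact ENNReal.ofReal_ne_top
  rw [MeasureTheory.integral_tsum hmeas hlint]
  rw [show (∑' k : ℕ, ∫ t in Ioc x (x+1), 1/((k:ℝ)+t)^2)
      = ∑' k : ℕ, (1/((k:ℝ)+x) - 1/((k:ℝ)+x+1)) from
    tsum_congr (fun k => term_integral hx k)]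
  exact telescope_sum hx

lemma L_cont {t : ℝ} (ht : 0 < t) : ContinuousAt (fun t => Qf t - Z2 t) t :=
  ((hasDerivAt_Q ht).differentiableAt.continuousAt).sub
    ((hasDerivAt_Z2 ht).differentiableAt.continuousAt)

lemma L_ii {u v : ℝ} (hu : 0 < u) (huv : u ≤ v) :
    IntervalIntegrable (fun t => Qf t - Z2 t) volume u v :=
  ContinuousOn.intervalIntegrable_of_Icc huv
    (fun t ht => (L_cont (lt_of_lt_of_le hu ht.1)).continuousWithinAt)

lemma L_integral_zero {x : ℝ} (hx : 0 < x) :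
    ∫ t in x..(x+1), (Qf t - Z2 t) = 0 := by
  have hle : x ≤ x + 1 := by linarith
  have hQi : IntervalIntegrable Qf volume x (x+1) :=
    ContinuousOn.intervalIntegrable_of_Icc hle (fun t ht =>
      ((hasDerivAt_Q (lt_of_lt_of_le hx ht.1)).differentiableAt.continuousAt).continuousWithinAt)
  have hZi : IntervalIntegrable Z2 volume x (x+1) :=
    ContinuousOn.intervalIntegrable_of_Icc hle (fun t ht =>
      ((hasDerivAt_Z2 (lt_of_lt_of_le hx ht.1)).differentiableAt.continuousAt).continuousWithinAt)
  rw [intervalIntegral.integral_sub hQi hZi, Q_ftc hx, Z2_integral hx]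
  ring

lemma Q_eq_Z2 {s : ℝ} (hs : 0 < s) : Qf s = Z2 s := by
  set L : ℝ → ℝ := fun t => Qf t - Z2 t with hL_def
  have hLnn : ∀ t, 0 < t → 0 ≤ L t := fun t ht => by
    simp only [hL_def]; linarith [Q_ge_Z2 ht]
  by_contra hne
  have hLs : 0 < L s := lt_of_le_of_ne (hLnn s hs) (by
    simp only [hL_def]; intro h; exact hne (by linarith))
  obtain ⟨ε, hε, hball⟩ := Metric.continuousAt_iff.mp (L_cont hs) (L s / 2) (half_pos hLs)
  set d : ℝ := min (ε/2) 1 with hd_def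
  have hd0 : 0 < d := by positivity
  have hd1 : d ≤ 1 := min_le_right _ _
  have hdε : d < ε := lt_of_le_of_lt (min_le_left _ _) (by linarith)
  have hlow : ∀ y ∈ Icc s (s+d), L s / 2 ≤ L y := by
    intro y hy
    have hdist : dist y s < ε := by
      rw [Real.dist_eq, abs_of_nonneg (by linarith [hy.1])]
      linarith [hy.2]
    have := hball hdist
    rw [Real.dist_eq] at this
    have := abs_lt.mp this
    linarith [this.1]
  have hsplit : (∫ t in s..(s+d), L t) + (∫ t in (s+d)..(s+1), L t) = ∫ t in s..(s+1), L t :=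
    intervalIntegral.integral_add_adjacent_intervals
      (L_ii hs (by linarith)) (L_ii (by linarith) (by linarith))
  have h1 : (∫ t in (s+d)..(s+1), L t) ≥ 0 := by
    apply intervalIntegral.integral_nonneg (by linarith)
    intro u hu
    exact hLnn u (by linarith [hu.1])
  have h2 : d * (L s / 2) ≤ ∫ t in s..(s+d), L t := by
    have hconst : (∫ _t in s..(s+d), (L s / 2)) = d * (L s / 2) := by
      rw [intervalIntegral.integral_const, smul_eq_mul]
      ring
    rw [← hconst]
    apply intervalIntegral.integral_mono_on (by linarith)
      (intervalIntegrable_const) (L_ii hs (by linarith))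
    exact hlow
  have h3 : (∫ t in s..(s+1), L t) = 0 := L_integral_zero hs
  nlinarith [mul_pos hd0 (half_pos hLs), hsplit, h3, h1, h2]

lemma R_eq {s : ℝ} (hs : 0 < s) : Rf s = -2 * Z3 s := by
  have h1 : HasDerivAt Qf (Rf s) s := hasDerivAt_Q hs
  have h2 : HasDerivAt Z2 (-2 * Z3 s) s := hasDerivAt_Z2 hs
  have heq : Z2 =ᶠ[nhds s] Qf := by
    filter_upwards [Ioi_mem_nhds hs] with y hy
    exact (Q_eq_Z2 hy).symm
  exact (h1.congr_of_eventuallyEq heq).unique h2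

lemma hasDerivAt_rpow_neg {μ : ℝ} (hμ : 0 < μ) (s : ℝ) :
    HasDerivAt (fun s : ℝ => μ ^ (-s)) (-Real.log μ * μ ^ (-s)) s := by
  have h0 : HasDerivAt (fun s : ℝ => Real.log μ * (-s)) (-Real.log μ) s := by
    simpa [mul_comm] using ((hasDerivAt_id s).neg).const_mul (Real.log μ)
  have h1 := h0.exp
  have hrw : ∀ y : ℝ, Real.exp (Real.log μ * (-y)) = μ ^ (-y) := fun y =>
    (Real.rpow_def_of_pos hμ _).symm
  have hfun : (fun y : ℝ => Real.exp (Real.log μ * (-y))) = fun y : ℝ => μ ^ (-y) :=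
    funext hrw
  have hval : Real.exp (Real.log μ * (-s)) * (-Real.log μ) = -Real.log μ * μ ^ (-s) := by
    rw [hrw]; ring
  rw [← hfun, ← hval]
  exact h1

lemma J0_mu {μ s : ℝ} (hμ : 0 < μ) (hs : 0 < s) :
    J μ 0 s = J 1 0 s * μ ^ (-s) := by
  rw [J_zero hμ hs, Gamma_eq_J hs]

lemma J1_mu {μ s : ℝ} (hμ : 0 < μ) (hs : 0 < s) :
    J μ 1 s = (J 1 1 s - Real.log μ * J 1 0 s) * μ ^ (-s) := by
  have hG : HasDerivAt (J μ 0) (J μ 1 s) s := hasDerivAt_J hμ hs 0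
  have hH : HasDerivAt (fun y : ℝ => J 1 0 y * μ ^ (-y))
      (J 1 1 s * μ ^ (-s) + J 1 0 s * (-Real.log μ * μ ^ (-s))) s :=
    (hasDerivAt_J one_pos hs 0).mul (hasDerivAt_rpow_neg hμ s)
  have heq : (J μ 0) =ᶠ[nhds s] (fun y : ℝ => J 1 0 y * μ ^ (-y)) := by
    filter_upwards [Ioi_mem_nhds hs] with y hy
    exact J0_mu hμ hy
  have := (hG.congr_of_eventuallyEq heq.symm).unique hH
  rw [this]; ring

lemma J2_mu {μ s : ℝ} (hμ : 0 < μ) (hs : 0 < s) :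
    J μ 2 s = (J 1 2 s - 2 * Real.log μ * J 1 1 s + Real.log μ ^ 2 * J 1 0 s) * μ ^ (-s) := by
  have hG : HasDerivAt (J μ 1) (J μ 2 s) s := hasDerivAt_J hμ hs 1
  have hH : HasDerivAt (fun y : ℝ => (J 1 1 y - Real.log μ * J 1 0 y) * μ ^ (-y))
      ((J 1 2 s - Real.log μ * J 1 1 s) * μ ^ (-s)
        + (J 1 1 s - Real.log μ * J 1 0 s) * (-Real.log μ * μ ^ (-s))) s :=
    ((hasDerivAt_J one_pos hs 1).sub ((hasDerivAt_J one_pos hs 0).const_mul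
      (Real.log μ))).mul (hasDerivAt_rpow_neg hμ s)
  have heq : (J μ 1) =ᶠ[nhds s] (fun y : ℝ => (J 1 1 y - Real.log μ * J 1 0 y) * μ ^ (-y)) := by
    filter_upwards [Ioi_mem_nhds hs] with y hy
    exact J1_mu hμ hy
  have := (hG.congr_of_eventuallyEq heq.symm).unique hH
  rw [this]; ring

lemma J3_mu {μ s : ℝ} (hμ : 0 < μ) (hs : 0 < s) :
    J μ 3 s = (J 1 3 s - 3 * Real.log μ * J 1 2 s + 3 * Real.log μ ^ 2 * J 1 1 s
      - Real.log μ ^ 3 * J 1 0 s) * μ ^ (-s) := by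
  have hG : HasDerivAt (J μ 2) (J μ 3 s) s := hasDerivAt_J hμ hs 2
  have hH : HasDerivAt
      (fun y : ℝ => (J 1 2 y - 2 * Real.log μ * J 1 1 y + Real.log μ ^ 2 * J 1 0 y) * μ ^ (-y))
      ((J 1 3 s - 2 * Real.log μ * J 1 2 s + Real.log μ ^ 2 * J 1 1 s) * μ ^ (-s)
        + (J 1 2 s - 2 * Real.log μ * J 1 1 s + Real.log μ ^ 2 * J 1 0 s)
          * (-Real.log μ * μ ^ (-s))) s :=
    (((hasDerivAt_J one_pos hs 2).sub ((hasDerivAt_J one_pos hs 1).const_mul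
      (2 * Real.log μ))).add ((hasDerivAt_J one_pos hs 0).const_mul
      (Real.log μ ^ 2))).mul (hasDerivAt_rpow_neg hμ s)
  have heq : (J μ 2) =ᶠ[nhds s]
      (fun y : ℝ => (J 1 2 y - 2 * Real.log μ * J 1 1 y + Real.log μ ^ 2 * J 1 0 y) * μ ^ (-y)) := by
    filter_upwards [Ioi_mem_nhds hs] with y hy
    exact J2_mu hμ hy
  have := (hG.congr_of_eventuallyEq heq.symm).unique hH
  rw [this]; ring

theorem stmt_7 (a μ : ℝ) (ha : 0 < a) (hμ : 0 < μ)
    (δ : ℝ) (hδ : δ = deriv Real.Gamma a / Real.Gamma a - Real.log μ) :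
    IntegrableOn (fun x : ℝ => x ^ (a - 1) * Real.exp (-μ * x) * (Real.log x) ^ 3)
      (Ioi 0) ∧
    ∫ x in Ioi (0 : ℝ), x ^ (a - 1) * Real.exp (-μ * x) * (Real.log x) ^ 3 =
      (Real.Gamma a / μ ^ a) *
        (δ ^ 3 + 3 * (∑' k : ℕ, 1 / ((k : ℝ) + a) ^ 2) * δ
          - 2 * (∑' k : ℕ, 1 / ((k : ℝ) + a) ^ 3)) := by
  constructor
  · exact int_log ha hμ 3
  · have hZ2 : (∑' k : ℕ, 1 / ((k : ℝ) + a) ^ 2) = Z2 a := rfl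
    have hZ3 : (∑' k : ℕ, 1 / ((k : ℝ) + a) ^ 3) = Z3 a := rfl
    have hint : (∫ x in Ioi (0:ℝ), x ^ (a - 1) * Real.exp (-μ * x) * (Real.log x) ^ 3)
        = J μ 3 a := rfl
    rw [hZ2, hZ3, hint, ← Q_eq_Z2 ha, show Z3 a = -Rf a / 2 by rw [R_eq ha]; ring]
    rw [J3_mu hμ ha]
    have hderiv : deriv Real.Gamma a = J 1 1 a := (hasDerivAt_Gamma ha).deriv
    have hΓ : Real.Gamma a = J 1 0 a := Gamma_eq_J ha
    rw [hδ, hderiv, hΓ, Qf, Rf]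
    have h0 : J 1 0 a ≠ 0 := (J0_pos ha).ne'
    have hμa : (0:ℝ) < μ ^ a := rpow_pos_of_pos hμ a
    rw [Real.rpow_neg hμ.le]
    field_simp
    ring
end

section
/- For a real parameter μ > 0 and a natural number n ≥ 0, the integral ∫₀^∞ (2μ x² − 2n − 1) · x^{2n} e^{−μ x²} ln x dx converges and equals ((2n−1)!! / (2 (2μ)^n)) · √(π/μ). -/
open Real MeasureTheory Set Filter

private lemma gamma_nat_add_half (n : ℕ) :
    Real.Gamma ((n : ℝ) + 1 / 2) =
      (Nat.doubleFactorial (2 * n - 1) : ℝ) * Real.sqrt Real.pi / 2 ^ n := by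
  induction n with
  | zero =>
      rw [show ((0:ℕ):ℝ) + 1 / 2 = 1 / 2 by norm_num, Real.Gamma_one_half_eq]
      simp [Nat.doubleFactorial]
  | succ m ih =>
      have h1 : ((m : ℝ) + 1) + 1 / 2 = ((m : ℝ) + 1 / 2) + 1 := by ring
      have h2 : ((m : ℝ) + 1 / 2) ≠ 0 := by positivity
      have hdf : (Nat.doubleFactorial (2 * (m + 1) - 1) : ℝ)
          = (2 * m + 1) * (Nat.doubleFactorial (2 * m - 1) : ℝ) := by
        rcases m with _ | k
        · norm_num [Nat.doubleFactorial]
        · have : 2 * (k + 1 + 1) - 1 = (2 * (k + 1) - 1) + 2 := by omega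
          rw [this, Nat.doubleFactorial_add_two]
          have : 2 * (k + 1) - 1 + 2 = 2 * (k + 1) + 1 := by omega
          push_cast [this]
          ring
      push_cast
      rw [h1, Real.Gamma_add_one h2, ih, hdf]
      field_simp
      ring

theorem stmt_13 (μ : ℝ) (hμ : 0 < μ) (n : ℕ) :
    IntegrableOn
      (fun x : ℝ =>
        (2 * μ * x ^ 2 - 2 * n - 1) * x ^ (2 * n) * Real.exp (-μ * x ^ 2) * Real.log x)
      (Ioi 0) ∧
    ∫ x in Ioi (0 : ℝ),
        (2 * μ * x ^ 2 - 2 * n - 1) * x ^ (2 * n) * Real.exp (-μ * x ^ 2) * Real.log x =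
      (Nat.doubleFactorial (2 * n - 1) : ℝ) / (2 * (2 * μ) ^ n) * Real.sqrt (Real.pi / μ) := by
  set f : ℝ → ℝ := fun x =>
    (2 * μ * x ^ 2 - 2 * n - 1) * x ^ (2 * n) * Real.exp (-μ * x ^ 2) * Real.log x with hf_def
  set g : ℝ → ℝ := fun x => x ^ (2 * n) * Real.exp (-μ * x ^ 2) with hg_def
  set s : ℝ := (2 * n : ℝ) with hs_def
  set C : ℝ := 2 * μ + 2 * n + 1 with hC_def
  have hC : 0 < C := by positivity
  -- measurability of f on Ioi 0
  have hfc : ContinuousOn f (Ioi 0) := by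
    apply ContinuousOn.mul
    · exact (by continuity : Continuous fun x : ℝ =>
        (2 * μ * x ^ 2 - 2 * n - 1) * x ^ (2 * n) * Real.exp (-μ * x ^ 2)).continuousOn
    · exact Real.continuousOn_log.mono fun x hx => by
        simpa using ne_of_gt (mem_Ioi.mp hx)
  -- dominating function
  set h : ℝ → ℝ := fun x => C * (2 * x ^ (s - 1/2) + x ^ (s + 1) + 2 * x ^ (s + 3/2)
      + x ^ (s + 3)) * Real.exp (-μ * x ^ 2) with hh_def
  have hs0 : (0 : ℝ) ≤ s := by positivity
  have hh_int : IntegrableOn h (Ioi 0) := by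
    have i1 := integrableOn_rpow_mul_exp_neg_mul_sq hμ (s := s - 1/2) (by linarith)
    have i2 := integrableOn_rpow_mul_exp_neg_mul_sq hμ (s := s + 1) (by linarith)
    have i3 := integrableOn_rpow_mul_exp_neg_mul_sq hμ (s := s + 3/2) (by linarith)
    have i4 := integrableOn_rpow_mul_exp_neg_mul_sq hμ (s := s + 3) (by linarith)
    have h4 := (((i1.const_mul 2).add i2).add (i3.const_mul 2)).add i4
    have h5 : IntegrableOn (fun x : ℝ => C * (2 * (x ^ (s - 1/2) * Real.exp (-μ * x ^ 2))
        + x ^ (s + 1) * Real.exp (-μ * x ^ 2)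
        + (2 * (x ^ (s + 3/2) * Real.exp (-μ * x ^ 2))
        + x ^ (s + 3) * Real.exp (-μ * x ^ 2)))) (Ioi 0) := by
      have h6 : IntegrableOn (fun x : ℝ =>
          C * (2 * (x ^ (s - 1/2) * Real.exp (-μ * x ^ 2))
          + x ^ (s + 1) * Real.exp (-μ * x ^ 2)
          + (2 * (x ^ (s + 3/2) * Real.exp (-μ * x ^ 2))
          + x ^ (s + 3) * Real.exp (-μ * x ^ 2)))) (Ioi 0) := by
        have h7 := h4.const_mul C
        apply h7.congr
        refine ae_of_all _ fun x => ?_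
        simp only [Pi.add_apply]
        ring
      exact h6
    apply h5.congr_fun _ measurableSet_Ioi
    intro x _
    simp only [hh_def]
    ring
  have hf_int : IntegrableOn f (Ioi 0) := by
    apply Integrable.mono' hh_int (hfc.aestronglyMeasurable measurableSet_Ioi)
    rw [ae_restrict_iff' measurableSet_Ioi]
    refine ae_of_all _ fun x hx => ?_
    have hx0 : (0 : ℝ) < x := hx
    set t : ℝ := x ^ (-(1/2) : ℝ) with ht_def
    have ht0 : 0 < t := Real.rpow_pos_of_pos hx0 _
    have hlog : |Real.log x| ≤ 2 * t + x := by
      rcases le_or_gt x 1 with hx1 | hx1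
      · have hlx : Real.log x ≤ 0 := Real.log_nonpos hx0.le hx1
        have h1 : Real.log t = -(1/2) * Real.log x := Real.log_rpow hx0 _
        have h2 : Real.log t ≤ t - 1 := Real.log_le_sub_one_of_pos ht0
        rw [abs_of_nonpos hlx]
        nlinarith
      · have hlx : 0 ≤ Real.log x := Real.log_nonneg hx1.le
        have h2 : Real.log x ≤ x - 1 := Real.log_le_sub_one_of_pos hx0
        rw [abs_of_nonneg hlx]
        nlinarith
    have habs : |2 * μ * x ^ 2 - 2 * n - 1| ≤ C * (x ^ 2 + 1) := by
      rw [abs_le]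
      constructor <;> nlinarith [sq_nonneg x, Nat.cast_nonneg (α := ℝ) n]
    have hxp : (0:ℝ) < x ^ (2 * n) := pow_pos hx0 _
    have hexp : (0:ℝ) < Real.exp (-μ * x ^ 2) := Real.exp_pos _
    have key : ‖f x‖ ≤ C * (x ^ 2 + 1) * x ^ (2 * n) * Real.exp (-μ * x ^ 2) * (2 * t + x) := by
      have : ‖f x‖ = |2 * μ * x ^ 2 - 2 * n - 1| * x ^ (2 * n) * Real.exp (-μ * x ^ 2)
          * |Real.log x| := by
        simp only [hf_def, Real.norm_eq_abs, abs_mul, abs_of_pos hxp, abs_of_pos hexp, hs_def]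
      rw [this]
      have h1 : |2 * μ * x ^ 2 - 2 * n - 1| * x ^ (2 * n) * Real.exp (-μ * x ^ 2)
          * |Real.log x| ≤ (C * (x ^ 2 + 1)) * x ^ (2 * n) * Real.exp (-μ * x ^ 2)
          * (2 * t + x) := by
        gcongr
      linarith
    refine key.trans (le_of_eq ?_)
    -- rewrite h x using rpow identities
    have e0 : x ^ (2 * n) = x ^ s := by
      rw [hs_def, ← Real.rpow_natCast x (2 * n)]; norm_num
    have e1 : x ^ (s - 1/2) = x ^ s * t := by
      rw [show s - 1/2 = s + (-(1/2)) from by ring, Real.rpow_add hx0, ← ht_def]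
    have e2 : x ^ (s + 1) = x ^ s * x := by
      rw [Real.rpow_add hx0, Real.rpow_one]
    have e3 : x ^ (s + 3/2) = x ^ s * x ^ 2 * t := by
      rw [show s + 3/2 = s + ((2:ℕ):ℝ) + (-(1/2)) from by push_cast; ring,
        Real.rpow_add hx0, Real.rpow_add hx0, Real.rpow_natCast, ← ht_def]
    have e4 : x ^ (s + 3) = x ^ s * x ^ 3 := by
      rw [show s + 3 = s + ((3:ℕ):ℝ) from by push_cast; ring,
        Real.rpow_add hx0, Real.rpow_natCast]
    simp only [hh_def, e1, e2, e3, e4, e0]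
    ring
  refine ⟨hf_int, ?_⟩
  -- integrability of g
  have hg_int : IntegrableOn g (Ioi 0) := by
    apply (integrableOn_rpow_mul_exp_neg_mul_sq hμ (s := s) (by linarith)).congr_fun _
      measurableSet_Ioi
    intro x hx
    have hx0 : (0:ℝ) < x := hx
    simp only [hg_def, hs_def]
    rw [← Real.rpow_natCast x (2 * n)]
    norm_num
  -- the auxiliary function φ
  set φ : ℝ → ℝ := fun x => -(x ^ (2 * n + 1) * Real.exp (-μ * x ^ 2)) * Real.log x
    with hφ_def
  have hφ0 : φ 0 = 0 := by simp [hφ_def]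
  -- continuity at 0 within Ici 0
  have hcont : ContinuousWithinAt φ (Ici 0) 0 := by
    rw [← continuousWithinAt_Ioi_iff_Ici]
    have htend : Tendsto (fun x : ℝ => Real.log x * x ^ ((2 * n + 1 : ℕ) : ℝ))
        (nhdsWithin 0 (Ioi 0)) (nhds 0) :=
      tendsto_log_mul_rpow_nhdsGT_zero (by positivity)
    have hexp : Tendsto (fun x : ℝ => -Real.exp (-μ * x ^ 2)) (nhdsWithin 0 (Ioi 0))
        (nhds (-1)) := by
      have hc : Continuous fun x : ℝ => -Real.exp (-μ * x ^ 2) := by continuity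
      have h2 : Tendsto (fun x : ℝ => -Real.exp (-μ * x ^ 2)) (nhdsWithin 0 (Ioi 0))
          (nhds (-Real.exp (-μ * (0:ℝ) ^ 2))) :=
        (hc.tendsto 0).mono_left nhdsWithin_le_nhds
      simpa using h2
    have := hexp.mul htend
    rw [show (-1 : ℝ) * 0 = 0 by ring] at this
    unfold ContinuousWithinAt
    rw [hφ0]
    apply this.congr'
    filter_upwards [self_mem_nhdsWithin] with x hx
    have hx0 : (0:ℝ) < x := hx
    rw [Real.rpow_natCast]
    simp only [hφ_def]
    ring
  -- derivative on Ioi 0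
  have hderiv : ∀ x ∈ Ioi (0:ℝ), HasDerivAt φ (f x - g x) x := by
    intro x hx
    have hx0 : (0:ℝ) < x := hx
    have hA : HasDerivAt (fun x : ℝ => x ^ (2 * n + 1) * Real.exp (-μ * x ^ 2))
        ((2 * n + 1 : ℕ) * x ^ (2 * n) * Real.exp (-μ * x ^ 2)
          + x ^ (2 * n + 1) * (Real.exp (-μ * x ^ 2) * (-μ * (2 * x)))) x := by
      have h1 : HasDerivAt (fun x : ℝ => x ^ (2 * n + 1))
          ((2 * n + 1 : ℕ) * x ^ (2 * n)) x := by
        simpa using hasDerivAt_pow (2 * n + 1) x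
      have h2 : HasDerivAt (fun x : ℝ => Real.exp (-μ * x ^ 2))
          (Real.exp (-μ * x ^ 2) * (-μ * (2 * x))) x := by
        have := ((hasDerivAt_pow 2 x).const_mul (-μ)).exp
        simpa [mul_comm, mul_assoc, mul_left_comm] using this
      exact h1.mul h2
    have := hA.neg.mul (Real.hasDerivAt_log hx0.ne')
    refine HasDerivAt.congr_deriv this ?_
    simp only [hf_def, hg_def, hs_def, Pi.neg_apply]
    have hxne : x ≠ 0 := hx0.ne'
    field_simp
    push_cast
    ring
  -- tendsto at top
  have htop : Tendsto φ atTop (nhds 0) := by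
    have hlo := rpow_mul_exp_neg_mul_sq_isLittleO_exp_neg hμ ((2 * n + 2 : ℕ) : ℝ)
    have hexp : Tendsto (fun x : ℝ => Real.exp (-(1/2) * x)) atTop (nhds 0) := by
      have : Tendsto (fun x : ℝ => -(1/2) * x) atTop atBot :=
        Tendsto.const_mul_atTop_of_neg (by norm_num) tendsto_id
      exact Real.tendsto_exp_atBot.comp this
    have hg0 : Tendsto (fun x : ℝ => x ^ ((2 * n + 2 : ℕ) : ℝ) * Real.exp (-μ * x ^ 2))
        atTop (nhds 0) := hlo.tendsto_zero_of_tendsto hexp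
    apply squeeze_zero_norm' _ hg0
    filter_upwards [eventually_ge_atTop (1:ℝ)] with x hx1
    have hx0 : (0:ℝ) < x := lt_of_lt_of_le one_pos hx1
    have hlog0 : 0 ≤ Real.log x := Real.log_nonneg hx1
    have hexp0 : (0:ℝ) < Real.exp (-μ * x ^ 2) := Real.exp_pos _
    have hxp : (0:ℝ) ≤ x ^ (2 * n + 1) := pow_nonneg hx0.le _
    have hnorm : ‖φ x‖ = x ^ (2 * n + 1) * Real.exp (-μ * x ^ 2) * Real.log x := by
      simp only [hφ_def, Real.norm_eq_abs, abs_mul, abs_neg, abs_of_nonneg hxp,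
        abs_of_pos hexp0, abs_of_nonneg hlog0]
    rw [hnorm, Real.rpow_natCast]
    have hle : x ^ (2 * n + 1) * Real.exp (-μ * x ^ 2) * Real.log x
        ≤ x ^ (2 * n + 1) * Real.exp (-μ * x ^ 2) * x := by
      gcongr
      linarith [Real.log_le_sub_one_of_pos hx0]
    calc x ^ (2 * n + 1) * Real.exp (-μ * x ^ 2) * Real.log x
        ≤ x ^ (2 * n + 1) * Real.exp (-μ * x ^ 2) * x := hle
      _ = x ^ (2 * n + 2) * Real.exp (-μ * x ^ 2) := by ring
  -- apply FTC
  have key := integral_Ioi_of_hasDerivAt_of_tendsto hcont hderiv (hf_int.sub hg_int) htop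
  rw [hφ0, sub_zero, integral_sub hf_int hg_int, sub_eq_zero] at key
  rw [key]
  -- compute the Gaussian moment
  have hval : ∫ x in Ioi (0:ℝ), g x
      = μ ^ (-(s + 1) / 2) * (1 / 2) * Real.Gamma ((s + 1) / 2) := by
    rw [← integral_rpow_mul_exp_neg_mul_rpow (p := 2) (q := s) two_pos (by linarith) hμ]
    apply setIntegral_congr_fun measurableSet_Ioi
    intro x hx
    have hx0 : (0:ℝ) < x := hx
    simp only [hg_def, hs_def]
    rw [← Real.rpow_natCast x (2 * n), ← Real.rpow_natCast x 2]
    norm_num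
  rw [hval]
  have hGa : (s + 1) / 2 = (n : ℝ) + 1 / 2 := by rw [hs_def]; ring
  rw [hGa, gamma_nat_add_half]
  -- final algebra
  have hsqrtμ : (0:ℝ) < Real.sqrt μ := Real.sqrt_pos.mpr hμ
  have hμpow : μ ^ (-(s + 1) / 2) = (μ ^ n)⁻¹ * (Real.sqrt μ)⁻¹ := by
    have : -(s + 1) / 2 = -(n:ℝ) + -(1/2) := by rw [hs_def]; ring
    rw [this, Real.rpow_add hμ, Real.rpow_neg hμ.le, Real.rpow_neg hμ.le,
      Real.rpow_natCast, Real.sqrt_eq_rpow]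
  rw [hμpow, Real.sqrt_div Real.pi_pos.le, mul_pow]
  have h2n : (0:ℝ) < (2:ℝ) ^ n := by positivity
  have hμn : (0:ℝ) < μ ^ n := by positivity
  field_simp
end

section
/- For a natural number n ≥ 1 and a real parameter μ > 0, the integral ∫₀^∞ x^{n−1} e^{−μx} · { (ln x − ½ ψ(n))² − ½ ψ'(n) } dx converges and equals ((n−1)!/μ^n) · { (ln μ − ½ ψ(n))² + ½ ψ'(n) }. -/
open Real MeasureTheory Set

open Real MeasureTheory Set Filter Asymptotics
open scoped Topology

noncomputable section

namespace Stmt15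

/-- the complex-valued exponential kernel -/
def g (c : ℝ) : ℝ → ℂ := fun t => (Real.exp (-(c * t)) : ℂ)

lemma g_cont (c : ℝ) : Continuous (g c) := by
  exact Complex.continuous_ofReal.comp (Real.continuous_exp.comp (by fun_prop))

lemma g_locInt (c : ℝ) : LocallyIntegrableOn (g c) (Ioi 0) :=
  ((g_cont c).continuousOn).locallyIntegrableOn measurableSet_Ioi

lemma g_top (c : ℝ) (hc : 0 < c) (a : ℝ) : (g c) =O[atTop] (· ^ (-a)) := by
  rw [← isBigO_norm_left]
  simp_rw [g, Complex.norm_real, isBigO_norm_left]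
  simpa only [neg_mul] using (isLittleO_exp_neg_mul_rpow_atTop hc (-a)).isBigO

lemma g_bot (c : ℝ) : (g c) =O[𝓝[>] (0:ℝ)] (· ^ (-(0:ℝ))) := by
  simp_rw [neg_zero, Real.rpow_zero]
  refine isBigO_const_of_tendsto (?_ : Tendsto _ _ (𝓝 ((Real.exp (-(c * 0)) : ℝ) : ℂ))) ?_
  · exact ((g_cont c).tendsto 0).mono_left nhdsWithin_le_nhds
  · simp [Real.exp_ne_zero]

lemma hD1 (c : ℝ) (hc : 0 < c) {s : ℂ} (hs : 0 < s.re) :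
    MellinConvergent (fun t => Real.log t • g c t) s ∧
      HasDerivAt (mellin (g c)) (mellin (fun t => Real.log t • g c t) s) s :=
  mellin_hasDerivAt_of_isBigO_rpow (g_locInt c) (g_top c hc (s.re + 1)) (by linarith)
    (g_bot c) hs

lemma hconv0 (c : ℝ) (hc : 0 < c) {s : ℂ} (hs : 0 < s.re) :
    MellinConvergent (g c) s :=
  mellinConvergent_of_isBigO_rpow (g_locInt c) (g_top c hc (s.re + 1)) (by linarith)
    (g_bot c) hs

lemma lg_locInt (c : ℝ) : LocallyIntegrableOn (fun t => Real.log t • g c t) (Ioi 0) := by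
  refine ((ContinuousOn.smul (f := fun t : ℝ => Real.log t) ?_ (g_cont c).continuousOn)).locallyIntegrableOn measurableSet_Ioi
  exact Real.continuousOn_log.mono (fun x hx => ne_of_gt hx)

lemma hD2 (c : ℝ) (hc : 0 < c) {s : ℂ} (hs : 0 < s.re) :
    MellinConvergent (fun t => Real.log t • Real.log t • g c t) s ∧
      HasDerivAt (mellin (fun t => Real.log t • g c t))
        (mellin (fun t => Real.log t • Real.log t • g c t) s) s :=
  mellin_hasDerivAt_of_isBigO_rpow (lg_locInt c)
    (isBigO_rpow_top_log_smul (by linarith : (s.re + 1 : ℝ) < s.re + 2) (g_top c hc (s.re + 2)))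
    (by linarith)
    (isBigO_rpow_zero_log_smul (by linarith : (0:ℝ) < s.re / 2) (g_bot c)) (by linarith)

end Stmt15

namespace Stmt15

/-- first log-weighted mellin of exp(-t) -/
def Γ₁ : ℂ → ℂ := mellin (fun t => Real.log t • g 1 t)
def Γ₂ : ℂ → ℂ := mellin (fun t => Real.log t • Real.log t • g 1 t)

lemma mellin_g_one : mellin (g 1) = Complex.GammaIntegral := by
  have h : g 1 = (fun x : ℝ => ((Real.exp (-x) : ℝ) : ℂ)) := funext fun t => by simp [g]
  rw [h, Complex.GammaIntegral_eq_mellin]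

lemma reOpen {s : ℂ} (hs : 0 < s.re) : {z : ℂ | 0 < z.re} ∈ 𝓝 s :=
  (isOpen_lt continuous_const Complex.continuous_re).mem_nhds hs

lemma hΓderiv {s : ℂ} (hs : 0 < s.re) : HasDerivAt Complex.Gamma (Γ₁ s) s := by
  have h := (hD1 1 one_pos hs).2
  rw [mellin_g_one] at h
  exact h.congr_of_eventuallyEq <|
    eventuallyEq_of_mem (reOpen hs) fun z hz => Complex.Gamma_eq_integral hz

lemma hΓ₁deriv {s : ℂ} (hs : 0 < s.re) : HasDerivAt Γ₁ (Γ₂ s) s := (hD2 1 one_pos hs).2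

lemma hRG {x : ℝ} (hx : 0 < x) : HasDerivAt Real.Gamma ((Γ₁ x).re) x := by
  exact (hΓderiv (by simpa using hx)).real_of_complex

end Stmt15

namespace Stmt15

lemma hGIderiv {s : ℂ} (hs : 0 < s.re) : HasDerivAt Complex.GammaIntegral (Γ₁ s) s := by
  have h := (hD1 1 one_pos hs).2
  rwa [mellin_g_one] at h

lemma hRG1 {x : ℝ} (hx : 0 < x) :
    HasDerivAt (fun y : ℝ => (Γ₁ y).re) ((Γ₂ x).re) x :=
  (hΓ₁deriv (by simpa using hx)).real_of_complex

variable {μ : ℝ}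

lemma g_comp (μ : ℝ) : (fun t => g 1 (μ * t)) = g μ := funext fun t => by simp [g]

lemma hG0 (hμ : 0 < μ) :
    mellin (g μ) = fun s => (μ : ℂ) ^ (-s) * Complex.GammaIntegral s := by
  funext s
  rw [← g_comp μ, mellin_comp_mul_left _ s hμ, mellin_g_one, smul_eq_mul]

lemma cpow_deriv (hμ : 0 < μ) (s : ℂ) :
    HasDerivAt (fun z : ℂ => (μ : ℂ) ^ (-z))
      (-((Real.log μ : ℂ)) * (μ : ℂ) ^ (-s)) s := by
  have h := ((hasDerivAt_id s).neg).const_cpow (c := (μ : ℂ))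
    (Or.inl (by exact_mod_cast hμ.ne'))
  rw [Complex.ofReal_log hμ.le]
  convert h using 1 <;> simp only [Pi.neg_apply, id_eq]
  ring

lemma hG1val (hμ : 0 < μ) {s : ℂ} (hs : 0 < s.re) :
    mellin (fun t => Real.log t • g μ t) s =
      (μ : ℂ) ^ (-s) * (Γ₁ s - (Real.log μ : ℂ) * Complex.GammaIntegral s) := by
  have h1 := (hD1 μ hμ hs).2
  rw [hG0 hμ] at h1
  have h2 := (cpow_deriv hμ s).mul (hGIderiv hs)
  rw [h1.unique h2]
  ring

lemma hG2val (hμ : 0 < μ) {s : ℂ} (hs : 0 < s.re) :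
    mellin (fun t => Real.log t • Real.log t • g μ t) s =
      (μ : ℂ) ^ (-s) * (Γ₂ s - 2 * (Real.log μ : ℂ) * Γ₁ s +
        (Real.log μ : ℂ) ^ 2 * Complex.GammaIntegral s) := by
  have h1 := (hD2 μ hμ hs).2
  have hev : (fun z : ℂ => (μ : ℂ) ^ (-z) * (Γ₁ z - (Real.log μ : ℂ) *
      Complex.GammaIntegral z)) =ᶠ[𝓝 s] mellin (fun t => Real.log t • g μ t) :=
    eventuallyEq_of_mem (reOpen hs) fun z hz => (hG1val hμ hz).symm
  have h1' := h1.congr_of_eventuallyEq hev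
  have h2 := (cpow_deriv hμ s).mul
    ((hΓ₁deriv hs).sub ((hGIderiv hs).const_mul ((Real.log μ : ℂ))))
  rw [h1'.unique h2]
  simp only [Pi.sub_apply]
  ring

lemma key (n : ℕ) (hn : 1 ≤ n) (f : ℝ → ℂ) (r : ℝ → ℝ)
    (hfr : ∀ t : ℝ, 0 < t → f t = ((r t : ℝ) : ℂ))
    (hconv : MellinConvergent f (n : ℂ)) :
    IntegrableOn (fun t : ℝ => t ^ (n - 1) * r t) (Ioi 0) ∧
      mellin f (n : ℂ) = ((∫ t in Ioi (0:ℝ), t ^ (n - 1) * r t : ℝ) : ℂ) := by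
  have hpt : ∀ t ∈ Ioi (0:ℝ),
      (t : ℂ) ^ ((n : ℂ) - 1) • f t = ((t ^ (n - 1) * r t : ℝ) : ℂ) := by
    intro t ht
    have h1 : ((n : ℂ) - 1) = ((n - 1 : ℕ) : ℂ) := by
      rw [Nat.cast_sub hn, Nat.cast_one]
    rw [h1, Complex.cpow_natCast, hfr t ht, smul_eq_mul]
    push_cast
    ring
  have hi : IntegrableOn (fun t : ℝ => ((t ^ (n - 1) * r t : ℝ) : ℂ)) (Ioi 0) :=
    hconv.congr_fun hpt measurableSet_Ioi
  constructor
  · have h := hi.re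
    refine h.congr (Eventually.of_forall fun t => ?_)
    simp only [RCLike.re_to_complex, Complex.ofReal_re]
  · rw [mellin, setIntegral_congr_fun measurableSet_Ioi hpt]
    exact integral_ofReal

end Stmt15


open Stmt15

theorem stmt_15 (n : ℕ) (hn : 1 ≤ n) (μ : ℝ) (hμ : 0 < μ)
    (ψn ψ'n : ℝ)
    (hψn : ψn = deriv Real.Gamma n / Real.Gamma n)
    (hψ'n : ψ'n = deriv (fun x : ℝ => deriv Real.Gamma x / Real.Gamma x) n) :
    IntegrableOn
      (fun x : ℝ =>
        x ^ (n - 1) * Real.exp (-μ * x) *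
          ((Real.log x - ψn / 2) ^ 2 - ψ'n / 2)) (Ioi 0) ∧
    ∫ x in Ioi (0 : ℝ),
        x ^ (n - 1) * Real.exp (-μ * x) * ((Real.log x - ψn / 2) ^ 2 - ψ'n / 2) =
      (Nat.factorial (n - 1) : ℝ) / μ ^ n * ((Real.log μ - ψn / 2) ^ 2 + ψ'n / 2) := by
  have hnpos : (0:ℝ) < (n:ℝ) := by exact_mod_cast Nat.lt_of_lt_of_le Nat.zero_lt_one hn
  have hres : 0 < ((n:ℂ)).re := by simpa using hnpos
  have hcast : (((n:ℝ) : ℂ)) = (n : ℂ) := by push_cast; ring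
  set A := Real.Gamma n with hA
  have hApos : 0 < A := Real.Gamma_pos_of_pos hnpos
  set B := (Γ₁ (n:ℂ)).re with hB
  set C := (Γ₂ (n:ℂ)).re with hC
  set L := Real.log μ with hL
  -- derivative facts for the real Gamma function
  have hGA : HasDerivAt Real.Gamma B (n:ℝ) := by
    have := hRG hnpos; rwa [hcast] at this
  have hGB : HasDerivAt (fun y : ℝ => (Γ₁ y).re) C (n:ℝ) := by
    have := hRG1 hnpos; rwa [hcast] at this
  have hψnv : ψn = B / A := by rw [hψn, hGA.deriv]
  have hψ'nv : ψ'n = (C * A - B * B) / A ^ 2 := by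
    have hev : (fun x : ℝ => deriv Real.Gamma x / Real.Gamma x) =ᶠ[nhds (n:ℝ)]
        (fun x : ℝ => (Γ₁ x).re / Real.Gamma x) := by
      filter_upwards [Ioi_mem_nhds hnpos] with x hx
      rw [(hRG hx).deriv]
    rw [hψ'n, hev.deriv_eq, (show HasDerivAt (fun x : ℝ => (Γ₁ x).re / Real.Gamma x) _ _ from hGB.div hGA hApos.ne').deriv, hcast, ← hB, ← hA]
  have hGI : Complex.GammaIntegral (n:ℂ) = (A : ℂ) := by
    rw [← Complex.Gamma_eq_integral hres, ← hcast, Complex.Gamma_ofReal]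
  -- realness of Γ₁, Γ₂ at n
  have K1' := key n hn (fun t => Real.log t • g 1 t)
      (fun t => Real.exp (-(1 * t)) * Real.log t)
      (fun t ht => by simp only [g, Complex.real_smul]; push_cast; ring)
      (hD1 1 one_pos hres).1
  have hB' : Γ₁ (n:ℂ) = (B : ℂ) := by
    have h : Γ₁ (n:ℂ) = _ := K1'.2
    rw [hB, h, Complex.ofReal_re]
  have K2' := key n hn (fun t => Real.log t • Real.log t • g 1 t)
      (fun t => Real.exp (-(1 * t)) * (Real.log t)^2)
      (fun t ht => by simp only [g, Complex.real_smul]; push_cast; ring)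
      (hD2 1 one_pos hres).1
  have hC' : Γ₂ (n:ℂ) = (C : ℂ) := by
    have h : Γ₂ (n:ℂ) = _ := K2'.2
    rw [hC, h, Complex.ofReal_re]
  -- the μ-integrals
  have K0 := key n hn (g μ) (fun t => Real.exp (-(μ * t)))
      (fun t ht => rfl) (hconv0 μ hμ hres)
  have K1 := key n hn (fun t => Real.log t • g μ t)
      (fun t => Real.exp (-(μ * t)) * Real.log t)
      (fun t ht => by simp only [g, Complex.real_smul]; push_cast; ring)
      (hD1 μ hμ hres).1
  have K2 := key n hn (fun t => Real.log t • Real.log t • g μ t)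
      (fun t => Real.exp (-(μ * t)) * (Real.log t)^2)
      (fun t ht => by simp only [g, Complex.real_smul]; push_cast; ring)
      (hD2 μ hμ hres).1
  have hμpow : ((μ:ℂ)) ^ (-(n:ℂ)) = ((1 / μ ^ n : ℝ) : ℂ) := by
    rw [show (-(n:ℂ)) = (((-(n:ℝ)) : ℝ) : ℂ) by push_cast; ring,
      ← Complex.ofReal_cpow hμ.le, Real.rpow_neg hμ.le, Real.rpow_natCast]
    norm_num
  have hJ0 : ∫ t in Ioi (0:ℝ), t ^ (n-1) * Real.exp (-(μ*t)) = 1/μ^n * A := by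
    have h := K0.2
    rw [hG0 hμ] at h
    simp only at h
    rw [hGI, hμpow] at h
    exact_mod_cast h.symm
  have hJ1 : ∫ t in Ioi (0:ℝ), t ^ (n-1) * (Real.exp (-(μ*t)) * Real.log t)
      = 1/μ^n * (B - L * A) := by
    have h := (hG1val hμ hres).symm.trans K1.2
    rw [hGI, hB', hμpow, ← hL] at h
    push_cast at h
    exact_mod_cast h.symm
  have hJ2 : ∫ t in Ioi (0:ℝ), t ^ (n-1) * (Real.exp (-(μ*t)) * (Real.log t)^2)
      = 1/μ^n * (C - 2 * L * B + L^2 * A) := by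
    have h := (hG2val hμ hres).symm.trans K2.2
    rw [hGI, hB', hC', hμpow, ← hL] at h
    push_cast at h
    exact_mod_cast h.symm
  have hAfact : ((n-1).factorial : ℝ) = A := by
    have h1 : (n:ℝ) = ((n-1:ℕ):ℝ) + 1 := by
      push_cast [Nat.cast_sub hn]; ring
    rw [hA, h1, Real.Gamma_nat_eq_factorial]
  have hptw : ∀ x : ℝ, x ^ (n-1) * Real.exp (-μ * x) * ((Real.log x - ψn/2)^2 - ψ'n/2)
      = x^(n-1) * (Real.exp (-(μ*x)) * (Real.log x)^2)
        - ψn * (x^(n-1) * (Real.exp (-(μ*x)) * Real.log x))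
        + (ψn^2/4 - ψ'n/2) * (x^(n-1) * Real.exp (-(μ*x))) := fun x => by
    rw [neg_mul]; ring
  have hint : IntegrableOn (fun x : ℝ =>
      x^(n-1) * (Real.exp (-(μ*x)) * (Real.log x)^2)
        - ψn * (x^(n-1) * (Real.exp (-(μ*x)) * Real.log x))
        + (ψn^2/4 - ψ'n/2) * (x^(n-1) * Real.exp (-(μ*x)))) (Ioi 0) :=
    (K2.1.sub (K1.1.const_mul ψn)).add (K0.1.const_mul (ψn^2/4 - ψ'n/2))
  refine ⟨hint.congr_fun (fun x _ => (hptw x).symm) measurableSet_Ioi, ?_⟩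
  rw [setIntegral_congr_fun measurableSet_Ioi (fun x _ => hptw x)]
  have step1 : ∫ x in Ioi (0:ℝ),
      (x^(n-1) * (Real.exp (-(μ*x)) * (Real.log x)^2)
        - ψn * (x^(n-1) * (Real.exp (-(μ*x)) * Real.log x))
        + (ψn^2/4 - ψ'n/2) * (x^(n-1) * Real.exp (-(μ*x))))
      = ((∫ x in Ioi (0:ℝ), x^(n-1) * (Real.exp (-(μ*x)) * (Real.log x)^2))
        - ψn * ∫ x in Ioi (0:ℝ), x^(n-1) * (Real.exp (-(μ*x)) * Real.log x))
        + (ψn^2/4 - ψ'n/2) * ∫ x in Ioi (0:ℝ), x^(n-1) * Real.exp (-(μ*x)) := by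
    have e1 := integral_add (μ := volume.restrict (Ioi 0))
      (K2.1.sub (K1.1.const_mul ψn)) (K0.1.const_mul (ψn^2/4 - ψ'n/2))
    have e2 := integral_sub (μ := volume.restrict (Ioi 0)) K2.1 (K1.1.const_mul ψn)
    simp only [Pi.add_apply, Pi.sub_apply] at e1 e2
    rw [e1, e2, integral_const_mul, integral_const_mul]
  rw [step1, hJ0, hJ1, hJ2, hψnv, hψ'nv, hAfact]
  have hμn : (μ:ℝ)^n ≠ 0 := by positivity
  field_simp
  ring
end
end

section
/- For a real parameter s > 0, the integral ∫_{−∞}^{∞} t e^{t} exp(−s e^{t}) dt converges and equals −(γ + ln s)/s. -/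
open Real MeasureTheory

open Set Complex Filter in
theorem log_exp_neg_integral : (∫ x in Ioi (0:ℝ), Real.log x * Real.exp (-x)) = -Real.eulerMascheroniConstant ∧
    IntegrableOn (fun x : ℝ => Real.log x * Real.exp (-x)) (Ioi 0) := by
  have cont : Continuous (fun t : ℝ => Complex.exp (-t)) := by continuity
  have hfc : LocallyIntegrableOn (fun t : ℝ => Complex.exp (-t)) (Ioi 0) :=
    cont.locallyIntegrable.locallyIntegrableOn _
  have hnorm : ∀ t : ℝ, ‖Complex.exp (-t)‖ = Real.exp (-t) := by
    intro t
    rw [← Complex.ofReal_neg, Complex.norm_exp]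
    simp
  have hf_top : (fun t : ℝ => Complex.exp (-t)) =O[atTop] (fun t : ℝ => t ^ (-(2:ℝ))) := by
    have h := (isLittleO_exp_neg_mul_rpow_atTop (one_pos) (-(2:ℝ))).isBigO
    refine Asymptotics.IsBigO.trans ?_ h
    apply Asymptotics.IsBigO.of_bound 1
    filter_upwards with t
    rw [hnorm]
    simp [Real.norm_eq_abs, Real.abs_exp]
  have hf_bot : (fun t : ℝ => Complex.exp (-t)) =O[nhdsWithin 0 (Ioi 0)] (fun t : ℝ => t ^ (-(0:ℝ))) := by
    simp only [neg_zero, Real.rpow_zero]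
    apply Asymptotics.IsBigO.of_bound 1
    filter_upwards [self_mem_nhdsWithin] with t (ht : t ∈ Ioi 0)
    rw [hnorm]
    simp only [norm_one, mul_one]
    exact Real.exp_le_one_iff.mpr (by simpa using ht.le)
  obtain ⟨hconv, hderiv⟩ :=
    mellin_hasDerivAt_of_isBigO_rpow (s := 1) hfc hf_top (by norm_num) hf_bot (by norm_num)
  have heq : mellin (fun t : ℝ => Complex.exp (-t)) =ᶠ[nhds (1:ℂ)] Complex.Gamma := by
    have : {z : ℂ | 0 < z.re} ∈ nhds (1 : ℂ) := by
      apply (isOpen_lt continuous_const Complex.continuous_re).mem_nhds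
      norm_num
    filter_upwards [this] with z (hz : 0 < z.re)
    rw [Complex.Gamma_eq_integral hz, Complex.GammaIntegral, mellin]
    congr 1
    ext x
    rw [smul_eq_mul, mul_comm, ← Complex.ofReal_neg, Complex.ofReal_exp]
  have hd2 : HasDerivAt (mellin (fun t : ℝ => Complex.exp (-t)))
      (-Real.eulerMascheroniConstant) 1 :=
    Complex.hasDerivAt_Gamma_one.congr_of_eventuallyEq heq
  have hval : mellin (fun t : ℝ => Real.log t • Complex.exp (-t)) 1
      = (-Real.eulerMascheroniConstant : ℂ) := hderiv.unique hd2
  rw [mellin] at hval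
  simp only [sub_self, Complex.cpow_zero, one_smul] at hval
  rw [MellinConvergent, sub_self] at hconv
  simp only [Complex.cpow_zero, one_smul] at hconv
  have hfun : (fun x : ℝ => Real.log x • Complex.exp (-(x:ℝ) : ℂ))
      = fun x : ℝ => ((Real.log x * Real.exp (-x) : ℝ) : ℂ) := by
    funext x
    rw [Complex.real_smul, Complex.ofReal_mul, Complex.ofReal_exp]
    norm_cast
  rw [hfun] at hval hconv
  constructor
  · have h2 : ((∫ x in Ioi (0:ℝ), Real.log x * Real.exp (-x) : ℝ) : ℂ)
        = -(Real.eulerMascheroniConstant : ℂ) := by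
      rw [← hval]; exact integral_ofReal.symm
    exact_mod_cast h2
  · simpa [IntegrableOn, ← Complex.ofReal_neg, ← Complex.ofReal_exp] using hconv.re


open Set Complex Filter in
theorem stepB (s : ℝ) (hs : 0 < s) :
    IntegrableOn (fun x : ℝ => Real.log x * Real.exp (-(s * x))) (Ioi 0) ∧
    (∫ x in Ioi (0:ℝ), Real.log x * Real.exp (-(s * x)))
      = -(Real.eulerMascheroniConstant + Real.log s) / s := by
  obtain ⟨hA, hAint⟩ := log_exp_neg_integral
  set g : ℝ → ℝ := fun u => (Real.log u - Real.log s) * Real.exp (-u) with hg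
  have hexp_int : IntegrableOn (fun u : ℝ => Real.exp (-u)) (Ioi 0) := by
    simpa using exp_neg_integrableOn_Ioi 0 one_pos
  have hg_int : IntegrableOn g (Ioi 0) := by
    simp only [hg, sub_mul]
    exact hAint.sub (hexp_int.const_mul (Real.log s))
  have hcongr : ∀ x ∈ Ioi (0:ℝ), g (s * x) = Real.log x * Real.exp (-(s * x)) := by
    intro x hx
    simp only [hg, Real.log_mul hs.ne' (ne_of_gt hx)]
    ring
  constructor
  · refine (((integrableOn_Ioi_comp_mul_left_iff g 0 hs).mpr (by simpa using hg_int)).congr_fun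
      hcongr measurableSet_Ioi)
  · rw [← setIntegral_congr_fun measurableSet_Ioi hcongr,
      integral_comp_mul_left_Ioi g 0 hs, mul_zero]
    rw [show (∫ x in Ioi (0:ℝ), g x) = (∫ x in Ioi (0:ℝ), Real.log x * Real.exp (-x))
        - Real.log s * ∫ x in Ioi (0:ℝ), Real.exp (-x) by
      rw [← integral_const_mul, ← integral_sub hAint (hexp_int.const_mul _)]
      congr 1; funext u; simp [hg]; ring]
    rw [hA, integral_exp_neg_Ioi_zero, smul_eq_mul]
    field_simp
    ring


open Set in
theorem stmt_16 (s : ℝ) (hs : 0 < s) :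
    Integrable (fun t : ℝ => t * Real.exp t * Real.exp (-s * Real.exp t)) ∧
    ∫ t : ℝ, t * Real.exp t * Real.exp (-s * Real.exp t) =
      -(Real.eulerMascheroniConstant + Real.log s) / s := by
  obtain ⟨hBint, hBval⟩ := stepB s hs
  set G : ℝ → ℝ := fun x => Real.log x * Real.exp (-(s * x)) with hG
  have hderiv : ∀ x ∈ (univ : Set ℝ), HasDerivWithinAt Real.exp (Real.exp x) univ x :=
    fun x _ => (Real.hasDerivAt_exp x).hasDerivWithinAt
  have himg : Real.exp '' univ = Ioi 0 := by rw [image_univ, Real.range_exp]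
  have hfun : (fun x : ℝ => |Real.exp x| • G (Real.exp x))
      = fun t : ℝ => t * Real.exp t * Real.exp (-s * Real.exp t) := by
    funext t
    simp only [hG, abs_of_pos (Real.exp_pos t), smul_eq_mul, Real.log_exp, neg_mul]
    ring
  constructor
  · have := (integrableOn_image_iff_integrableOn_abs_deriv_smul MeasurableSet.univ hderiv
      (Real.exp_injective.injOn) G).mp (himg ▸ hBint)
    rw [hfun] at this
    exact integrableOn_univ.mp this
  · have := integral_image_eq_integral_abs_deriv_smul MeasurableSet.univ hderiv
      (Real.exp_injective.injOn) G
    rw [himg, hfun, MeasureTheory.setIntegral_univ] at this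
    rw [← this, hBval]
end

section
/- For a real parameter s > 0, the integral ∫_{−∞}^{∞} t e^{t} exp(−s e^{2t}) dt converges and equals −(√π · (γ + ln(4s))) / (4 √s). -/
open Real MeasureTheory Set Filter Asymptotics

/-- The complex Mellin-type integrand at `s = 1/2` is real. -/
lemma aux_eq (t : ℝ) (ht : 0 < t) :
    (t : ℂ) ^ ((1 / 2 : ℂ) - 1) * (Real.log t * Real.exp (-t)) =
      ((t ^ (-(1 / 2) : ℝ) * (Real.log t * Real.exp (-t)) : ℝ) : ℂ) := by
  rw [show ((1 / 2 : ℂ) - 1) = ((-(1 / 2) : ℝ) : ℂ) by norm_num,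
    ← Complex.ofReal_cpow ht.le]
  push_cast
  ring

lemma aux_integrable :
    IntegrableOn (fun t : ℝ => t ^ (-(1 / 2) : ℝ) * (Real.log t * Real.exp (-t))) (Ioi 0) := by
  have h := (mellin_hasDerivAt_of_isBigO_rpow (E := ℂ)
      (f := fun x : ℝ => (Real.exp (-x) : ℂ)) (s := (1 / 2 : ℂ)) (a := 2) (b := 0)
      ?_ ?_ (by norm_num) ?_ (by norm_num)).1
  · have h' : IntegrableOn
        (fun t : ℝ => (t : ℂ) ^ ((1 / 2 : ℂ) - 1) • (Real.log t • (Real.exp (-t) : ℂ)))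
        (Ioi 0) := h
    have h2 : IntegrableOn
        (fun t : ℝ => ((t : ℂ) ^ ((1 / 2 : ℂ) - 1) • (Real.log t • (Real.exp (-t) : ℂ))).re)
        (Ioi 0) := h'.re
    refine IntegrableOn.congr_fun h2 (fun t ht => ?_) measurableSet_Ioi
    have h3 := aux_eq t ht
    simp only [smul_eq_mul, Complex.real_smul] at h3 ⊢
    rw [show (t : ℂ) ^ ((1/2:ℂ) - 1) * ((Real.log t : ℂ) * (Real.exp (-t) : ℂ))
        = ((t ^ (-(1 / 2) : ℝ) * (Real.log t * Real.exp (-t)) : ℝ) : ℂ) from h3]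
    rw [Complex.ofReal_re]
  · refine (Continuous.continuousOn ?_).locallyIntegrableOn measurableSet_Ioi
    exact Complex.continuous_ofReal.comp (Real.continuous_exp.comp continuous_neg)
  · rw [← isBigO_norm_left]
    simp_rw [Complex.norm_real, isBigO_norm_left]
    simpa only [neg_one_mul] using (isLittleO_exp_neg_mul_rpow_atTop zero_lt_one _).isBigO
  · simp_rw [neg_zero, Real.rpow_zero]
    refine isBigO_const_of_tendsto (?_ : Tendsto _ _ (nhds (1 : ℂ))) one_ne_zero
    rw [(by simp : (1 : ℂ) = Real.exp (-0))]
    exact (Complex.continuous_ofReal.comp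
      (Real.continuous_exp.comp continuous_neg)).continuousWithinAt

lemma aux_value :
    ∫ t in Ioi (0 : ℝ), t ^ (-(1 / 2) : ℝ) * (Real.log t * Real.exp (-t)) =
      -Real.sqrt π * (Real.eulerMascheroniConstant + 2 * Real.log 2) := by
  set Dr : ℝ := ∫ t in Ioi (0 : ℝ), t ^ (-(1 / 2) : ℝ) * (Real.log t * Real.exp (-t)) with hDr
  have h1 : HasDerivAt Complex.GammaIntegral
      (∫ t : ℝ in Ioi 0, (t : ℂ) ^ ((1 / 2 : ℂ) - 1) * (Real.log t * Real.exp (-t)))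
      (1 / 2 : ℂ) := Complex.hasDerivAt_GammaIntegral (by norm_num)
  have hD : (∫ t : ℝ in Ioi 0, (t : ℂ) ^ ((1 / 2 : ℂ) - 1) * (Real.log t * Real.exp (-t)))
      = (Dr : ℂ) := by
    rw [hDr]
    exact (setIntegral_congr_fun measurableSet_Ioi fun t ht => aux_eq t ht).trans
      integral_ofReal
  rw [hD] at h1
  have hev : Complex.Gamma =ᶠ[nhds (1 / 2 : ℂ)] Complex.GammaIntegral := by
    filter_upwards [(isOpen_lt continuous_const Complex.continuous_re).mem_nhds
      (by norm_num : (0 : ℝ) < (1 / 2 : ℂ).re)] with z hz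
    exact Complex.Gamma_eq_integral hz
  have h2 : HasDerivAt Complex.Gamma (Dr : ℂ) (1 / 2 : ℂ) := h1.congr_of_eventuallyEq hev
  rw [show (1 / 2 : ℂ) = ((1 / 2 : ℝ) : ℂ) by norm_num] at h2
  have h3 : HasDerivAt (fun y : ℝ => Complex.Gamma (y : ℂ)) (Dr : ℂ) (1 / 2 : ℝ) :=
    h2.comp_ofReal
  have h4 : HasDerivAt (fun y : ℝ => ((Real.Gamma y : ℝ) : ℂ)) (Dr : ℂ) (1 / 2 : ℝ) := by
    refine h3.congr_of_eventuallyEq (Eventually.of_forall fun y => ?_)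
    exact (Complex.Gamma_ofReal y).symm
  have h5 : HasDerivAt (fun y : ℝ => ((Real.Gamma y : ℝ) : ℂ))
      ((-Real.sqrt π * (Real.eulerMascheroniConstant + 2 * Real.log 2) : ℝ) : ℂ)
      (1 / 2 : ℝ) := Real.hasDerivAt_Gamma_one_half.ofReal_comp
  exact_mod_cast h4.unique h5

theorem stmt_17 (s : ℝ) (hs : 0 < s) :
    Integrable (fun t : ℝ => t * Real.exp t * Real.exp (-s * Real.exp (2 * t))) ∧
    ∫ t : ℝ, t * Real.exp t * Real.exp (-s * Real.exp (2 * t)) =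
      -(Real.sqrt Real.pi * (Real.eulerMascheroniConstant + Real.log (4 * s))) /
        (4 * Real.sqrt s) := by
  set φ : ℝ → ℝ := fun t => s * Real.exp (2 * t) with hφ
  set g : ℝ → ℝ := fun x => Real.log (x / s) * Real.sqrt (x / s) * Real.exp (-x) / (4 * x)
    with hg
  have hss : (0 : ℝ) < Real.sqrt s := Real.sqrt_pos.mpr hs
  have hderiv : ∀ t : ℝ, HasDerivAt φ (2 * s * Real.exp (2 * t)) t := by
    intro t
    have h1 : HasDerivAt (fun t : ℝ => Real.exp (2 * t)) (Real.exp (2 * t) * 2) t := by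
      simpa using ((hasDerivAt_id t).const_mul 2).exp
    have := h1.const_mul s
    rw [show 2 * s * Real.exp (2 * t) = s * (Real.exp (2 * t) * 2) by ring]
    exact this
  have hmono : StrictMono φ := fun a b hab => by
    exact mul_lt_mul_of_pos_left (Real.exp_lt_exp.mpr (by linarith)) hs
  have hinj : InjOn φ univ := hmono.injective.injOn
  have himg : φ '' univ = Ioi 0 := by
    rw [image_univ]
    ext x
    constructor
    · rintro ⟨t, rfl⟩
      exact mul_pos hs (Real.exp_pos _)
    · intro hx
      refine ⟨Real.log (x / s) / 2, ?_⟩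
      have hxs : 0 < x / s := div_pos hx hs
      simp only [hφ]
      rw [show 2 * (Real.log (x / s) / 2) = Real.log (x / s) by ring, Real.exp_log hxs]
      field_simp
  have hpt : ∀ t : ℝ, |2 * s * Real.exp (2 * t)| • g (φ t)
      = t * Real.exp t * Real.exp (-s * Real.exp (2 * t)) := by
    intro t
    have he : (0 : ℝ) < Real.exp (2 * t) := Real.exp_pos _
    have h1 : φ t / s = Real.exp (2 * t) := by field_simp [hφ]; rfl
    have h2 : Real.sqrt (Real.exp (2 * t)) = Real.exp t := by
      rw [show (2 : ℝ) * t = t + t by ring, Real.exp_add,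
        Real.sqrt_mul_self (Real.exp_pos t).le]
    have h3 : Real.log (Real.exp (2 * t)) = 2 * t := Real.log_exp _
    rw [smul_eq_mul, abs_of_pos (by positivity), hg]
    simp only [hφ, h1, h2, h3]
    rw [show -(s * Real.exp (2 * t)) = -s * Real.exp (2 * t) by ring]
    field_simp
    rw [h3, h2]
    ring
  have hEq : EqOn g (fun x => (1 / (4 * Real.sqrt s)) *
      (x ^ (-(1 / 2) : ℝ) * (Real.log x * Real.exp (-x))) -
      (Real.log s / (4 * Real.sqrt s)) * (Real.exp (-x) * x ^ ((1 / 2 : ℝ) - 1))) (Ioi 0) := by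
    intro x hx
    have hx : (0 : ℝ) < x := hx
    have hsx : (0 : ℝ) < Real.sqrt x := Real.sqrt_pos.mpr hx
    have hx2 : Real.sqrt x * Real.sqrt x = x := Real.mul_self_sqrt hx.le
    have hpow : x ^ (-(1 / 2) : ℝ) = (Real.sqrt x)⁻¹ := by
      rw [Real.rpow_neg hx.le, ← Real.sqrt_eq_rpow]
    have hpow2 : x ^ ((1 / 2 : ℝ) - 1) = (Real.sqrt x)⁻¹ := by
      rw [show (1 / 2 : ℝ) - 1 = -(1 / 2) by norm_num, Real.rpow_neg hx.le,
        ← Real.sqrt_eq_rpow]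
    simp only [hg, hpow, hpow2, Real.log_div hx.ne' hs.ne', Real.sqrt_div hx.le]
    field_simp
    linear_combination (Real.log x - Real.log s) * hx2
  have hInt : IntegrableOn g (Ioi 0) := by
    refine IntegrableOn.congr_fun (Integrable.sub ?_ ?_) (fun x hx => (hEq hx).symm)
      measurableSet_Ioi
    · exact (aux_integrable.const_mul _)
    · exact ((Real.GammaIntegral_convergent one_half_pos).const_mul _)
  have hiff := integrableOn_image_iff_integrableOn_abs_deriv_smul (f := φ)
    (f' := fun t => 2 * s * Real.exp (2 * t)) MeasurableSet.univ
    (fun t _ => (hderiv t).hasDerivWithinAt) hinj g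
  rw [himg] at hiff
  have hIntF : Integrable (fun t : ℝ => t * Real.exp t * Real.exp (-s * Real.exp (2 * t))) := by
    have := hiff.mp hInt
    rw [integrableOn_univ] at this
    exact this.congr (Eventually.of_forall hpt)
  refine ⟨hIntF, ?_⟩
  have hcv := integral_image_eq_integral_abs_deriv_smul (f := φ)
    (f' := fun t => 2 * s * Real.exp (2 * t)) MeasurableSet.univ
    (fun t _ => (hderiv t).hasDerivWithinAt) hinj g
  rw [himg] at hcv
  have hI1 := aux_value
  have hI2 : ∫ x in Ioi (0 : ℝ), Real.exp (-x) * x ^ ((1 / 2 : ℝ) - 1) = Real.sqrt π := by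
    rw [← Real.Gamma_eq_integral one_half_pos, Real.Gamma_one_half_eq]
  have hgval : ∫ x in Ioi (0 : ℝ), g x =
      (1 / (4 * Real.sqrt s)) * (-Real.sqrt π * (Real.eulerMascheroniConstant + 2 * Real.log 2))
        - (Real.log s / (4 * Real.sqrt s)) * Real.sqrt π := by
    rw [setIntegral_congr_fun measurableSet_Ioi hEq]
    rw [integral_sub ((aux_integrable.const_mul _))
      ((Real.GammaIntegral_convergent one_half_pos).const_mul _),
      integral_const_mul, integral_const_mul, hI1, hI2]
  have : ∫ t : ℝ, t * Real.exp t * Real.exp (-s * Real.exp (2 * t))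
      = ∫ x in Ioi (0 : ℝ), g x := by
    rw [hcv, ← setIntegral_univ]
    exact setIntegral_congr_fun MeasurableSet.univ fun t _ => (hpt t).symm
  rw [this, hgval]
  have hlog : Real.log (4 * s) = 2 * Real.log 2 + Real.log s := by
    rw [Real.log_mul (by norm_num) hs.ne', show (4 : ℝ) = 2 ^ 2 by norm_num, Real.log_pow]
    push_cast; ring
  rw [hlog]
  field_simp
  ring
end

section
/- For real parameters a > 0, β > 0 and μ > 0, the integral ∫₀^a x^{−μ−1} (a − x)^{μ−1} e^{−β/x} dx converges and equals β^{−μ} · a^{μ−1} · Γ(μ) · exp(−β/a). -/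
open Real MeasureTheory Set

theorem stmt_18 (a β μ : ℝ) (ha : 0 < a) (hβ : 0 < β) (hμ : 0 < μ) :
    IntegrableOn
      (fun x : ℝ => x ^ (-μ - 1) * (a - x) ^ (μ - 1) * Real.exp (-β / x)) (Ioo 0 a) ∧
    ∫ x in Ioo (0 : ℝ) a, x ^ (-μ - 1) * (a - x) ^ (μ - 1) * Real.exp (-β / x) =
      β ^ (-μ) * a ^ (μ - 1) * Real.Gamma μ * Real.exp (-β / a) := by
  set F : ℝ → ℝ := fun x : ℝ => x ^ (-μ - 1) * (a - x) ^ (μ - 1) * Real.exp (-β / x) with hF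
  set f : ℝ → ℝ := fun u => (u + a⁻¹)⁻¹ with hf
  set f' : ℝ → ℝ := fun u => -((u + a⁻¹) ^ 2)⁻¹ with hf'
  have ha' : (0:ℝ) < a⁻¹ := by positivity
  have hpos : ∀ u ∈ Ioi (0:ℝ), 0 < u + a⁻¹ := fun u hu => by
    have := mem_Ioi.mp hu; positivity
  -- derivative
  have hderiv : ∀ u ∈ Ioi (0:ℝ), HasDerivWithinAt f (f' u) (Ioi 0) u := by
    intro u hu
    have h1 : HasDerivAt (fun u : ℝ => u + a⁻¹) 1 u := by
      simpa using (hasDerivAt_id u).add_const a⁻¹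
    have h2 := (h1.inv (ne_of_gt (hpos u hu))).hasDerivWithinAt (s := Ioi 0)
    refine h2.congr_deriv ?_
    rw [hf']
    field_simp
  -- injectivity
  have hinj : InjOn f (Ioi 0) := by
    intro u hu v hv huv
    have h1 := hpos u hu
    have h2 := hpos v hv
    have : u + a⁻¹ = v + a⁻¹ := inv_injective huv
    linarith
  -- image
  have himg : f '' Ioi 0 = Ioo 0 a := by
    ext x
    constructor
    · rintro ⟨u, hu, rfl⟩
      have hu' : (0:ℝ) < u := mem_Ioi.mp hu
      have h1 : (0:ℝ) < u + a⁻¹ := by positivity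
      constructor
      · simp [hf]; positivity
      · show (u + a⁻¹)⁻¹ < a
        rw [inv_lt_comm₀ h1 ha]
        linarith
    · rintro ⟨hx0, hxa⟩
      refine ⟨x⁻¹ - a⁻¹, ?_, ?_⟩
      · simp only [mem_Ioi, sub_pos]
        exact inv_strictAnti₀ hx0 hxa
      · simp [hf, hx0.ne']
  -- the transformed integrand
  have key : ∀ u ∈ Ioi (0:ℝ),
      |f' u| • F (f u) = (a ^ (μ - 1) * Real.exp (-β / a)) * (u ^ (μ - 1) * Real.exp (-(β * u))) := by
    intro u hu
    have hu' : (0:ℝ) < u := mem_Ioi.mp hu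
    have h1 : (0:ℝ) < u + a⁻¹ := by positivity
    have habs : |f' u| = ((u + a⁻¹) ^ 2)⁻¹ := by
      rw [hf']; rw [abs_neg, abs_inv, abs_of_pos (by positivity)]
    have hfu : f u = (u + a⁻¹)⁻¹ := rfl
    have hsub : a - f u = a * u * (u + a⁻¹)⁻¹ := by
      rw [hfu]; field_simp; ring
    have hexp : -β / f u = -(β * u) + (-β / a) := by
      rw [hfu]; field_simp; ring
    have ht : (0:ℝ) < u + a⁻¹ := h1
    have e1 : ((u + a⁻¹) ^ 2)⁻¹ = (u + a⁻¹) ^ (-2 : ℝ) := by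
      rw [← Real.rpow_natCast (u + a⁻¹) 2, ← Real.rpow_neg ht.le]
      norm_num
    have e2 : ((u + a⁻¹)⁻¹) ^ (-μ - 1) = (u + a⁻¹) ^ (μ + 1) := by
      rw [Real.inv_rpow ht.le, ← Real.rpow_neg ht.le]
      congr 1; ring
    have e3 : (a * u * (u + a⁻¹)⁻¹) ^ (μ - 1)
        = a ^ (μ - 1) * u ^ (μ - 1) * (u + a⁻¹) ^ (-(μ - 1)) := by
      rw [Real.mul_rpow (by positivity) (by positivity),
        Real.mul_rpow ha.le hu'.le, Real.inv_rpow ht.le, ← Real.rpow_neg ht.le]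
    have hc : (u + a⁻¹) ^ (-2:ℝ) * ((u + a⁻¹) ^ (μ + 1) * (u + a⁻¹) ^ (-(μ - 1))) = 1 := by
      rw [← Real.rpow_add ht, ← Real.rpow_add ht,
        show (μ + 1) + -(μ - 1) = 2 by ring, show (-2:ℝ) + 2 = 0 by ring, Real.rpow_zero]
    rw [smul_eq_mul, habs, hF]
    simp only
    rw [hfu, hsub, hexp, Real.exp_add, e1, e2, e3]
    linear_combination (a ^ (μ - 1) * u ^ (μ - 1) *
      (Real.exp (-(β * u)) * Real.exp (-β / a))) * hc
  -- integrability of the model function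
  have hmodel : IntegrableOn (fun u : ℝ => u ^ (μ - 1) * Real.exp (-(β * u))) (Ioi 0) := by
    have := integrableOn_rpow_mul_exp_neg_mul_rpow (p := 1) (s := μ - 1) (b := β)
      (by linarith) zero_lt_one hβ
    refine this.congr_fun (fun u hu => ?_) measurableSet_Ioi
    simp only [Real.rpow_one]; ring_nf
  have hmodelInt : ∫ u in Ioi (0:ℝ), u ^ (μ - 1) * Real.exp (-(β * u)) = (1/β) ^ μ * Real.Gamma μ :=
    Real.integral_rpow_mul_exp_neg_mul_Ioi hμ hβ
  -- put it together
  have hib := integrableOn_image_iff_integrableOn_abs_deriv_smul measurableSet_Ioi hderiv hinj F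
  have hie := integral_image_eq_integral_abs_deriv_smul measurableSet_Ioi hderiv hinj F
  rw [himg] at hib hie
  constructor
  · rw [hib]
    exact IntegrableOn.congr_fun (hmodel.const_mul (a ^ (μ - 1) * Real.exp (-β / a)))
      (fun u hu => (key u hu).symm) measurableSet_Ioi
  · rw [hie, setIntegral_congr_fun measurableSet_Ioi key, integral_const_mul, hmodelInt]
    rw [one_div, Real.inv_rpow hβ.le, ← Real.rpow_neg hβ.le]
    ring
end

section
/- For a real parameter b > 0 and a natural number n ≥ 1, the integral ∫_{−∞}^{∞} exp( −(x − b/x)^{2n} ) dx converges and equals (1/n) · Γ(1/(2n)). -/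
open Real MeasureTheory Set

lemma aux_deriv1 (b x : ℝ) (hx : x ≠ 0) :
    HasDerivAt (fun x : ℝ => x - b / x) (1 + b / x ^ 2) x := by
  simp only [div_eq_mul_inv]
  have h2 : HasDerivAt (fun x : ℝ => x - b * x⁻¹) (1 - b * -(x ^ 2)⁻¹) x :=
    (hasDerivAt_id x).sub ((hasDerivAt_inv hx).const_mul b)
  convert h2 using 1
  field_simp
  ring

lemma aux_deriv2 (b x : ℝ) (hx : x ≠ 0) :
    HasDerivAt (fun x : ℝ => -b / x) (b / x ^ 2) x := by
  simp only [div_eq_mul_inv]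
  have h2 : HasDerivAt (fun x : ℝ => -b * x⁻¹) (-b * -(x ^ 2)⁻¹) x :=
    (hasDerivAt_inv hx).const_mul (-b)
  convert h2 using 1
  field_simp

lemma aux_inj (b : ℝ) (hb : 0 < b) : InjOn (fun x : ℝ => x - b / x) (Ioi 0) := by
  intro x hx y hy h
  simp only [mem_Ioi] at hx hy
  simp only at h
  have hx' := hx.ne'
  have hy' := hy.ne'
  field_simp at h
  nlinarith [mul_pos hx hy]

lemma aux_img1 (b : ℝ) (hb : 0 < b) : (fun x : ℝ => x - b / x) '' (Ioi 0) = univ := by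
  apply eq_univ_of_forall
  intro u
  have h1 : |u| < Real.sqrt (u ^ 2 + 4 * b) := by
    rw [show |u| = Real.sqrt (u^2) by rw [Real.sqrt_sq_eq_abs]]
    exact Real.sqrt_lt_sqrt (sq_nonneg u) (by linarith)
  have hs : Real.sqrt (u ^ 2 + 4 * b) ^ 2 = u ^ 2 + 4 * b :=
    Real.sq_sqrt (by positivity)
  have hpos : 0 < (u + Real.sqrt (u ^ 2 + 4 * b)) / 2 := by
    have := neg_abs_le u; nlinarith [abs_nonneg u]
  refine ⟨(u + Real.sqrt (u ^ 2 + 4 * b)) / 2, by simpa using hpos, ?_⟩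
  have hne : u + Real.sqrt (u ^ 2 + 4 * b) ≠ 0 := by
    have := neg_abs_le u; nlinarith [abs_nonneg u]
  simp only
  field_simp
  nlinarith [hs]

lemma aux_img2 (b : ℝ) (hb : 0 < b) : (fun x : ℝ => -b / x) '' (Ioi 0) = Iio 0 := by
  ext y
  constructor
  · rintro ⟨x, hx, rfl⟩
    simp only [mem_Ioi] at hx
    simp only [mem_Iio]
    exact div_neg_of_neg_of_pos (by linarith) hx
  · intro hy
    simp only [mem_Iio] at hy
    refine ⟨-b / y, ?_, ?_⟩
    · simp only [mem_Ioi]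
      exact div_pos_of_neg_of_neg (by linarith) hy
    · simp only
      field_simp
open Real MeasureTheory Set

lemma aux_gamma (n : ℕ) (hn : 1 ≤ n) :
    Integrable (fun x : ℝ => Real.exp (-x ^ (2 * n))) ∧
    ∫ x : ℝ, Real.exp (-x ^ (2 * n)) = (1 / n) * Real.Gamma (1 / (2 * n)) := by
  have hp1 : (1:ℝ) ≤ 2 * n := by
    have : (1:ℝ) ≤ (n:ℝ) := by exact_mod_cast hn
    linarith
  have hp0 : (0:ℝ) < 2 * n := by linarith
  have hpow : ∀ x : ℝ, 0 < x → x ^ (2 * n) = x ^ ((2 * n : ℕ) : ℝ) := fun x hx =>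
    (Real.rpow_natCast x (2 * n)).symm
  have heq : ∀ x : ℝ, x ∈ Ioi (0:ℝ) →
      Real.exp (-x ^ (2 * n)) = Real.exp (-x ^ ((2 * (n:ℝ)))) := by
    intro x hx
    rw [hpow x hx]
    norm_num
  have hIoi : IntegrableOn (fun x : ℝ => Real.exp (-x ^ (2 * n))) (Ioi 0) := by
    have h := integrableOn_rpow_mul_exp_neg_rpow (p := 2 * n) (s := 0) (by norm_num) hp0
    simp only [Real.rpow_zero, one_mul] at h
    exact (integrableOn_congr_fun heq measurableSet_Ioi).mpr h
  have hint : Integrable (fun x : ℝ => Real.exp (-x ^ (2 * n))) := by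
    rw [← integrableOn_univ]
    have hae : (univ : Set ℝ) =ᵐ[volume] (Iio 0 ∪ Ioi 0 : Set ℝ) := by
      rw [Set.Iio_union_Ioi]
      exact (ae_eq_univ.mpr (by simp : volume (({0}ᶜ : Set ℝ)ᶜ) = 0)).symm
    apply IntegrableOn.congr_set_ae _ hae
    apply IntegrableOn.union _ hIoi
    rw [← Measure.map_neg_eq_self (volume : Measure ℝ)]
    have m : MeasurableEmbedding (fun x : ℝ => -x) := (Homeomorph.neg ℝ).measurableEmbedding
    rw [m.integrableOn_map_iff]
    simp only [Function.comp_def, neg_preimage, neg_Iio, neg_zero]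
    have : ∀ x : ℝ, (-x) ^ (2 * n) = x ^ (2 * n) := fun x => (even_two_mul n).neg_pow x
    simp only [this]
    exact hIoi
  refine ⟨hint, ?_⟩
  have habs : (fun x : ℝ => Real.exp (-x ^ (2 * n))) =
      fun x : ℝ => Real.exp (-|x| ^ (2 * n)) := by
    funext x
    rw [(even_two_mul n).pow_abs]
  rw [habs]
  rw [integral_comp_abs (f := fun x : ℝ => Real.exp (-x ^ (2 * n)))]
  rw [setIntegral_congr_fun measurableSet_Ioi heq]
  rw [integral_exp_neg_rpow hp0]
  have hne : (1:ℝ) / (2 * n) ≠ 0 := by positivity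
  rw [show (1:ℝ) / (2 * (n:ℝ)) + 1 = 1 / (2 * n) + 1 by norm_num,
    Real.Gamma_add_one hne]
  have hn0 : (n:ℝ) ≠ 0 := by positivity
  field_simp

theorem stmt_19 (b : ℝ) (hb : 0 < b) (n : ℕ) (hn : 1 ≤ n) :
    Integrable (fun x : ℝ => Real.exp (-(x - b / x) ^ (2 * n))) ∧
    ∫ x : ℝ, Real.exp (-(x - b / x) ^ (2 * n)) =
      (1 / n) * Real.Gamma (1 / (2 * n)) := by
  obtain ⟨hint_f, hval_f⟩ := aux_gamma n hn
  set f : ℝ → ℝ := fun t => Real.exp (-t ^ (2 * n)) with hf_def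
  set F : ℝ → ℝ := fun x => Real.exp (-(x - b / x) ^ (2 * n)) with hF_def
  have hd1 : ∀ x ∈ Ioi (0:ℝ),
      HasDerivWithinAt (fun x : ℝ => x - b / x) (1 + b / x ^ 2) (Ioi 0) x :=
    fun x hx => (aux_deriv1 b x (ne_of_gt hx)).hasDerivWithinAt
  have hd2 : ∀ x ∈ Ioi (0:ℝ),
      HasDerivWithinAt (fun x : ℝ => -b / x) (b / x ^ 2) (Ioi 0) x :=
    fun x hx => (aux_deriv2 b x (ne_of_gt hx)).hasDerivWithinAt
  have hinj2 : InjOn (fun x : ℝ => -b / x) (Ioi 0) := by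
    intro x hx y hy h
    simp only [mem_Ioi] at hx hy
    simp only at h
    field_simp at h
    linarith
  -- key pointwise identities on Ioi 0
  have hkey2 : ∀ x : ℝ, x ∈ Ioi (0:ℝ) → F (-b / x) = F x := by
    intro x hx
    simp only [mem_Ioi] at hx
    have h2 : b / (-b / x) = -x := by
      field_simp
    have h3 : -b / x - b / (-b / x) = x - b / x := by
      rw [h2]; ring
    simp only [hF_def, h3]
  -- change of variables 1 : ∫ f over ℝ
  have hCV1 : ∫ x : ℝ, f x = ∫ x in Ioi (0:ℝ), |1 + b / x ^ 2| • f (x - b / x) := by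
    have h := integral_image_eq_integral_abs_deriv_smul measurableSet_Ioi hd1
      (aux_inj b hb) f
    rw [aux_img1 b hb, Measure.restrict_univ] at h
    exact h
  have hIup : IntegrableOn (fun x : ℝ => |1 + b / x ^ 2| • f (x - b / x)) (Ioi 0) := by
    refine (integrableOn_image_iff_integrableOn_abs_deriv_smul measurableSet_Ioi hd1
      (aux_inj b hb) f).mp ?_
    rw [aux_img1 b hb]
    exact integrableOn_univ.mpr hint_f
  have hFg1 : ∀ x : ℝ, f (x - b / x) = F x := fun x => rfl
  have hFmeas : Measurable F := by
    apply Measurable.exp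
    apply Measurable.neg
    exact ((measurable_id.sub (measurable_const.div measurable_id)).pow_const _)
  have hdom : ∀ x : ℝ, x ∈ Ioi (0:ℝ) →
      (b / x ^ 2) * F x + F x = |1 + b / x ^ 2| • f (x - b / x) := by
    intro x hx
    simp only [mem_Ioi] at hx
    rw [hFg1, smul_eq_mul, abs_of_pos (by positivity)]
    ring
  have hFpos : ∀ x : ℝ, 0 < F x := fun x => Real.exp_pos _
  -- integrability of F on Ioi 0
  have hFIoi : IntegrableOn F (Ioi 0) := by
    refine hIup.mono' (hFmeas.aestronglyMeasurable.restrict) ?_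
    refine (ae_restrict_iff' measurableSet_Ioi).mpr (Filter.Eventually.of_forall ?_)
    intro x hx
    rw [Real.norm_eq_abs, abs_of_pos (hFpos x), ← hdom x hx]
    have h1 : 0 < b / x ^ 2 := by
      simp only [mem_Ioi] at hx; positivity
    nlinarith [hFpos x]
  -- integrability of (b/x^2) * F on Ioi 0
  have hBIoi : IntegrableOn (fun x : ℝ => (b / x ^ 2) * F x) (Ioi 0) := by
    refine hIup.mono' ?_ ?_
    · exact ((measurable_const.div (measurable_id.pow_const 2)).mul hFmeas).aestronglyMeasurable.restrict
    refine (ae_restrict_iff' measurableSet_Ioi).mpr (Filter.Eventually.of_forall ?_)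
    intro x hx
    have h1 : 0 < b / x ^ 2 := by
      simp only [mem_Ioi] at hx; positivity
    rw [Real.norm_eq_abs, abs_of_pos (by positivity : (0:ℝ) < (b / x ^ 2) * F x),
      ← hdom x hx]
    nlinarith [hFpos x]
  -- integrability of F on Iio 0 via x ↦ -b/x
  have hFIio : IntegrableOn F (Iio 0) := by
    rw [← aux_img2 b hb]
    refine (integrableOn_image_iff_integrableOn_abs_deriv_smul measurableSet_Ioi hd2
      hinj2 F).mpr ?_
    refine (integrableOn_congr_fun ?_ measurableSet_Ioi).mpr hBIoi
    intro x hx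
    have hx' : (0:ℝ) < x := hx
    simp only [smul_eq_mul]
    rw [abs_of_pos (by positivity : (0:ℝ) < b / x ^ 2), hkey2 x hx]
  have hae : (univ : Set ℝ) =ᵐ[volume] (Iio 0 ∪ Ioi 0 : Set ℝ) := by
    rw [Set.Iio_union_Ioi]
    exact (ae_eq_univ.mpr (by simp : volume (({0}ᶜ : Set ℝ)ᶜ) = 0)).symm
  have hFint : Integrable F := by
    rw [← integrableOn_univ]
    exact (hFIio.union hFIoi).congr_set_ae hae
  refine ⟨hFint, ?_⟩
  -- value computation
  have hIio_eq : ∫ x in Iio (0:ℝ), F x = ∫ x in Ioi (0:ℝ), (b / x ^ 2) * F x := by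
    rw [← aux_img2 b hb,
      integral_image_eq_integral_abs_deriv_smul measurableSet_Ioi hd2 hinj2 F]
    refine setIntegral_congr_fun measurableSet_Ioi ?_
    intro x hx
    have hx' : (0:ℝ) < x := hx
    simp only [smul_eq_mul]
    rw [abs_of_pos (by positivity : (0:ℝ) < b / x ^ 2), hkey2 x hx]
  calc ∫ x : ℝ, F x = ∫ x in (Iio 0 ∪ Ioi 0 : Set ℝ), F x := by
        rw [← setIntegral_univ]
        exact setIntegral_congr_set hae
    _ = (∫ x in Iio (0:ℝ), F x) + ∫ x in Ioi (0:ℝ), F x :=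
        setIntegral_union (Set.disjoint_left.mpr fun a ha hb => absurd (lt_trans (mem_Iio.mp ha) (mem_Ioi.mp hb)) (lt_irrefl a)) measurableSet_Ioi hFIio hFIoi
    _ = ∫ x in Ioi (0:ℝ), ((b / x ^ 2) * F x + F x) := by
        rw [hIio_eq, ← integral_add hBIoi hFIoi]
    _ = ∫ x in Ioi (0:ℝ), |1 + b / x ^ 2| • f (x - b / x) :=
        setIntegral_congr_fun measurableSet_Ioi hdom
    _ = ∫ x : ℝ, f x := hCV1.symm
    _ = (1 / n) * Real.Gamma (1 / (2 * n)) := hval_f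
end
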